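/- arXiv:1706.01530 — 9 statements merged into one kernel-verified Lean document; each statement's English description precedes it below -/
import Mathlib

section
/- Fix 0 < ε < 1. Let K : ℝ² × ℝ² → ℂ be a measurable kernel satisfying the pointwise bound |K(x,y)| ≤ C₀ · (⟨x⟩^{1−ε} · ⟨|x|−|y|⟩ · ⟨|x|+|y|⟩)^{-1} for all x, y ∈ ℝ², for some constant C₀ > 0. Then for every p with 1 ≤ p < ∞, the integral operator (Ku)(x) = ∫_{ℝ²} K(x,y) u(y) dy is bounded on L^p(ℝ²): there is a constant C (depending on C₀, ε and p) such that for every u ∈ L^p(ℝ²), the integral defining Ku converges absolutely for almost every x and ‖Ku‖_{L^p(ℝ²)} ≤ C ‖u‖_{L^p(ℝ²)}. -/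
/-!
Schur's test with the weight `⟨x⟩^(-a)`, `a > 0` small. In polar coordinates the Jacobian `r` is
absorbed by `⟨|x| + |y|⟩⁻¹`, so both Schur integrals reduce to the one-dimensional convolution
`∫ ⟨t⟩^(-σ) ⟨t - r⟩⁻¹ dt`, which Peetre's inequality bounds by `O(⟨r⟩^(-σ/4))` for `0 < σ ≤ 1`.
This decay, together with the factor `⟨x⟩^(-(1 - ε))`, beats the weight in both directions;
for `p = 1` the column bound alone suffices, by Tonelli.
-/

open MeasureTheory Set Metric Function
open scoped ENNReal

noncomputable section

theorem ENNReal.rpow_le_rpow_of_nonpos {x y : ℝ≥0∞} (hxy : x ≤ y) {z : ℝ} (hz : z ≤ 0) :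
    y ^ z ≤ x ^ z := by
  rw [← neg_neg z, ENNReal.rpow_neg y, ENNReal.rpow_neg x]
  exact ENNReal.inv_le_inv.2 (ENNReal.rpow_le_rpow hxy (neg_nonneg.2 hz))

theorem ENNReal.rpow_neg_mul_rpow_neg_le_add {x y : ℝ≥0∞} (hx0 : x ≠ 0) (hxt : x ≠ ⊤)
    (hy0 : y ≠ 0) (hyt : y ≠ ⊤) {a b : ℝ} (ha : 0 ≤ a) (hb : 0 ≤ b) :
    x ^ (-a) * y ^ (-b) ≤ x ^ (-(a + b)) + y ^ (-(a + b)) := by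
  rcases le_total x y with h | h
  · calc x ^ (-a) * y ^ (-b) ≤ x ^ (-a) * x ^ (-b) := by
          gcongr x ^ (-a) * ?_; exact ENNReal.rpow_le_rpow_of_nonpos h (by linarith)
      _ = x ^ (-(a + b)) := by rw [← ENNReal.rpow_add _ _ hx0 hxt, neg_add]
      _ ≤ _ := le_self_add
  · calc x ^ (-a) * y ^ (-b) ≤ y ^ (-a) * y ^ (-b) := by
          gcongr ?_ * y ^ (-b); exact ENNReal.rpow_le_rpow_of_nonpos h (by linarith)
      _ = y ^ (-(a + b)) := by rw [← ENNReal.rpow_add _ _ hy0 hyt, neg_add]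
      _ ≤ _ := le_add_self

section IntegralOperator

variable {α β : Type*} [MeasurableSpace α] [MeasurableSpace β] {μ : Measure α} {ν : Measure β}

theorem lintegral_mul_rpow_le_of_weight {p q : ℝ} (hpq : p.HolderConjugate q)
    {f g v : β → ℝ≥0∞} (hf : Measurable f) (hg : Measurable g) (hv : Measurable v)
    (hv0 : ∀ y, v y ≠ 0) (hvt : ∀ y, v y ≠ ⊤) :
    (∫⁻ y, f y * g y ∂ν) ^ p ≤
      (∫⁻ y, f y * v y ^ q ∂ν) ^ (p / q) * ∫⁻ y, f y * (g y / v y) ^ p ∂ν := by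
  have hp := hpq.pos
  have hq := hpq.symm.pos
  have hsplit : ∀ y, f y * g y = (f y ^ q⁻¹ * v y) * (f y ^ p⁻¹ * (g y / v y)) := fun y => by
    rw [mul_mul_mul_comm, ← ENNReal.rpow_add_of_nonneg _ _ (by positivity) (by positivity),
      add_comm, hpq.inv_add_inv_eq_one, ENNReal.rpow_one, ENNReal.mul_div_cancel (hv0 y) (hvt y)]
  have hpow : ∀ {r : ℝ} (a b : ℝ≥0∞), 0 < r → (a ^ r⁻¹ * b) ^ r = a * b ^ r := fun a b hr => by
    rw [ENNReal.mul_rpow_of_nonneg _ _ hr.le, ← ENNReal.rpow_mul, inv_mul_cancel₀ hr.ne',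
      ENNReal.rpow_one]
  calc (∫⁻ y, f y * g y ∂ν) ^ p
      ≤ ((∫⁻ y, (f y ^ q⁻¹ * v y) ^ q ∂ν) ^ (1 / q) *
          (∫⁻ y, (f y ^ p⁻¹ * (g y / v y)) ^ p ∂ν) ^ (1 / p)) ^ p := by
        simp_rw [hsplit]
        gcongr
        exact ENNReal.lintegral_mul_le_Lp_mul_Lq ν hpq.symm (by fun_prop) (by fun_prop)
    _ = (∫⁻ y, f y * v y ^ q ∂ν) ^ (p / q) * ∫⁻ y, f y * (g y / v y) ^ p ∂ν := by
        simp_rw [hpow _ _ hp, hpow _ _ hq]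
        rw [ENNReal.mul_rpow_of_nonneg _ _ hp.le, ← ENNReal.rpow_mul, ← ENNReal.rpow_mul,
          one_div_mul_eq_div, one_div_mul_cancel hp.ne', ENNReal.rpow_one]

theorem lintegral_rpow_lintegral_mul_le_of_schur [SFinite μ] [SFinite ν] {p q : ℝ}
    (hpq : p.HolderConjugate q) {k : α → β → ℝ≥0∞} (hk : Measurable (uncurry k))
    {w : α → ℝ≥0∞} {v : β → ℝ≥0∞} (hw : Measurable w) (hv : Measurable v)
    (hv0 : ∀ y, v y ≠ 0) (hvt : ∀ y, v y ≠ ⊤) {A B : ℝ≥0∞}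
    (hA : ∀ x, ∫⁻ y, k x y * v y ^ q ∂ν ≤ A * w x ^ q)
    (hB : ∀ y, ∫⁻ x, k x y * w x ^ p ∂μ ≤ B * v y ^ p) {g : β → ℝ≥0∞} (hg : Measurable g) :
    ∫⁻ x, (∫⁻ y, k x y * g y ∂ν) ^ p ∂μ ≤ A ^ (p / q) * B * ∫⁻ y, g y ^ p ∂ν := by
  have hp := hpq.pos
  have hq := hpq.symm.pos
  have hG : Measurable (uncurry fun x y => k x y * (g y / v y) ^ p) := by
    have := hk
    fun_prop
  have hF : Measurable (uncurry fun x y => w x ^ p * (k x y * (g y / v y) ^ p)) := by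
    have := hG
    fun_prop
  calc ∫⁻ x, (∫⁻ y, k x y * g y ∂ν) ^ p ∂μ
      ≤ ∫⁻ x, (A * w x ^ q) ^ (p / q) * ∫⁻ y, k x y * (g y / v y) ^ p ∂ν ∂μ := by
        refine lintegral_mono fun x => ?_
        grw [lintegral_mul_rpow_le_of_weight hpq hk.of_uncurry_left hg hv hv0 hvt, hA x]
    _ = A ^ (p / q) * ∫⁻ x, ∫⁻ y, w x ^ p * (k x y * (g y / v y) ^ p) ∂ν ∂μ := by
        rw [← lintegral_const_mul _ hF.lintegral_prod_right]
        refine lintegral_congr fun x => ?_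
        rw [lintegral_const_mul _ hG.of_uncurry_left,
          ENNReal.mul_rpow_of_nonneg _ _ (by positivity), ← ENNReal.rpow_mul, mul_div_cancel₀ _ hq.ne', mul_assoc]
    _ = A ^ (p / q) * ∫⁻ y, (g y / v y) ^ p * ∫⁻ x, k x y * w x ^ p ∂μ ∂ν := by
        rw [lintegral_lintegral_swap hF.aemeasurable]
        congr 1
        refine lintegral_congr fun y => ?_
        rw [← lintegral_const_mul _ (f := fun x => k x y * w x ^ p)
          (hk.of_uncurry_right.mul (hw.pow_const p))]
        refine lintegral_congr fun x => ?_
        ring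
    _ ≤ A ^ (p / q) * ∫⁻ y, (g y / v y) ^ p * (B * v y ^ p) ∂ν := by
        gcongr with y
        exact hB y
    _ = A ^ (p / q) * B * ∫⁻ y, g y ^ p ∂ν := by
        rw [mul_assoc, ← lintegral_const_mul B (hg.pow_const p)]
        congr 1
        refine lintegral_congr fun y => ?_
        rw [mul_left_comm, ← ENNReal.mul_rpow_of_nonneg _ _ hp.le,
          ENNReal.div_mul_cancel (hv0 y) (hvt y)]

theorem lintegral_lintegral_mul_le_of_lintegral_le [SFinite μ] [SFinite ν]
    {k : α → β → ℝ≥0∞} (hk : Measurable (uncurry k)) {B : ℝ≥0∞}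
    (hB : ∀ y, ∫⁻ x, k x y ∂μ ≤ B) {g : β → ℝ≥0∞} (hg : Measurable g) :
    ∫⁻ x, ∫⁻ y, k x y * g y ∂ν ∂μ ≤ B * ∫⁻ y, g y ∂ν := by
  have hF : Measurable (uncurry fun x y => k x y * g y) := by
    have := hk
    fun_prop
  calc ∫⁻ x, ∫⁻ y, k x y * g y ∂ν ∂μ = ∫⁻ y, (∫⁻ x, k x y ∂μ) * g y ∂ν := by
        rw [lintegral_lintegral_swap hF.aemeasurable]
        exact lintegral_congr fun y => lintegral_mul_const _ hk.of_uncurry_right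
    _ ≤ ∫⁻ y, B * g y ∂ν := by gcongr with y; exact hB y
    _ = B * ∫⁻ y, g y ∂ν := lintegral_const_mul _ hg

theorem eLpNorm_ofReal_eq_lintegral_rpow {γ E : Type*} [MeasurableSpace γ] [ENorm E] {ρ : Measure γ}
    {p : ℝ} (hp : 0 < p) (f : γ → E) :
    eLpNorm f (ENNReal.ofReal p) ρ = (∫⁻ z, ‖f z‖ₑ ^ p ∂ρ) ^ p⁻¹ := by
  rw [eLpNorm_eq_lintegral_rpow_enorm_toReal (by simpa using hp) ENNReal.ofReal_ne_top,
    ENNReal.toReal_ofReal hp.le, one_div]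

theorem ae_integrable_and_eLpNorm_integral_le [SFinite ν] {K : α → β → ℂ}
    (hKm : Measurable (uncurry K)) {k : α → β → ℝ≥0∞} (hk : Measurable (uncurry k))
    {c : ℝ≥0∞} (hc : c ≠ ⊤) (hK : ∀ x y, ‖K x y‖ₑ ≤ c * k x y) {p : ℝ} (hp : 0 < p)
    {M : ℝ≥0∞} (hM : M ≠ ⊤)
    (hkM : ∀ g : β → ℝ≥0∞, Measurable g →
      ∫⁻ x, (∫⁻ y, k x y * g y ∂ν) ^ p ∂μ ≤ M * ∫⁻ y, g y ^ p ∂ν)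
    {u : β → ℂ} (hu : MemLp u (ENNReal.ofReal p) ν) :
    (∀ᵐ x ∂μ, Integrable (fun y => K x y * u y) ν) ∧
      eLpNorm (fun x => ∫ y, K x y * u y ∂ν) (ENNReal.ofReal p) μ ≤
        c * M ^ p⁻¹ * eLpNorm u (ENNReal.ofReal p) ν := by
  obtain ⟨g, hg, hug⟩ : ∃ g : β → ℝ≥0∞, Measurable g ∧ ∀ᵐ y ∂ν, ‖u y‖ₑ = g y :=
    ⟨_, hu.1.enorm.measurable_mk, hu.1.enorm.ae_eq_mk⟩
  set T : α → ℝ≥0∞ := fun x => ∫⁻ y, k x y * g y ∂ν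
  have hKu (x : α) : ∫⁻ y, ‖K x y * u y‖ₑ ∂ν ≤ c * T x := by
    rw [← lintegral_const_mul' _ _ hc]
    refine lintegral_mono_ae (hug.mono fun y hy => ?_)
    rw [enorm_mul, ← hy, ← mul_assoc]
    gcongr
    exact hK x y
  have hTp : ∫⁻ x, T x ^ p ∂μ ≤ M * eLpNorm u (ENNReal.ofReal p) ν ^ p := by
    rw [eLpNorm_ofReal_eq_lintegral_rpow hp, ← ENNReal.rpow_mul, inv_mul_cancel₀ hp.ne',
      ENNReal.rpow_one,
      lintegral_congr_ae (g := fun y => g y ^ p) (hug.mono fun y hy => by rw [hy])]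
    exact hkM g hg
  have hT : ∀ᵐ x ∂μ, T x < ⊤ := by
    have hTm : Measurable T := (hk.mul (hg.comp measurable_snd)).lintegral_prod_right
    filter_upwards [ae_lt_top (hTm.pow_const p)
      (ne_top_of_le_ne_top (ENNReal.mul_ne_top hM (ENNReal.rpow_ne_top_of_nonneg hp.le hu.2.ne))
        hTp)] with x hx
    exact (ENNReal.rpow_lt_top_iff_of_pos hp).1 hx
  refine ⟨?_, ?_⟩
  · filter_upwards [hT] with x hx
    exact ⟨hKm.of_uncurry_left.aestronglyMeasurable.mul hu.1,
      (hKu x).trans_lt (ENNReal.mul_lt_top hc.lt_top hx)⟩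
  · calc eLpNorm (fun x => ∫ y, K x y * u y ∂ν) (ENNReal.ofReal p) μ
        ≤ (∫⁻ x, (c * T x) ^ p ∂μ) ^ p⁻¹ := by
          rw [eLpNorm_ofReal_eq_lintegral_rpow hp]
          gcongr with x
          exact (enorm_integral_le_lintegral_enorm _).trans (hKu x)
      _ ≤ (c ^ p * (M * eLpNorm u (ENNReal.ofReal p) ν ^ p)) ^ p⁻¹ := by
          simp_rw [ENNReal.mul_rpow_of_nonneg _ _ hp.le]
          rw [lintegral_const_mul' _ _ (ENNReal.rpow_ne_top_of_nonneg hp.le hc)]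
          gcongr
      _ = c * M ^ p⁻¹ * eLpNorm u (ENNReal.ofReal p) ν := by
          simp_rw [ENNReal.mul_rpow_of_nonneg _ _ (inv_nonneg.2 hp.le), ← ENNReal.rpow_mul,
            mul_inv_cancel₀ hp.ne', ENNReal.rpow_one, mul_assoc]

end IntegralOperator

def japaneseBracket (t : ℝ) : ℝ≥0∞ := ENNReal.ofReal √(1 + t ^ 2)

theorem one_le_japaneseBracket (t : ℝ) : 1 ≤ japaneseBracket t :=
  ENNReal.one_le_ofReal.2 (Real.one_le_sqrt.2 (by nlinarith [sq_nonneg t]))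

theorem japaneseBracket_ne_zero (t : ℝ) : japaneseBracket t ≠ 0 :=
  (zero_lt_one.trans_le (one_le_japaneseBracket t)).ne'

theorem japaneseBracket_ne_top (t : ℝ) : japaneseBracket t ≠ ⊤ := ENNReal.ofReal_ne_top

theorem japaneseBracket_neg (t : ℝ) : japaneseBracket (-t) = japaneseBracket t := by
  simp [japaneseBracket]

theorem japaneseBracket_sub_comm (s t : ℝ) : japaneseBracket (s - t) = japaneseBracket (t - s) := by
  rw [← japaneseBracket_neg, neg_sub]

@[fun_prop]
theorem measurable_japaneseBracket : Measurable japaneseBracket := by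
  unfold japaneseBracket; fun_prop

theorem japaneseBracket_rpow (t s : ℝ) :
    japaneseBracket t ^ s = ENNReal.ofReal ((1 + t ^ 2) ^ (s / 2)) := by
  rw [japaneseBracket, ENNReal.ofReal_rpow_of_pos (by positivity), Real.sqrt_eq_rpow,
    ← Real.rpow_mul (by positivity), one_div_mul_eq_div]

theorem japaneseBracket_le_two_mul_mul_sub (s t : ℝ) :
    japaneseBracket t ≤ 2 * japaneseBracket s * japaneseBracket (s - t) := by
  rw [japaneseBracket, japaneseBracket, japaneseBracket, ← ENNReal.ofReal_ofNat,
    ← ENNReal.ofReal_mul (by norm_num), ← ENNReal.ofReal_mul (by positivity),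
    show (2 : ℝ) = √4 by rw [show (4 : ℝ) = 2 ^ 2 by norm_num, Real.sqrt_sq zero_le_two],
    ← Real.sqrt_mul (by norm_num), ← Real.sqrt_mul (by positivity)]
  gcongr
  nlinarith [sq_nonneg (s + (s - t)), sq_nonneg (s * (s - t))]

theorem japaneseBracket_rpow_neg_mul_le {δ : ℝ} (hδ : 0 ≤ δ) (s t : ℝ) :
    japaneseBracket s ^ (-δ) * japaneseBracket (s - t) ^ (-δ) ≤
      2 ^ δ * japaneseBracket t ^ (-δ) := by
  have h2s : 2 * japaneseBracket s ≠ ⊤ :=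
    ENNReal.mul_ne_top (by norm_num) (japaneseBracket_ne_top s)
  calc japaneseBracket s ^ (-δ) * japaneseBracket (s - t) ^ (-δ)
      = 2 ^ δ * (2 * japaneseBracket s * japaneseBracket (s - t)) ^ (-δ) := by
        rw [ENNReal.mul_rpow_of_ne_top h2s (japaneseBracket_ne_top _),
          ENNReal.mul_rpow_of_ne_top (by norm_num) (japaneseBracket_ne_top _), ← mul_assoc,
          ← mul_assoc, ← ENNReal.rpow_add _ _ two_ne_zero ENNReal.ofNat_ne_top, add_neg_cancel,
          ENNReal.rpow_zero, one_mul]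
    _ ≤ 2 ^ δ * japaneseBracket t ^ (-δ) := by
        gcongr 2 ^ δ * ?_
        exact ENNReal.rpow_le_rpow_of_nonpos (japaneseBracket_le_two_mul_mul_sub s t)
          (neg_nonpos.2 hδ)

theorem lintegral_japaneseBracket_rpow_neg_lt_top {γ : ℝ} (hγ : 1 < γ) :
    ∫⁻ t, japaneseBracket t ^ (-γ) < ⊤ := by
  simp_rw [japaneseBracket_rpow]
  have := integrable_rpow_neg_one_add_norm_sq (E := ℝ) (μ := volume) (r := γ) (by simpa using hγ)
  simpa [Real.norm_eq_abs, sq_abs, neg_div] using this.lintegral_lt_top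

theorem exists_lintegral_japaneseBracket_rpow_neg_mul_le {α β δ : ℝ} (hδ : 0 ≤ δ)
    (hδα : δ ≤ α) (hδβ : δ ≤ β) (h : 1 + 2 * δ < α + β) :
    ∃ D : ℝ≥0∞, D ≠ ⊤ ∧ ∀ v : ℝ,
      ∫⁻ u, japaneseBracket u ^ (-α) * japaneseBracket (u - v) ^ (-β) ≤
        D * japaneseBracket v ^ (-δ) := by
  set γ := α - δ + (β - δ)
  set M := ∫⁻ t, japaneseBracket t ^ (-γ)
  have hM : M ≠ ⊤ := (lintegral_japaneseBracket_rpow_neg_lt_top (by linarith)).ne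
  have hsplit : ∀ {a : ℝ} (t : ℝ), japaneseBracket t ^ (-a) =
      japaneseBracket t ^ (-(a - δ)) * japaneseBracket t ^ (-δ) := fun t => by
    rw [← ENNReal.rpow_add _ _ (japaneseBracket_ne_zero t) (japaneseBracket_ne_top t)]
    ring_nf
  -- Peetre's inequality pulls out `⟨v⟩^(-δ)`; a product of two negative powers is at most the
  -- sum of the two brackets raised to the total power, and each term is integrable in `u`.
  refine ⟨(M + M) * 2 ^ δ, by finiteness, fun v => ?_⟩
  calc ∫⁻ u, japaneseBracket u ^ (-α) * japaneseBracket (u - v) ^ (-β)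
      ≤ ∫⁻ u, (japaneseBracket u ^ (-γ) + japaneseBracket (u - v) ^ (-γ)) *
          (2 ^ δ * japaneseBracket v ^ (-δ)) := by
        refine lintegral_mono fun u => ?_
        rw [hsplit u, hsplit (u - v), mul_mul_mul_comm]
        gcongr ?_ * ?_
        · exact ENNReal.rpow_neg_mul_rpow_neg_le_add (japaneseBracket_ne_zero _)
            (japaneseBracket_ne_top _) (japaneseBracket_ne_zero _) (japaneseBracket_ne_top _)
            (by linarith) (by linarith)
        · exact japaneseBracket_rpow_neg_mul_le hδ u v
    _ = (M + M) * 2 ^ δ * japaneseBracket v ^ (-δ) := by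
        rw [lintegral_mul_const _ (by fun_prop), lintegral_add_left (by fun_prop),
          lintegral_sub_right_eq_self (fun t => japaneseBracket t ^ (-γ)) v, mul_assoc]

theorem lintegral_fun_norm_addHaar {E : Type*} [NormedAddCommGroup E] [NormedSpace ℝ E]
    [MeasurableSpace E] [BorelSpace E] [FiniteDimensional ℝ E] [Nontrivial E]
    (μ : Measure E) [μ.IsAddHaarMeasure] {f : ℝ → ℝ≥0∞} (hf : Measurable f) :
    ∫⁻ x, f ‖x‖ ∂μ = Module.finrank ℝ E * μ (ball 0 1) *
      ∫⁻ r in Ioi (0 : ℝ), ENNReal.ofReal (r ^ (Module.finrank ℝ E - 1)) * f r := by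
  calc ∫⁻ x, f ‖x‖ ∂μ = ∫⁻ x : ({(0 : E)}ᶜ : Set E), f ‖x.1‖ ∂(μ.comap (↑)) := by
        rw [lintegral_subtype_comap (measurableSet_singleton _).compl fun x => f ‖x‖,
          restrict_compl_singleton]
    _ = ∫⁻ z, f z.2 ∂μ.toSphere.prod (.volumeIoiPow (Module.finrank ℝ E - 1)) := by
        simpa using μ.measurePreserving_homeomorphUnitSphereProd.lintegral_comp_emb
          (Homeomorph.measurableEmbedding _) (f ∘ Subtype.val ∘ Prod.snd)
    _ = μ.toSphere univ * ∫⁻ r, f r ∂.volumeIoiPow (Module.finrank ℝ E - 1) := by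
        rw [lintegral_prod _ (by fun_prop)]
        simp only [lintegral_const]
        rw [mul_comm]
    _ = _ := by
        rw [μ.toSphere_apply_univ, Measure.volumeIoiPow,
          lintegral_withDensity_eq_lintegral_mul _ (by fun_prop) (by fun_prop),
          ← lintegral_subtype_comap measurableSet_Ioi]
        rfl

local notation "E2" => EuclideanSpace ℝ (Fin 2)

theorem exists_lintegral_japaneseBracket_radial_le {σ : ℝ} (hσ0 : 0 < σ) (hσ1 : σ ≤ 1) :
    ∃ D : ℝ≥0∞, D ≠ ⊤ ∧ ∀ r : ℝ, 0 ≤ r →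
      ∫⁻ y : E2, japaneseBracket ‖y‖ ^ (-σ) * (japaneseBracket (r - ‖y‖))⁻¹ *
        (japaneseBracket (r + ‖y‖))⁻¹ ≤ D * japaneseBracket r ^ (-(σ / 4)) := by
  obtain ⟨D, hD, hDv⟩ := exists_lintegral_japaneseBracket_rpow_neg_mul_le (α := σ) (β := 1)
    (δ := σ / 4) (by positivity) (by linarith) (by linarith) (by linarith)
  refine ⟨2 * volume (ball (0 : E2) 1) * D, by finiteness, fun r hr => ?_⟩
  calc ∫⁻ y : E2, japaneseBracket ‖y‖ ^ (-σ) * (japaneseBracket (r - ‖y‖))⁻¹ *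
        (japaneseBracket (r + ‖y‖))⁻¹
      = 2 * volume (ball (0 : E2) 1) * ∫⁻ t in Ioi (0 : ℝ), ENNReal.ofReal t *
          (japaneseBracket t ^ (-σ) * (japaneseBracket (r - t))⁻¹ *
            (japaneseBracket (r + t))⁻¹) := by
        rw [lintegral_fun_norm_addHaar volume (f := fun t => japaneseBracket t ^ (-σ) *
          (japaneseBracket (r - t))⁻¹ * (japaneseBracket (r + t))⁻¹) (by fun_prop)]
        simp
    _ ≤ 2 * volume (ball (0 : E2) 1) *
          ∫⁻ t in Ioi (0 : ℝ), japaneseBracket t ^ (-σ) * japaneseBracket (t - r) ^ (-1 : ℝ) := by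
        gcongr _ * ?_
        refine setLIntegral_mono (by fun_prop) fun t ht => ?_
        have hrt : ENNReal.ofReal t ≤ japaneseBracket (r + t) :=
          ENNReal.ofReal_le_ofReal (Real.le_sqrt_of_sq_le (by nlinarith [mem_Ioi.1 ht]))
        calc ENNReal.ofReal t * (japaneseBracket t ^ (-σ) * (japaneseBracket (r - t))⁻¹ *
              (japaneseBracket (r + t))⁻¹)
            = japaneseBracket t ^ (-σ) * (japaneseBracket (r - t))⁻¹ *
                (ENNReal.ofReal t * (japaneseBracket (r + t))⁻¹) := by ring
          _ ≤ japaneseBracket t ^ (-σ) * (japaneseBracket (r - t))⁻¹ *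
                (japaneseBracket (r + t) * (japaneseBracket (r + t))⁻¹) := by gcongr
          _ = japaneseBracket t ^ (-σ) * japaneseBracket (t - r) ^ (-1 : ℝ) := by
              rw [ENNReal.mul_inv_cancel (japaneseBracket_ne_zero _) (japaneseBracket_ne_top _),
                mul_one, ENNReal.rpow_neg_one, japaneseBracket_sub_comm]
    _ ≤ 2 * volume (ball (0 : E2) 1) *
          ∫⁻ t, japaneseBracket t ^ (-σ) * japaneseBracket (t - r) ^ (-1 : ℝ) := by
        gcongr _ * ?_
        exact setLIntegral_le_lintegral _ _
    _ ≤ 2 * volume (ball (0 : E2) 1) * D * japaneseBracket r ^ (-(σ / 4)) := by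
        rw [mul_assoc _ D]
        gcongr
        exact hDv r

def radialKernelBound (ε : ℝ) (x y : E2) : ℝ≥0∞ :=
  japaneseBracket ‖x‖ ^ (-(1 - ε)) * (japaneseBracket (‖x‖ - ‖y‖))⁻¹ *
    (japaneseBracket (‖x‖ + ‖y‖))⁻¹

theorem measurable_radialKernelBound (ε : ℝ) : Measurable (uncurry (radialKernelBound ε)) := by
  unfold radialKernelBound uncurry
  fun_prop

theorem exists_lintegral_radialKernelBound_mul_le_left {ε s : ℝ} (hs0 : 0 < s) (hs1 : s ≤ 1)
    (hsε : s ≤ 1 - ε) :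
    ∃ A : ℝ≥0∞, A ≠ ⊤ ∧ ∀ x : E2,
      ∫⁻ y, radialKernelBound ε x y * japaneseBracket ‖y‖ ^ (-s) ≤
        A * japaneseBracket ‖x‖ ^ (-s) := by
  obtain ⟨D, hD, hDr⟩ := exists_lintegral_japaneseBracket_radial_le hs0 hs1
  refine ⟨D, hD, fun x => ?_⟩
  calc ∫⁻ y, radialKernelBound ε x y * japaneseBracket ‖y‖ ^ (-s)
      = japaneseBracket ‖x‖ ^ (-(1 - ε)) * ∫⁻ y : E2, japaneseBracket ‖y‖ ^ (-s) *
          (japaneseBracket (‖x‖ - ‖y‖))⁻¹ * (japaneseBracket (‖x‖ + ‖y‖))⁻¹ := by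
        rw [← lintegral_const_mul _ (by fun_prop)]
        refine lintegral_congr fun y => ?_
        rw [radialKernelBound]
        ring
    _ ≤ japaneseBracket ‖x‖ ^ (-(1 - ε)) * (D * japaneseBracket ‖x‖ ^ (-(s / 4))) := by
        gcongr _ * ?_
        exact hDr ‖x‖ (norm_nonneg x)
    _ ≤ D * japaneseBracket ‖x‖ ^ (-s) := by
        rw [mul_left_comm, ← ENNReal.rpow_add _ _ (japaneseBracket_ne_zero _)
          (japaneseBracket_ne_top _)]
        gcongr D * ?_
        exact ENNReal.rpow_le_rpow_of_exponent_le (one_le_japaneseBracket _) (by linarith)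

theorem exists_lintegral_radialKernelBound_mul_le_right {ε s : ℝ} (hε1 : ε < 1) (hs0 : 0 ≤ s)
    (hsε : s ≤ ε) (hs : 3 * s ≤ 1 - ε) :
    ∃ B : ℝ≥0∞, B ≠ ⊤ ∧ ∀ y : E2,
      ∫⁻ x, radialKernelBound ε x y * japaneseBracket ‖x‖ ^ (-s) ≤
        B * japaneseBracket ‖y‖ ^ (-s) := by
  obtain ⟨D, hD, hDr⟩ := exists_lintegral_japaneseBracket_radial_le (σ := 1 - ε + s)
    (by linarith) (by linarith)
  refine ⟨D, hD, fun y => ?_⟩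
  calc ∫⁻ x, radialKernelBound ε x y * japaneseBracket ‖x‖ ^ (-s)
      = ∫⁻ x : E2, japaneseBracket ‖x‖ ^ (-(1 - ε + s)) *
          (japaneseBracket (‖y‖ - ‖x‖))⁻¹ * (japaneseBracket (‖y‖ + ‖x‖))⁻¹ := by
        refine lintegral_congr fun x => ?_
        rw [radialKernelBound, japaneseBracket_sub_comm, add_comm ‖y‖, neg_add,
          ENNReal.rpow_add _ _ (japaneseBracket_ne_zero _) (japaneseBracket_ne_top _)]
        ring
    _ ≤ D * japaneseBracket ‖y‖ ^ (-((1 - ε + s) / 4)) := hDr ‖y‖ (norm_nonneg y)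
    _ ≤ D * japaneseBracket ‖y‖ ^ (-s) := by
        gcongr D * ?_
        exact ENNReal.rpow_le_rpow_of_exponent_le (one_le_japaneseBracket _) (by linarith)

theorem enorm_le_ofReal_mul_radialKernelBound {ε C₀ : ℝ} {z : ℂ} {x y : E2}
    (h : ‖z‖ ≤ C₀ / (√(1 + ‖x‖ ^ 2) ^ (1 - ε) * √(1 + (‖x‖ - ‖y‖) ^ 2) *
      √(1 + (‖x‖ + ‖y‖) ^ 2))) :
    ‖z‖ₑ ≤ ENNReal.ofReal C₀ * radialKernelBound ε x y := by
  rw [← ofReal_norm]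
  refine (ENNReal.ofReal_le_ofReal h).trans_eq ?_
  rw [ENNReal.ofReal_div_of_pos (by positivity), ENNReal.ofReal_mul (by positivity),
    ENNReal.ofReal_mul (by positivity), ← ENNReal.ofReal_rpow_of_pos (by positivity)]
  change _ / (japaneseBracket ‖x‖ ^ (1 - ε) * japaneseBracket (‖x‖ - ‖y‖) *
    japaneseBracket (‖x‖ + ‖y‖)) = _
  rw [radialKernelBound, ENNReal.rpow_neg, div_eq_mul_inv,
    ENNReal.mul_inv (.inr (japaneseBracket_ne_top _)) (.inr (japaneseBracket_ne_zero _)),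
    ENNReal.mul_inv (.inr (japaneseBracket_ne_top _)) (.inr (japaneseBracket_ne_zero _)),
    mul_assoc]

theorem exists_lintegral_rpow_lintegral_radialKernelBound_le {ε : ℝ} (hε : 0 < ε)
    (hε1 : ε < 1) {p : ℝ} (hp : 1 ≤ p) :
    ∃ M : ℝ≥0∞, M ≠ ⊤ ∧ ∀ g : E2 → ℝ≥0∞, Measurable g →
      ∫⁻ x, (∫⁻ y, radialKernelBound ε x y * g y) ^ p ≤ M * ∫⁻ y, g y ^ p := by
  rcases hp.eq_or_lt with rfl | hp1
  · obtain ⟨B, hB, hBy⟩ := exists_lintegral_radialKernelBound_mul_le_right (s := 0) hε1 le_rfl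
      hε.le (by linarith)
    refine ⟨B, hB, fun g hg => ?_⟩
    simp only [ENNReal.rpow_one]
    exact lintegral_lintegral_mul_le_of_lintegral_le (measurable_radialKernelBound ε)
      (fun y => by simpa using hBy y) hg
  · set q := p.conjExponent
    have hpq : p.HolderConjugate q := .conjExponent hp1
    have hq := hpq.symm.pos
    set m := min ε (1 - ε)
    have hm : 0 < m := lt_min hε (by linarith)
    set a := m / (3 * (p + q))
    have ha : 0 < a := by positivity
    have hap : 3 * (a * p) ≤ m := by
      rw [div_mul_eq_mul_div, mul_div_assoc', div_le_iff₀ (by positivity)]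
      nlinarith
    have haq : 3 * (a * q) ≤ m := by
      rw [div_mul_eq_mul_div, mul_div_assoc', div_le_iff₀ (by positivity)]
      nlinarith
    obtain ⟨A, hA, hAx⟩ := exists_lintegral_radialKernelBound_mul_le_left (ε := ε) (s := a * q)
      (by positivity) (by linarith [min_le_right ε (1 - ε)]) (by linarith [min_le_right ε (1 - ε)])
    obtain ⟨B, hB, hBy⟩ := exists_lintegral_radialKernelBound_mul_le_right (s := a * p) hε1
      (by positivity) (by linarith [min_le_left ε (1 - ε)]) (by linarith [min_le_right ε (1 - ε)])
    have hw (r : ℝ) (z : E2) :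
        (japaneseBracket ‖z‖ ^ (-a)) ^ r = japaneseBracket ‖z‖ ^ (-(a * r)) := by
      rw [← ENNReal.rpow_mul, neg_mul]
    refine ⟨A ^ (p / q) * B, by finiteness, fun g hg => ?_⟩
    exact lintegral_rpow_lintegral_mul_le_of_schur hpq (measurable_radialKernelBound ε)
      (w := fun x => japaneseBracket ‖x‖ ^ (-a)) (v := fun y => japaneseBracket ‖y‖ ^ (-a))
      (by fun_prop) (by fun_prop)
      (fun y => (ENNReal.rpow_pos (zero_lt_one.trans_le (one_le_japaneseBracket _))
        (japaneseBracket_ne_top _)).ne')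
      (fun y => ENNReal.rpow_ne_top_of_ne_zero (japaneseBracket_ne_zero _)
        (japaneseBracket_ne_top _))
      (fun x => by simpa only [hw] using hAx x) (fun y => by simpa only [hw] using hBy y) hg

theorem stmt_1_general
    (ε : ℝ) (hε : 0 < ε) (hε1 : ε < 1)
    (K : EuclideanSpace ℝ (Fin 2) → EuclideanSpace ℝ (Fin 2) → ℂ)
    (hKm : Measurable (Function.uncurry K))
    (C₀ : ℝ)
    (hK : ∀ x y : EuclideanSpace ℝ (Fin 2),
      ‖K x y‖ ≤ C₀ / (Real.sqrt (1 + ‖x‖ ^ 2) ^ (1 - ε) *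
        Real.sqrt (1 + (‖x‖ - ‖y‖) ^ 2) * Real.sqrt (1 + (‖x‖ + ‖y‖) ^ 2)))
    (p : ℝ) (hp : 1 ≤ p) :
    ∃ C : ℝ, 0 < C ∧
      ∀ u : EuclideanSpace ℝ (Fin 2) → ℂ,
        MemLp u (ENNReal.ofReal p) volume →
        (∀ᵐ x : EuclideanSpace ℝ (Fin 2), Integrable (fun y => K x y * u y)) ∧
        eLpNorm (fun x => ∫ y, K x y * u y) (ENNReal.ofReal p) volume ≤
          ENNReal.ofReal C * eLpNorm u (ENNReal.ofReal p) volume := by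
  obtain ⟨M, hM, hkM⟩ := exists_lintegral_rpow_lintegral_radialKernelBound_le hε hε1 hp
  have hCM : ENNReal.ofReal C₀ * M ^ p⁻¹ ≠ ⊤ :=
    ENNReal.mul_ne_top ENNReal.ofReal_ne_top (ENNReal.rpow_ne_top_of_nonneg (by positivity) hM)
  refine ⟨(ENNReal.ofReal C₀ * M ^ p⁻¹).toReal + 1, by positivity, fun u hu => ?_⟩
  obtain ⟨hint, hnorm⟩ := ae_integrable_and_eLpNorm_integral_le hKm
    (measurable_radialKernelBound ε) ENNReal.ofReal_ne_top
    (fun x y => enorm_le_ofReal_mul_radialKernelBound (hK x y)) (by linarith) hM hkM hu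
  refine ⟨hint, hnorm.trans ?_⟩
  gcongr
  rw [ENNReal.ofReal_add (by positivity) zero_le_one, ENNReal.ofReal_toReal hCM]
  exact le_self_add

/-- An integral operator on `ℝ²` whose kernel satisfies the pointwise bound
`|K(x,y)| ≤ C₀ / (⟨x⟩^{1-ε} ⟨|x|-|y|⟩ ⟨|x|+|y|⟩)` is bounded on `L^p(ℝ²)` for every
`1 ≤ p < ∞`. -/
theorem stmt_1
    (ε : ℝ) (hε : 0 < ε) (hε1 : ε < 1)
    (K : EuclideanSpace ℝ (Fin 2) → EuclideanSpace ℝ (Fin 2) → ℂ)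
    (hKm : Measurable (Function.uncurry K))
    (C₀ : ℝ) (hC₀ : 0 < C₀)
    (hK : ∀ x y : EuclideanSpace ℝ (Fin 2),
      ‖K x y‖ ≤ C₀ / (Real.sqrt (1 + ‖x‖ ^ 2) ^ (1 - ε) *
        Real.sqrt (1 + (‖x‖ - ‖y‖) ^ 2) * Real.sqrt (1 + (‖x‖ + ‖y‖) ^ 2)))
    (p : ℝ) (hp : 1 ≤ p) :
    ∃ C : ℝ, 0 < C ∧
      ∀ u : EuclideanSpace ℝ (Fin 2) → ℂ,
        MemLp u (ENNReal.ofReal p) volume →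
        (∀ᵐ x : EuclideanSpace ℝ (Fin 2), Integrable (fun y => K x y * u y)) ∧
        eLpNorm (fun x => ∫ y, K x y * u y) (ENNReal.ofReal p) volume ≤
          ENNReal.ofReal C * eLpNorm u (ENNReal.ofReal p) volume :=
  stmt_1_general ε hε hε1 K hKm C₀ hK p hp
end
end

section
/- Let λ₁ ∈ (0, 1/2], ℓ > 1 and M > 0. Suppose a : (0, ∞) → ℂ is twice continuously differentiable, a(λ) = 0 for all λ ≥ 2λ₁, and |a^{(j)}(λ)| ≤ M λ^{ℓ−j} for j = 0, 1, 2 and all λ ∈ (0, 2λ₁). Then there is a constant C = C(ℓ, λ₁) (independent of a, M, and L) such that for all L ∈ ℝ: |∫₀^∞ e^{iλL} a(λ) dλ| ≤ C · M · ⟨L⟩^{−2}. -/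
/-!
On `(0, ∞)` the amplitude `a` lives in `(0, b]`, `b = 2λ₁`, so the trivial bound is
`‖∫ e^{iλL} a‖ ≤ M b^{ℓ+1}/(ℓ+1)`. Integrating by parts twice against `e^{iλL}` gives
`L² ‖∫ e^{iλL} a‖ = ‖∫ e^{iλL} a''‖ ≤ M b^{ℓ-1}/(ℓ-1)`: the boundary terms vanish at `b` because
`a` and `a'` do, and at `0` because `|a| ≤ M λ^ℓ` and `|a'| ≤ M λ^{ℓ-1}` with `ℓ > 1`, which also
makes `λ^{ℓ-2}` integrable. Adding the two bounds controls `(1 + L²) ‖∫ e^{iλL} a‖`.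
-/

open MeasureTheory Real Set Filter Topology

section RpowMajorant

variable {E : Type*} [NormedAddCommGroup E] {g : ℝ → E} {b K r : ℝ}

lemma integrableOn_Ioi_indicator_rpow (hr : -1 < r) :
    IntegrableOn ((Ioo 0 b).indicator fun x => K * x ^ r) (Ioi 0) :=
  ((integrable_indicator_iff measurableSet_Ioo).2
    (IntegrableOn.mono_set ((intervalIntegral.intervalIntegrable_rpow' hr).1.const_mul K)
      Ioo_subset_Ioc_self)).integrableOn

lemma integral_Ioi_indicator_rpow (hb : 0 ≤ b) (hr : -1 < r) :
    ∫ x in Ioi 0, (Ioo 0 b).indicator (fun x => K * x ^ r) x = K * (b ^ (r + 1) / (r + 1)) := by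
  rw [setIntegral_indicator measurableSet_Ioo, inter_eq_self_of_subset_right Ioo_subset_Ioi_self,
    ← integral_Ioc_eq_integral_Ioo, ← intervalIntegral.integral_of_le hb,
    intervalIntegral.integral_const_mul, integral_rpow (Or.inl hr), zero_rpow (by linarith),
    sub_zero]

lemma norm_le_indicator_rpow (h_supp : ∀ x, b ≤ x → g x = 0)
    (h_bound : ∀ x ∈ Ioo 0 b, ‖g x‖ ≤ K * x ^ r) {x : ℝ} (hx : 0 < x) :
    ‖g x‖ ≤ (Ioo 0 b).indicator (fun x => K * x ^ r) x := by
  by_cases hxb : x < b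
  · rw [indicator_of_mem (show x ∈ Ioo 0 b from ⟨hx, hxb⟩)]
    exact h_bound x ⟨hx, hxb⟩
  · rw [indicator_of_notMem fun h => hxb h.2, h_supp x (not_lt.1 hxb), norm_zero]

lemma integrableOn_Ioi_of_norm_le_rpow (hr : -1 < r)
    (hg : AEStronglyMeasurable g (volume.restrict (Ioi 0))) (h_supp : ∀ x, b ≤ x → g x = 0)
    (h_bound : ∀ x ∈ Ioo 0 b, ‖g x‖ ≤ K * x ^ r) : IntegrableOn g (Ioi 0) :=
  (integrableOn_Ioi_indicator_rpow hr).mono' hg <|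
    (ae_restrict_iff' measurableSet_Ioi).2 <| .of_forall fun _ hx =>
      norm_le_indicator_rpow h_supp h_bound hx

lemma norm_integral_Ioi_le_of_norm_le_rpow [NormedSpace ℝ E] (hb : 0 ≤ b) (hr : -1 < r)
    (h_supp : ∀ x, b ≤ x → g x = 0) (h_bound : ∀ x ∈ Ioo 0 b, ‖g x‖ ≤ K * x ^ r) :
    ‖∫ x in Ioi 0, g x‖ ≤ K * (b ^ (r + 1) / (r + 1)) := by
  rw [← integral_Ioi_indicator_rpow hb hr]
  exact norm_integral_le_of_norm_le (integrableOn_Ioi_indicator_rpow hr) <|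
    (ae_restrict_iff' measurableSet_Ioi).2 <| .of_forall fun _ hx =>
      norm_le_indicator_rpow h_supp h_bound hx

lemma tendsto_nhdsGT_zero_of_norm_le_rpow (hb : 0 < b) (hr : 0 < r)
    (h_bound : ∀ x ∈ Ioo 0 b, ‖g x‖ ≤ K * x ^ r) : Tendsto g (𝓝[>] 0) (𝓝 0) := by
  refine squeeze_zero_norm' (eventually_of_mem (Ioo_mem_nhdsGT hb) h_bound) ?_
  simpa [zero_rpow hr.ne'] using
    ((continuousAt_rpow_const 0 r (Or.inr hr.le)).tendsto.mono_left nhdsWithin_le_nhds).const_mul K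

end RpowMajorant

lemma HasDerivAt.eq_zero_of_forall_ge_eq_zero {E : Type*} [NormedAddCommGroup E] [NormedSpace ℝ E]
    {f : ℝ → E} {f' : E} {b x : ℝ} (h_supp : ∀ y, b ≤ y → f y = 0) (hx : b ≤ x)
    (hf : HasDerivAt f f' x) : f' = 0 :=
  (uniqueDiffOn_Ici b x hx).eq_deriv _ hf.hasDerivWithinAt <|
    (hasDerivWithinAt_const x _ 0).congr h_supp (h_supp x hx)

lemma norm_cexp_I_mul_ofReal_mul (L x : ℝ) : ‖Complex.exp (Complex.I * L * x)‖ = 1 := by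
  rw [show Complex.I * L * x = ((L * x : ℝ) : ℂ) * Complex.I by push_cast; ring]
  exact Complex.norm_exp_ofReal_mul_I _

lemma hasDerivAt_cexp_I_mul_ofReal_mul (L x : ℝ) :
    HasDerivAt (fun x : ℝ => Complex.exp (Complex.I * L * x))
      (Complex.exp (Complex.I * L * x) * (Complex.I * L)) x := by
  simpa using ((hasDerivAt_id x).ofReal_comp.const_mul (Complex.I * L)).cexp

theorem mul_integral_Ioi_cexp_mul_eq {u u' : ℝ → ℂ} {t b : ℝ} (L : ℝ)
    (hu : ∀ x ∈ Ioi t, HasDerivAt u (u' x) x) (hu_int : IntegrableOn u (Ioi t))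
    (hu'_int : IntegrableOn u' (Ioi t)) (h_zero : Tendsto u (𝓝[>] t) (𝓝 0))
    (h_supp : ∀ x, b ≤ x → u x = 0) :
    Complex.I * L * ∫ x in Ioi t, Complex.exp (Complex.I * L * x) * u x =
      -∫ x in Ioi t, Complex.exp (Complex.I * L * x) * u' x := by
  set v : ℝ → ℂ := fun x => Complex.exp (Complex.I * L * x)
  have hv_cont : Continuous v := by fun_prop
  have hv_bound : ∀ᵐ x ∂volume.restrict (Ioi t), ‖v x‖ ≤ 1 :=
    .of_forall fun x => (norm_cexp_I_mul_ofReal_mul L x).le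
  have huv_int : IntegrableOn (fun x => u x * v x) (Ioi t) :=
    hu_int.mul_bdd hv_cont.aestronglyMeasurable hv_bound
  have huv_zero : Tendsto (fun x => u x * v x) (𝓝[>] t) (𝓝 0) := by
    simpa only [zero_mul] using h_zero.mul ((hv_cont.tendsto t).mono_left nhdsWithin_le_nhds)
  have huv_top : Tendsto (fun x => u x * v x) atTop (𝓝 0) :=
    tendsto_const_nhds.congr' <| eventually_atTop.2 ⟨b, fun x hx => by simp [h_supp x hx]⟩
  have h_ibp := integral_Ioi_mul_deriv_eq_deriv_mul (v := v) (v' := fun x => v x * (Complex.I * L))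
    hu (fun x _ => hasDerivAt_cexp_I_mul_ofReal_mul L x)
    ((huv_int.mul_const (Complex.I * L)).congr (.of_forall fun x => mul_assoc _ _ _))
    (hu'_int.mul_bdd hv_cont.aestronglyMeasurable hv_bound) huv_zero huv_top
  rw [sub_self, zero_sub] at h_ibp
  calc Complex.I * L * ∫ x in Ioi t, v x * u x
      = ∫ x in Ioi t, u x * (v x * (Complex.I * L)) := by
        rw [← integral_const_mul]; congr 1 with x; ring
    _ = -∫ x in Ioi t, v x * u' x := by simp_rw [h_ibp, mul_comm (u' _)]

theorem one_add_sq_mul_norm_integral_Ioi_cexp_mul_le {a a' a'' : ℝ → ℂ} {b M ℓ : ℝ}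
    (hb : 0 < b) (hℓ : 1 < ℓ) (ha : ∀ x ∈ Ioi 0, HasDerivAt a (a' x) x)
    (ha' : ∀ x ∈ Ioi 0, HasDerivAt a' (a'' x) x) (ha''_cont : ContinuousOn a'' (Ioi 0))
    (h_supp : ∀ x, b ≤ x → a x = 0) (h₀ : ∀ x ∈ Ioo 0 b, ‖a x‖ ≤ M * x ^ ℓ)
    (h₁ : ∀ x ∈ Ioo 0 b, ‖a' x‖ ≤ M * x ^ (ℓ - 1))
    (h₂ : ∀ x ∈ Ioo 0 b, ‖a'' x‖ ≤ M * x ^ (ℓ - 2)) (L : ℝ) :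
    (1 + L ^ 2) * ‖∫ x in Ioi (0:ℝ), Complex.exp (Complex.I * L * x) * a x‖ ≤
      M * (b ^ (ℓ + 1) / (ℓ + 1) + b ^ (ℓ - 1) / (ℓ - 1)) := by
  have h_supp' : ∀ x, b ≤ x → a' x = 0 := fun x hx =>
    (ha x (hb.trans_le hx)).eq_zero_of_forall_ge_eq_zero h_supp hx
  have h_supp'' : ∀ x, b ≤ x → a'' x = 0 := fun x hx =>
    (ha' x (hb.trans_le hx)).eq_zero_of_forall_ge_eq_zero h_supp' hx
  have ha_cont : ContinuousOn a (Ioi 0) :=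
    continuousOn_of_forall_continuousAt fun x hx => (ha x hx).continuousAt
  have ha'_cont : ContinuousOn a' (Ioi 0) :=
    continuousOn_of_forall_continuousAt fun x hx => (ha' x hx).continuousAt
  have ha_int := integrableOn_Ioi_of_norm_le_rpow (by linarith)
    (ha_cont.aestronglyMeasurable measurableSet_Ioi) h_supp h₀
  have ha'_int := integrableOn_Ioi_of_norm_le_rpow (by linarith)
    (ha'_cont.aestronglyMeasurable measurableSet_Ioi) h_supp' h₁
  have ha''_int := integrableOn_Ioi_of_norm_le_rpow (by linarith)
    (ha''_cont.aestronglyMeasurable measurableSet_Ioi) h_supp'' h₂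
  have h_ibp₁ := mul_integral_Ioi_cexp_mul_eq L ha ha_int ha'_int
    (tendsto_nhdsGT_zero_of_norm_le_rpow hb (by linarith) h₀) h_supp
  have h_ibp₂ := mul_integral_Ioi_cexp_mul_eq L ha' ha'_int ha''_int
    (tendsto_nhdsGT_zero_of_norm_le_rpow hb (by linarith) h₁) h_supp'
  have h_twice : L ^ 2 * ‖∫ x in Ioi (0:ℝ), Complex.exp (Complex.I * L * x) * a x‖ =
      ‖∫ x in Ioi (0:ℝ), Complex.exp (Complex.I * L * x) * a'' x‖ :=
    calc _ = ‖Complex.I * L * (Complex.I * L *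
          ∫ x in Ioi (0:ℝ), Complex.exp (Complex.I * L * x) * a x)‖ := by
          rw [← mul_assoc, norm_mul]; simp [Complex.norm_real, sq]
      _ = _ := by rw [h_ibp₁, mul_neg, h_ibp₂, neg_neg]
  have h_norm : ∀ {g : ℝ → ℂ} (x : ℝ), ‖Complex.exp (Complex.I * L * x) * g x‖ = ‖g x‖ :=
    fun x => by rw [norm_mul, norm_cexp_I_mul_ofReal_mul, one_mul]
  have h_bound₀ := norm_integral_Ioi_le_of_norm_le_rpow hb.le (by linarith)
    (fun x hx => by rw [h_supp x hx, mul_zero]) (fun x hx => (h_norm x).trans_le (h₀ x hx))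
  have h_bound₂ := norm_integral_Ioi_le_of_norm_le_rpow hb.le (by linarith)
    (fun x hx => by rw [h_supp'' x hx, mul_zero]) (fun x hx => (h_norm x).trans_le (h₂ x hx))
  rw [show ℓ - 2 + 1 = ℓ - 1 by ring] at h_bound₂
  rw [add_mul, one_mul, h_twice]
  linarith

/-- if `a` is twice continuously differentiable on `(0,∞)`, supported in
`(0, 2λ₁]`, and `|a^{(j)}(λ)| ≤ M λ^{ℓ-j}` for `j = 0,1,2` with `ℓ > 1`, then
`|∫₀^∞ e^{iλL} a(λ) dλ| ≤ C M ⟨L⟩^{-2}` with `C = C(ℓ, λ₁)` independent of `a`, `M`, `L`. -/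
theorem stmt_7 (lam₁ : ℝ) (hlam₁ : lam₁ ∈ Set.Ioc (0:ℝ) (1/2)) (ℓ : ℝ) (hℓ : 1 < ℓ) :
    ∃ C : ℝ, 0 < C ∧ ∀ (a : ℝ → ℂ) (M : ℝ), 0 < M →
      ContDiffOn ℝ 2 a (Set.Ioi 0) →
      (∀ l : ℝ, 2 * lam₁ ≤ l → a l = 0) →
      (∀ l ∈ Set.Ioo (0:ℝ) (2 * lam₁), ∀ j : ℕ, j ≤ 2 →
        ‖iteratedDeriv j a l‖ ≤ M * l ^ (ℓ - j)) →
      ∀ L : ℝ,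
        ‖∫ l in Set.Ioi (0:ℝ), Complex.exp (Complex.I * l * L) * a l‖ ≤
          C * M / (1 + L ^ 2) := by
  have hb : 0 < 2 * lam₁ := by linarith [hlam₁.1]
  have hℓ₁ : 0 < ℓ - 1 := by linarith
  refine ⟨(2 * lam₁) ^ (ℓ + 1) / (ℓ + 1) + (2 * lam₁) ^ (ℓ - 1) / (ℓ - 1), by positivity,
    fun a M _ ha h_supp h_bound L => ?_⟩
  have ha' : ContDiffOn ℝ 1 (deriv a) (Ioi 0) := ha.deriv_of_isOpen isOpen_Ioi (by norm_num)
  have ha'' : ContDiffOn ℝ 0 (deriv (deriv a)) (Ioi 0) :=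
    ha'.deriv_of_isOpen isOpen_Ioi (by norm_num)
  have h_bound₀ : ∀ x ∈ Ioo 0 (2 * lam₁), ‖a x‖ ≤ M * x ^ ℓ := fun x hx => by
    simpa using h_bound x hx 0 (by norm_num)
  have h_bound₁ : ∀ x ∈ Ioo 0 (2 * lam₁), ‖deriv a x‖ ≤ M * x ^ (ℓ - 1) := fun x hx => by
    simpa using h_bound x hx 1 (by norm_num)
  have h_bound₂ : ∀ x ∈ Ioo 0 (2 * lam₁), ‖deriv (deriv a) x‖ ≤ M * x ^ (ℓ - 2) :=
    fun x hx => by simpa [iteratedDeriv_succ] using h_bound x hx 2 le_rfl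
  rw [le_div_iff₀ (by positivity), mul_comm _ (1 + L ^ 2), mul_comm _ M]
  simpa only [mul_right_comm Complex.I] using
    one_add_sq_mul_norm_integral_Ioi_cexp_mul_le hb hℓ
      (fun x hx => (ha.differentiableOn (by norm_num)).hasDerivAt (Ioi_mem_nhds hx))
      (fun x hx => (ha'.differentiableOn (by norm_num)).hasDerivAt (Ioi_mem_nhds hx))
      ha''.continuousOn h_supp h_bound₀ h_bound₁ h_bound₂ L
end

section
/- For every ε > 0 there exists a constant C = C(ε) such that for all x ∈ ℝ²: ∫_{ℝ²} |x − x₁|^{−1} · ⟨x₁⟩^{−2−ε} dx₁ ≤ C ⟨x⟩^{−1}. Equivalently, the function x₁ ↦ ⟨x₁⟩^{−1−ε/2} |x − x₁|^{−1/2} has L²(ℝ²) norm bounded by C' ⟨x⟩^{−1/2} uniformly in x. -/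
/-!
Put `R = ⟨x⟩` and split `ℝ²` according to whether `|x - x₁| < R / 2`. Near `x` the triangle
inequality for `⟨·⟩` gives `⟨x₁⟩ ≥ R / 2`, and by scaling `∫_{|z| < R/2} |z|⁻¹ dz` is a multiple
of `R`, so this part is `O(R ^ (-1-ε))`. Away from `x` the kernel is at most `2 / R`, and
`⟨x₁⟩^{-2-ε}` is integrable. The same argument works in dimension `d` for the kernel
`|x - x₁|^{-α}` and weight `⟨x₁⟩^{-β}` whenever `0 ≤ α < d < β`.
-/

open MeasureTheory Metric Set Module

theorem sqrt_one_add_norm_sq_le_add_norm_sub {F : Type*} [SeminormedAddCommGroup F] (x y : F) :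
    √(1 + ‖x‖ ^ 2) ≤ √(1 + ‖y‖ ^ 2) + ‖x - y‖ := by
  have htri : ‖x‖ ≤ ‖y‖ + ‖x - y‖ := norm_le_insert' x y
  have hy : ‖y‖ ≤ √(1 + ‖y‖ ^ 2) := Real.le_sqrt_of_sq_le (by linarith)
  rw [Real.sqrt_le_left (by positivity)]
  nlinarith [Real.sq_sqrt (show 0 ≤ 1 + ‖y‖ ^ 2 by positivity), norm_nonneg x, norm_nonneg (x - y)]

theorem norm_sub_rpow_mul_sqrt_rpow_le {F : Type*} [SeminormedAddCommGroup F] {α β : ℝ}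
    (hα : 0 ≤ α) (hβ : 0 ≤ β) (x y : F) :
    ‖x - y‖ ^ (-α) * √(1 + ‖y‖ ^ 2) ^ (-β) ≤
      (√(1 + ‖x‖ ^ 2) / 2) ^ (-β) *
          (ball (0 : F) (√(1 + ‖x‖ ^ 2) / 2)).indicator (‖·‖ ^ (-α)) (x - y) +
        (√(1 + ‖x‖ ^ 2) / 2) ^ (-α) * √(1 + ‖y‖ ^ 2) ^ (-β) := by
  set ρ := √(1 + ‖x‖ ^ 2) / 2 with hρ_def
  have hρ : 0 < ρ := by positivity
  by_cases hnear : x - y ∈ ball (0 : F) ρ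
  · have hy : ρ ≤ √(1 + ‖y‖ ^ 2) := by
      have := sqrt_one_add_norm_sq_le_add_norm_sub x y
      rw [mem_ball_zero_iff] at hnear
      linarith [hρ_def]
    rw [indicator_of_mem hnear, mul_comm (ρ ^ (-β))]
    calc ‖x - y‖ ^ (-α) * √(1 + ‖y‖ ^ 2) ^ (-β) ≤ ‖x - y‖ ^ (-α) * ρ ^ (-β) := by
          gcongr ?_ * ?_
          exact Real.rpow_le_rpow_of_nonpos hρ hy (neg_nonpos.2 hβ)
      _ ≤ _ := le_add_of_nonneg_right (by positivity)
  · have hxy : ρ ≤ ‖x - y‖ := by simpa using hnear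
    rw [indicator_of_notMem hnear, mul_zero, zero_add]
    gcongr ?_ * _
    exact Real.rpow_le_rpow_of_nonpos hρ hxy (neg_nonpos.2 hα)

theorem half_rpow_neg_mul_half_rpow_le {R : ℝ} (hR : 1 ≤ R) {α β d : ℝ} (hd : d ≤ β) :
    (R / 2) ^ (-β) * (R / 2) ^ (d - α) ≤ 2 ^ (α + β - d) * R ^ (-α) := by
  have hR0 : 0 < R := by linarith
  rw [← Real.rpow_add (by positivity), Real.div_rpow hR0.le zero_le_two,
    show -β + (d - α) = (d - β) + -α by ring, Real.rpow_add hR0, div_eq_mul_inv,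
    ← Real.rpow_neg zero_le_two, show -(d - β + -α) = α + β - d by ring]
  have : R ^ (d - β) ≤ 1 := Real.rpow_le_one_of_one_le_of_nonpos hR (by linarith)
  calc R ^ (d - β) * R ^ (-α) * 2 ^ (α + β - d) ≤ 1 * R ^ (-α) * 2 ^ (α + β - d) := by gcongr
    _ = 2 ^ (α + β - d) * R ^ (-α) := by ring

section HaarMeasure

variable {E : Type*} [NormedAddCommGroup E] [NormedSpace ℝ E] [FiniteDimensional ℝ E]
  [MeasurableSpace E] [BorelSpace E] (μ : Measure E) [μ.IsAddHaarMeasure]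

theorem integrable_sqrt_one_add_norm_sq_rpow {β : ℝ} (hβ : finrank ℝ E < β) :
    Integrable (fun y : E ↦ √(1 + ‖y‖ ^ 2) ^ (-β)) μ := by
  refine (integrable_rpow_neg_one_add_norm_sq hβ).congr (.of_forall fun y ↦ ?_)
  exact Real.rpow_div_two_eq_sqrt _ (by positivity)

theorem setIntegral_ball_norm_rpow (α : ℝ) {ρ : ℝ} (hρ : 0 < ρ) :
    ∫ y in ball (0 : E) ρ, ‖y‖ ^ (-α) ∂μ =
      ρ ^ (finrank ℝ E - α) * ∫ y in ball (0 : E) 1, ‖y‖ ^ (-α) ∂μ := by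
  have hscale := Measure.setIntegral_comp_smul_of_pos μ (fun y : E ↦ ‖y‖ ^ (-α)) (ball 0 1) hρ
  simp only [smul_unitBall_of_pos hρ, norm_smul, Real.norm_of_nonneg hρ.le,
    Real.mul_rpow hρ.le (norm_nonneg _), integral_const_mul, smul_eq_mul] at hscale
  rw [eq_inv_mul_iff_mul_eq₀ (by positivity)] at hscale
  rw [← hscale, Real.rpow_sub hρ, Real.rpow_natCast, div_eq_mul_inv, ← Real.rpow_neg hρ.le]
  ring

theorem exists_integral_norm_sub_rpow_mul_sqrt_rpow_le {α β : ℝ} (hα : 0 ≤ α)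
    (hαd : α < finrank ℝ E) (hβ : finrank ℝ E < β) :
    ∃ C > 0, ∀ x : E,
      ∫ y, ‖x - y‖ ^ (-α) * √(1 + ‖y‖ ^ 2) ^ (-β) ∂μ ≤ C * √(1 + ‖x‖ ^ 2) ^ (-α) := by
  set K₁ := ∫ y in ball (0 : E) 1, ‖y‖ ^ (-α) ∂μ
  set K₂ := ∫ y, √(1 + ‖y‖ ^ 2) ^ (-β) ∂μ
  have hK₂ : 0 < K₂ := by
    refine (integral_pos_iff_support_of_nonneg (fun _ ↦ by positivity)
      (integrable_sqrt_one_add_norm_sq_rpow μ hβ)).2 ?_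
    rw [Function.support_eq_univ fun y ↦ by positivity]
    exact Measure.measure_univ_pos.2 (NeZero.ne μ)
  refine ⟨2 ^ (α + β - finrank ℝ E) * K₁ + 2 ^ α * K₂, by positivity, fun x ↦ ?_⟩
  set R := √(1 + ‖x‖ ^ 2)
  have hR : 1 ≤ R := Real.one_le_sqrt.2 (le_add_of_nonneg_right (by positivity))
  have hball : IntegrableOn (‖·‖ ^ (-α)) (ball (0 : E) (R / 2)) μ :=
    integrableOn_ball_of_norm_le_rpow (by exact_mod_cast (hα.trans_lt hαd)) hαd
      (C := 1) (.of_forall fun y ↦ by rw [one_mul, Real.norm_of_nonneg (by positivity)])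
      (by fun_prop : Measurable fun y : E ↦ ‖y‖ ^ (-α)).aestronglyMeasurable
  have hnear := ((hball.integrable_indicator measurableSet_ball).comp_sub_left x).const_mul
    ((R / 2) ^ (-β))
  have hfar := (integrable_sqrt_one_add_norm_sq_rpow μ hβ).const_mul ((R / 2) ^ (-α))
  calc ∫ y, ‖x - y‖ ^ (-α) * √(1 + ‖y‖ ^ 2) ^ (-β) ∂μ
      ≤ ∫ y, (R / 2) ^ (-β) * (ball (0 : E) (R / 2)).indicator (‖·‖ ^ (-α)) (x - y) +
          (R / 2) ^ (-α) * √(1 + ‖y‖ ^ 2) ^ (-β) ∂μ :=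
        integral_mono_of_nonneg (.of_forall fun _ ↦ by positivity) (hnear.add hfar)
          (.of_forall (norm_sub_rpow_mul_sqrt_rpow_le hα (by linarith) x))
    _ = (R / 2) ^ (-β) * (R / 2) ^ (finrank ℝ E - α) * K₁ + (R / 2) ^ (-α) * K₂ := by
        rw [integral_add hnear hfar, integral_const_mul, integral_const_mul,
          integral_sub_left_eq_self (fun z ↦ (ball (0 : E) (R / 2)).indicator (‖·‖ ^ (-α)) z),
          integral_indicator measurableSet_ball, setIntegral_ball_norm_rpow μ α (by positivity)]
        ring
    _ ≤ 2 ^ (α + β - finrank ℝ E) * R ^ (-α) * K₁ + 2 ^ α * R ^ (-α) * K₂ := by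
        rw [Real.div_rpow (by positivity) zero_le_two (-α), Real.rpow_neg zero_le_two,
          div_inv_eq_mul, mul_comm (R ^ (-α))]
        grw [half_rpow_neg_mul_half_rpow_le hR hβ.le]
    _ = (2 ^ (α + β - finrank ℝ E) * K₁ + 2 ^ α * K₂) * R ^ (-α) := by ring

end HaarMeasure

theorem sq_rpow_mul_rpow_neg_half (ε : ℝ) {a b : ℝ} (ha : 0 ≤ a) (hb : 0 ≤ b) :
    (a ^ (-(1 + ε / 2)) * b ^ (-(1 : ℝ) / 2)) ^ 2 = b⁻¹ * a ^ (-(2 + ε)) := by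
  rw [mul_pow, ← Real.rpow_mul_natCast ha, ← Real.rpow_mul_natCast hb, ← Real.rpow_neg_one b]
  ring_nf

/-- `∫ |x - x₁|^{-1} ⟨x₁⟩^{-2-ε} dx₁ ≤ C ⟨x⟩^{-1}` on `ℝ²`; equivalently,
the `L²(ℝ²)` norm of `x₁ ↦ ⟨x₁⟩^{-1-ε/2} |x - x₁|^{-1/2}` is at most `C' ⟨x⟩^{-1/2}`
uniformly in `x`. -/
theorem stmt_9 (ε : ℝ) (hε : 0 < ε) :
    ∃ C C' : ℝ, 0 < C ∧ 0 < C' ∧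
      (∀ x : EuclideanSpace ℝ (Fin 2),
        (∫ x₁ : EuclideanSpace ℝ (Fin 2),
            ‖x - x₁‖⁻¹ * Real.sqrt (1 + ‖x₁‖ ^ 2) ^ (-(2 + ε)))
          ≤ C / Real.sqrt (1 + ‖x‖ ^ 2)) ∧
      (∀ x : EuclideanSpace ℝ (Fin 2),
        (∫ x₁ : EuclideanSpace ℝ (Fin 2),
            (Real.sqrt (1 + ‖x₁‖ ^ 2) ^ (-(1 + ε / 2)) * ‖x - x₁‖ ^ (-(1:ℝ)/2)) ^ 2) ^ ((1:ℝ)/2)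
          ≤ C' * Real.sqrt (1 + ‖x‖ ^ 2) ^ (-(1:ℝ)/2)) := by
  obtain ⟨C, hC, hbound⟩ := exists_integral_norm_sub_rpow_mul_sqrt_rpow_le
    (volume : Measure (EuclideanSpace ℝ (Fin 2))) (α := 1) (β := 2 + ε) zero_le_one
    (by norm_num) (by norm_num; linarith)
  have hL1 (x : EuclideanSpace ℝ (Fin 2)) :
      ∫ x₁, ‖x - x₁‖⁻¹ * √(1 + ‖x₁‖ ^ 2) ^ (-(2 + ε)) ≤ C / √(1 + ‖x‖ ^ 2) := by
    simpa only [Real.rpow_neg_one, div_eq_mul_inv] using hbound x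
  refine ⟨C, √C, hC, Real.sqrt_pos.2 hC, hL1, fun x ↦ ?_⟩
  simp_rw [sq_rpow_mul_rpow_neg_half ε (Real.sqrt_nonneg _) (norm_nonneg _)]
  calc (∫ x₁, ‖x - x₁‖⁻¹ * √(1 + ‖x₁‖ ^ 2) ^ (-(2 + ε))) ^ ((1 : ℝ) / 2)
      ≤ (C / √(1 + ‖x‖ ^ 2)) ^ ((1 : ℝ) / 2) :=
        Real.rpow_le_rpow (integral_nonneg fun _ ↦ by positivity) (hL1 x) (by norm_num)
    _ = √C * √(1 + ‖x‖ ^ 2) ^ (-(1 : ℝ) / 2) := by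
        rw [Real.div_rpow hC.le (Real.sqrt_nonneg _), ← Real.sqrt_eq_rpow, neg_div,
          Real.rpow_neg (Real.sqrt_nonneg _), ← Real.sqrt_eq_rpow, div_eq_mul_inv]
end

section
/- The kernel K(x,y) = (⟨x⟩ ⟨y⟩)^{−1/2} · ⟨|x| − |y|⟩^{−2} on ℝ² × ℝ² is admissible: sup_{x ∈ ℝ²} ∫_{ℝ²} K(x,y) dy + sup_{y ∈ ℝ²} ∫_{ℝ²} K(x,y) dx < ∞. -/
open MeasureTheory Real

noncomputable def gfun (u : ℝ) : ℝ := (2:ℝ) ^ ((1:ℝ)/4) * ((1:ℝ) + u ^ 2) ^ (-(3:ℝ)/4)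

lemma gfun_integrable : Integrable gfun := by
  have h := integrable_rpow_neg_one_add_norm_sq (E := ℝ) (μ := volume) (r := 3/2) (by norm_num)
  have h2 : Integrable (fun u : ℝ => ((1:ℝ) + u ^ 2) ^ (-(3:ℝ)/4)) := by
    simpa [Real.norm_eq_abs, sq_abs, show -(3/2 : ℝ)/2 = -(3:ℝ)/4 by norm_num] using h
  exact h2.const_mul _

lemma pointwise_bound (R r : ℝ) (hR : 0 ≤ R) (hr : 0 ≤ r) :
    r * ((Real.sqrt (1 + R ^ 2) * Real.sqrt (1 + r ^ 2)) ^ (-(1:ℝ)/2) *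
      (1 + (R - r) ^ 2)⁻¹) ≤ gfun (r - R) := by
  set a : ℝ := 1 + R ^ 2 with ha
  set b : ℝ := 1 + r ^ 2 with hb
  set c : ℝ := 1 + (r - R) ^ 2 with hc
  have hap : (0:ℝ) < a := by positivity
  have hbp : (0:ℝ) < b := by positivity
  have hcp : (0:ℝ) < c := by positivity
  have hsq : Real.sqrt a * Real.sqrt b = (a * b) ^ ((1:ℝ)/2) := by
    rw [← Real.sqrt_mul hap.le, Real.sqrt_eq_rpow]
  have h1 : (Real.sqrt a * Real.sqrt b) ^ (-(1:ℝ)/2) = (a * b) ^ (-(1:ℝ)/4) := by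
    rw [hsq, ← Real.rpow_mul (by positivity)]
    norm_num
  have hRr : (R - r) ^ 2 = (r - R) ^ 2 := by ring
  rw [hRr, h1]
  -- key algebraic inequality : r ^ 4 ≤ 2 * a * b * c
  have h5 : r ^ 2 ≤ b := by nlinarith
  have h6 : b ≤ 2 * a * c := by nlinarith [sq_nonneg (r - 2*R), sq_nonneg (R*(r-R))]
  have hkey : r ^ 4 ≤ 2 * (a * b * c) := by nlinarith [mul_le_mul h5 h5 (sq_nonneg r) hbp.le, mul_le_mul_of_nonneg_left h6 hbp.le]
  have hrle : r ≤ (2 * (a * b * c)) ^ ((1:ℝ)/4) := by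
    have : r = (r ^ 4) ^ ((1:ℝ)/4) := by
      rw [← Real.rpow_natCast r 4, ← Real.rpow_mul hr]
      norm_num
    rw [this]
    exact Real.rpow_le_rpow (by positivity) hkey (by norm_num)
  have hexp : (2 * (a * b * c)) ^ ((1:ℝ)/4) = (2:ℝ) ^ ((1:ℝ)/4) * a ^ ((1:ℝ)/4) * b ^ ((1:ℝ)/4) * c ^ ((1:ℝ)/4) := by
    rw [Real.mul_rpow (by norm_num) (by positivity), Real.mul_rpow (by positivity) (by positivity),
      Real.mul_rpow (by positivity) (by positivity)]
    ring
  -- reduce goal to hrle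
  have habr : (a * b) ^ (-(1:ℝ)/4) = (a ^ ((1:ℝ)/4) * b ^ ((1:ℝ)/4))⁻¹ := by
    rw [show (-(1:ℝ)/4) = -((1:ℝ)/4) by norm_num, Real.rpow_neg (by positivity),
      Real.mul_rpow hap.le hbp.le]
  rw [habr]
  rw [show gfun (r - R) = (2:ℝ) ^ ((1:ℝ)/4) * c ^ (-(3:ℝ)/4) by rfl]
  have hcinv : (c : ℝ)⁻¹ = c ^ (-(3:ℝ)/4) * (c ^ ((1:ℝ)/4))⁻¹ := by
    rw [← Real.rpow_neg_one c, ← Real.rpow_neg hcp.le, ← Real.rpow_add hcp]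
    norm_num
  rw [hcinv]
  have h2 : r * ((a ^ ((1:ℝ)/4) * b ^ ((1:ℝ)/4))⁻¹ * (c ^ (-(3:ℝ)/4) * (c ^ ((1:ℝ)/4))⁻¹))
      = (r / (a ^ ((1:ℝ)/4) * b ^ ((1:ℝ)/4) * c ^ ((1:ℝ)/4))) * c ^ (-(3:ℝ)/4) := by
    field_simp
  rw [h2]
  have h3 : r / (a ^ ((1:ℝ)/4) * b ^ ((1:ℝ)/4) * c ^ ((1:ℝ)/4)) ≤ (2:ℝ) ^ ((1:ℝ)/4) := by
    rw [div_le_iff₀ (by positivity)]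
    calc r ≤ (2 * (a * b * c)) ^ ((1:ℝ)/4) := hrle
    _ = (2:ℝ) ^ ((1:ℝ)/4) * (a ^ ((1:ℝ)/4) * b ^ ((1:ℝ)/4) * c ^ ((1:ℝ)/4)) := by rw [hexp]; ring
  exact mul_le_mul_of_nonneg_right h3 (by positivity)

noncomputable def Cbound : ℝ :=
  2 * (volume (Metric.ball (0 : EuclideanSpace ℝ (Fin 2)) 1)).toReal * ∫ u : ℝ, gfun u

lemma aux_bound (R : ℝ) (hR : 0 ≤ R) :
    (∫ y : EuclideanSpace ℝ (Fin 2),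
        (Real.sqrt (1 + R ^ 2) * Real.sqrt (1 + ‖y‖ ^ 2)) ^ (-(1:ℝ)/2) *
          (1 + (R - ‖y‖) ^ 2)⁻¹) ≤ Cbound := by
  have hpolar := MeasureTheory.integral_fun_norm_addHaar
    (volume : Measure (EuclideanSpace ℝ (Fin 2)))
    (fun r : ℝ => (Real.sqrt (1 + R ^ 2) * Real.sqrt (1 + r ^ 2)) ^ (-(1:ℝ)/2) *
      (1 + (R - r) ^ 2)⁻¹)
  simp only [finrank_euclideanSpace_fin, smul_eq_mul, nsmul_eq_mul, Nat.cast_ofNat,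
    show (2:ℕ) - 1 = 1 from rfl, pow_one] at hpolar
  rw [hpolar]
  have hint : Integrable (fun r : ℝ => gfun (r - R)) := gfun_integrable.comp_sub_right R
  have hI : (∫ r in Set.Ioi (0:ℝ), r *
      ((Real.sqrt (1 + R ^ 2) * Real.sqrt (1 + r ^ 2)) ^ (-(1:ℝ)/2) * (1 + (R - r) ^ 2)⁻¹))
      ≤ ∫ u : ℝ, gfun u := by
    calc (∫ r in Set.Ioi (0:ℝ), r *
        ((Real.sqrt (1 + R ^ 2) * Real.sqrt (1 + r ^ 2)) ^ (-(1:ℝ)/2) * (1 + (R - r) ^ 2)⁻¹))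
        ≤ ∫ r in Set.Ioi (0:ℝ), gfun (r - R) := by
          refine integral_mono_of_nonneg ?_ hint.integrableOn ?_
          · refine (ae_restrict_iff' measurableSet_Ioi).2 (Filter.Eventually.of_forall
              fun r hr => ?_)
            exact mul_nonneg (le_of_lt hr) (by positivity)
          · refine (ae_restrict_iff' measurableSet_Ioi).2 (Filter.Eventually.of_forall
              fun r hr => pointwise_bound R r hR (le_of_lt hr))
      _ ≤ ∫ r : ℝ, gfun (r - R) := by
          refine setIntegral_le_integral hint (Filter.Eventually.of_forall fun r => ?_)
          unfold gfun; positivity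
      _ = ∫ u : ℝ, gfun u := integral_sub_right_eq_self gfun R
  have hV : (0:ℝ) ≤ (volume (Metric.ball (0 : EuclideanSpace ℝ (Fin 2)) 1)).toReal :=
    ENNReal.toReal_nonneg
  calc (2:ℝ) * ((volume (Metric.ball (0 : EuclideanSpace ℝ (Fin 2)) 1)).toReal *
      ∫ r in Set.Ioi (0:ℝ), r * ((Real.sqrt (1 + R ^ 2) * Real.sqrt (1 + r ^ 2)) ^ (-(1:ℝ)/2) *
        (1 + (R - r) ^ 2)⁻¹))
      ≤ (2:ℝ) * ((volume (Metric.ball (0 : EuclideanSpace ℝ (Fin 2)) 1)).toReal *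
        ∫ u : ℝ, gfun u) := by gcongr
    _ = Cbound := by rw [Cbound]; ring

/-- the kernel `K(x,y) = (⟨x⟩⟨y⟩)^{-1/2} ⟨|x|-|y|⟩^{-2}` on `ℝ² × ℝ²` is
admissible: `sup_x ∫ K(x,y) dy + sup_y ∫ K(x,y) dx < ∞`. -/
theorem stmt_11 :
    ∃ C : ℝ,
      (∀ x : EuclideanSpace ℝ (Fin 2),
        (∫ y : EuclideanSpace ℝ (Fin 2),
            (Real.sqrt (1 + ‖x‖ ^ 2) * Real.sqrt (1 + ‖y‖ ^ 2)) ^ (-(1:ℝ)/2) *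
              (1 + (‖x‖ - ‖y‖) ^ 2)⁻¹) ≤ C) ∧
      (∀ y : EuclideanSpace ℝ (Fin 2),
        (∫ x : EuclideanSpace ℝ (Fin 2),
            (Real.sqrt (1 + ‖x‖ ^ 2) * Real.sqrt (1 + ‖y‖ ^ 2)) ^ (-(1:ℝ)/2) *
              (1 + (‖x‖ - ‖y‖) ^ 2)⁻¹) ≤ C) := by
  refine ⟨Cbound, fun x => aux_bound ‖x‖ (norm_nonneg x), fun y => ?_⟩
  have hcomm : ∀ x : EuclideanSpace ℝ (Fin 2),
      (Real.sqrt (1 + ‖x‖ ^ 2) * Real.sqrt (1 + ‖y‖ ^ 2)) ^ (-(1:ℝ)/2) *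
        (1 + (‖x‖ - ‖y‖) ^ 2)⁻¹
      = (Real.sqrt (1 + ‖y‖ ^ 2) * Real.sqrt (1 + ‖x‖ ^ 2)) ^ (-(1:ℝ)/2) *
        (1 + (‖y‖ - ‖x‖) ^ 2)⁻¹ := by
    intro x
    rw [mul_comm (Real.sqrt (1 + ‖x‖ ^ 2))]
    congr 2
    ring
  simp_rw [hcomm]
  exact aux_bound ‖y‖ (norm_nonneg y)
end

section
/- For every N > 2 there is a constant C = C(N) such that for all a ≥ 0: ∫₀^∞ ∫₀^∞ ⟨r⟩ / ( √(rs) · ⟨r − s⟩² · ⟨s − a⟩^{N} ) dr ds ≤ C. -/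
/-!
Write `⟨r⟩ ≤ 1 + r` and `√r ≤ √s + √|r - s|`. Then `⟨r⟩ / (√r ⟨r - s⟩²)` is at most
`r^{-1/2} ⟨r - s⟩⁻² + √s ⟨r - s⟩⁻² + ⟨r - s⟩^{-3/2}`, whose `r`-integral is `O(1 + √s)`; dividing by
`√s` leaves `O(1 + s^{-1/2})`. The `s`-integral against `⟨s - a⟩^{-N}` is then bounded uniformly
in `a`, because `⟨·⟩^{-N}` is integrable and `∫₀^∞ x^{-1/2} φ ≤ 2 sup φ + ∫₀^∞ φ` for every `φ ≥ 0`.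
-/

open MeasureTheory Real Set

lemma integrable_one_add_sq_rpow {q : ℝ} (hq : q < -1 / 2) :
    Integrable fun x : ℝ => (1 + x ^ 2) ^ q := by
  have h := integrable_rpow_neg_one_add_norm_sq (E := ℝ) (μ := volume) (r := -2 * q)
    (by simp; linarith)
  simpa [Real.norm_eq_abs, sq_abs, show -(-2 * q) / 2 = q by ring] using h

lemma setIntegral_comp_sub_right_le {f : ℝ → ℝ} (hf : Integrable f) (hf0 : 0 ≤ f)
    (c : ℝ) (S : Set ℝ) : ∫ x in S, f (x - c) ≤ ∫ x, f x :=
  calc ∫ x in S, f (x - c) ≤ ∫ x, f (x - c) :=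
        setIntegral_le_integral (hf.comp_sub_right c) (.of_forall fun x => hf0 (x - c))
    _ = ∫ x, f x := integral_sub_right_eq_self f c

lemma integrable_indicator_Ioc_zero_one_inv_sqrt :
    Integrable ((Ioc 0 1).indicator fun x : ℝ => (√x)⁻¹) := by
  refine (integrable_indicator_iff measurableSet_Ioc).mpr ?_
  have h : IntegrableOn (fun x : ℝ => x ^ (-(1 / 2) : ℝ)) (Ioc 0 1) :=
    (intervalIntegrable_iff_integrableOn_Ioc_of_le zero_le_one).mp
      (intervalIntegral.intervalIntegrable_rpow' (by norm_num))
  refine h.congr_fun (fun x hx => ?_) measurableSet_Ioc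
  simp only [Real.rpow_neg hx.1.le, Real.sqrt_eq_rpow]

lemma integral_Ioc_zero_one_inv_sqrt : ∫ x in Ioc (0 : ℝ) 1, (√x)⁻¹ = 2 := by
  rw [setIntegral_congr_fun measurableSet_Ioc fun x hx => by
      rw [Real.sqrt_eq_rpow, ← Real.rpow_neg hx.1.le],
    ← intervalIntegral.integral_of_le zero_le_one, integral_rpow (by norm_num)]
  norm_num

lemma inv_sqrt_mul_le_indicator_add {φ : ℝ → ℝ} {M x : ℝ} (hx : 0 < x) (h0 : 0 ≤ φ x)
    (hM : φ x ≤ M) :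
    (√x)⁻¹ * φ x ≤ M * (Ioc 0 1).indicator (fun x => (√x)⁻¹) x + φ x := by
  by_cases hx1 : x ≤ 1
  · rw [indicator_of_mem (show x ∈ Ioc 0 1 from ⟨hx, hx1⟩)]
    have : 0 ≤ (√x)⁻¹ := by positivity
    nlinarith
  · rw [indicator_of_notMem fun h => hx1 h.2, mul_zero, zero_add]
    have : (√x)⁻¹ ≤ 1 := inv_le_one_of_one_le₀ (Real.one_le_sqrt.mpr (by linarith))
    nlinarith

lemma integrableOn_Ioi_inv_sqrt_mul {φ : ℝ → ℝ} {M : ℝ} (hφ : IntegrableOn φ (Ioi 0))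
    (h0 : ∀ x, 0 ≤ φ x) (hM : ∀ x, φ x ≤ M) :
    IntegrableOn (fun x => (√x)⁻¹ * φ x) (Ioi 0) := by
  have hind := integrable_indicator_Ioc_zero_one_inv_sqrt
  refine Integrable.mono' ((hind.integrableOn.const_mul M).add hφ)
    ((by fun_prop : Measurable fun x : ℝ => (√x)⁻¹).aestronglyMeasurable.mul
      hφ.aestronglyMeasurable) ?_
  refine (ae_restrict_iff' measurableSet_Ioi).mpr (.of_forall fun x hx => ?_)
  rw [Real.norm_of_nonneg (mul_nonneg (by positivity) (h0 x))]
  exact inv_sqrt_mul_le_indicator_add hx (h0 x) (hM x)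

lemma setIntegral_Ioi_inv_sqrt_mul_le {φ : ℝ → ℝ} {M : ℝ} (hφ : IntegrableOn φ (Ioi 0))
    (h0 : ∀ x, 0 ≤ φ x) (hM : ∀ x, φ x ≤ M) :
    ∫ x in Ioi 0, (√x)⁻¹ * φ x ≤ 2 * M + ∫ x in Ioi 0, φ x := by
  have hind := integrable_indicator_Ioc_zero_one_inv_sqrt
  calc ∫ x in Ioi 0, (√x)⁻¹ * φ x
      ≤ ∫ x in Ioi 0, M * (Ioc 0 1).indicator (fun x => (√x)⁻¹) x + φ x := by
        refine integral_mono_of_nonneg (.of_forall fun x => mul_nonneg (by positivity) (h0 x))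
          ((hind.integrableOn.const_mul M).add hφ) ?_
        exact (ae_restrict_iff' measurableSet_Ioi).mpr
          (.of_forall fun x hx => inv_sqrt_mul_le_indicator_add hx (h0 x) (hM x))
    _ = 2 * M + ∫ x in Ioi 0, φ x := by
        rw [integral_add (hind.integrableOn.const_mul M) hφ, integral_const_mul,
          setIntegral_indicator measurableSet_Ioc, inter_eq_right.mpr Ioc_subset_Ioi_self,
          integral_Ioc_zero_one_inv_sqrt, mul_comm]

lemma sqrt_le_sqrt_add_sqrt_abs_sub (r : ℝ) {s : ℝ} (hs : 0 ≤ s) : √r ≤ √s + √|r - s| := by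
  rw [Real.sqrt_le_left (by positivity), add_sq, Real.sq_sqrt hs, Real.sq_sqrt (abs_nonneg _)]
  nlinarith [le_abs_self (r - s), Real.sqrt_nonneg s, Real.sqrt_nonneg |r - s|]

lemma sqrt_abs_div_one_add_sq_le (x : ℝ) : √|x| / (1 + x ^ 2) ≤ (1 + x ^ 2) ^ (-3 / 4 : ℝ) := by
  have hB : 0 < 1 + x ^ 2 := by positivity
  have h : √|x| ≤ (1 + x ^ 2) ^ (1 / 4 : ℝ) := by
    rw [Real.sqrt_le_left (by positivity), ← Real.rpow_natCast, ← Real.rpow_mul hB.le]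
    rw [show (1 / 4 * (2 : ℕ) : ℝ) = 1 / 2 by norm_num, ← Real.sqrt_eq_rpow]
    exact Real.abs_le_sqrt (by linarith)
  calc √|x| / (1 + x ^ 2) ≤ (1 + x ^ 2) ^ (1 / 4 : ℝ) / (1 + x ^ 2) := by gcongr
    _ = (1 + x ^ 2) ^ (-3 / 4 : ℝ) := by
      rw [show (-3 / 4 : ℝ) = 1 / 4 - 1 by norm_num, Real.rpow_sub hB, Real.rpow_one]

lemma sqrt_one_add_sq_div_le {r s : ℝ} (hr : 0 < r) (hs : 0 ≤ s) :
    √(1 + r ^ 2) / (√r * (1 + (r - s) ^ 2)) ≤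
      (√r)⁻¹ * (1 + (r - s) ^ 2)⁻¹ + √s * (1 + (r - s) ^ 2)⁻¹ +
        (1 + (r - s) ^ 2) ^ (-3 / 4 : ℝ) := by
  have hR : 0 < √r := Real.sqrt_pos.mpr hr
  have hnum : √(1 + r ^ 2) ≤ 1 + √r * √s + √r * √|r - s| := by
    have h1 : √(1 + r ^ 2) ≤ 1 + r :=
      Real.sqrt_le_iff.mpr ⟨by linarith, by nlinarith⟩
    have h2 := mul_le_mul_of_nonneg_left (sqrt_le_sqrt_add_sqrt_abs_sub r hs) hR.le
    rw [Real.mul_self_sqrt hr.le] at h2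
    linarith
  calc √(1 + r ^ 2) / (√r * (1 + (r - s) ^ 2))
      ≤ (1 + √r * √s + √r * √|r - s|) / (√r * (1 + (r - s) ^ 2)) := by gcongr
    _ = (√r)⁻¹ * (1 + (r - s) ^ 2)⁻¹ + √s * (1 + (r - s) ^ 2)⁻¹ +
          √|r - s| / (1 + (r - s) ^ 2) := by field_simp
    _ ≤ _ := by grw [sqrt_abs_div_one_add_sq_le]

lemma integral_Ioi_sqrt_one_add_sq_div_le {s : ℝ} (hs : 0 ≤ s) :
    ∫ r in Ioi 0, √(1 + r ^ 2) / (√r * (1 + (r - s) ^ 2)) ≤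
      2 + π + (∫ x, (1 + x ^ 2) ^ (-3 / 4 : ℝ)) + π * √s := by
  have hψ : Integrable fun r : ℝ => (1 + (r - s) ^ 2)⁻¹ :=
    integrable_inv_one_add_sq.comp_sub_right s
  have hψ0 : ∀ r : ℝ, 0 ≤ (1 + (r - s) ^ 2)⁻¹ := fun r => by positivity
  have hψ1 : ∀ r : ℝ, (1 + (r - s) ^ 2)⁻¹ ≤ 1 := fun r => inv_le_one_of_one_le₀ (by nlinarith)
  have hψπ : ∫ r in Ioi 0, (1 + (r - s) ^ 2)⁻¹ ≤ π := by
    simpa [integral_univ_inv_one_add_sq] using setIntegral_comp_sub_right_le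
      integrable_inv_one_add_sq (fun x => by positivity) s (Ioi 0)
  have hχ : Integrable fun r : ℝ => (1 + (r - s) ^ 2) ^ (-3 / 4 : ℝ) :=
    (integrable_one_add_sq_rpow (by norm_num)).comp_sub_right s
  have h1 := integrableOn_Ioi_inv_sqrt_mul hψ.integrableOn hψ0 hψ1
  have h2 : IntegrableOn (fun r => √s * (1 + (r - s) ^ 2)⁻¹) (Ioi 0) :=
    hψ.integrableOn.const_mul _
  calc ∫ r in Ioi 0, √(1 + r ^ 2) / (√r * (1 + (r - s) ^ 2))
      ≤ ∫ r in Ioi 0, (√r)⁻¹ * (1 + (r - s) ^ 2)⁻¹ + √s * (1 + (r - s) ^ 2)⁻¹ +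
          (1 + (r - s) ^ 2) ^ (-3 / 4 : ℝ) :=
        integral_mono_of_nonneg (.of_forall fun r => by positivity)
          ((h1.fun_add h2).fun_add hχ.integrableOn) ((ae_restrict_iff' measurableSet_Ioi).mpr
            (.of_forall fun r hr => sqrt_one_add_sq_div_le hr hs))
    _ = (∫ r in Ioi 0, (√r)⁻¹ * (1 + (r - s) ^ 2)⁻¹) +
          √s * (∫ r in Ioi 0, (1 + (r - s) ^ 2)⁻¹) +
          ∫ r in Ioi 0, (1 + (r - s) ^ 2) ^ (-3 / 4 : ℝ) := by
        rw [integral_add (h1.fun_add h2) hχ.integrableOn, integral_add h1 h2, integral_const_mul]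
    _ ≤ (2 * 1 + π) + √s * π + ∫ x, (1 + x ^ 2) ^ (-3 / 4 : ℝ) := by
        gcongr
        · exact (setIntegral_Ioi_inv_sqrt_mul_le hψ.integrableOn hψ0 hψ1).trans (by grw [hψπ])
        · exact setIntegral_comp_sub_right_le (integrable_one_add_sq_rpow (by norm_num))
            (fun x => by positivity) s _
    _ = _ := by ring

lemma inv_sqrt_rpow {t : ℝ} (ht : 0 ≤ t) (N : ℝ) : (√t ^ N)⁻¹ = t ^ (-N / 2) := by
  rw [Real.sqrt_eq_rpow, ← Real.rpow_mul ht, ← Real.rpow_neg ht]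
  ring_nf

lemma integral_Ioi_kernel_le (N a : ℝ) {s : ℝ} (hs : 0 < s) :
    ∫ r in Ioi 0, √(1 + r ^ 2) / (√(r * s) * (1 + (r - s) ^ 2) * √(1 + (s - a) ^ 2) ^ N) ≤
      (2 + π + ∫ x, (1 + x ^ 2) ^ (-3 / 4 : ℝ)) * ((√s)⁻¹ * (1 + (s - a) ^ 2) ^ (-N / 2)) +
        π * (1 + (s - a) ^ 2) ^ (-N / 2) := by
  have hsplit : ∀ r, √(1 + r ^ 2) / (√(r * s) * (1 + (r - s) ^ 2) * √(1 + (s - a) ^ 2) ^ N) =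
      (√s * √(1 + (s - a) ^ 2) ^ N)⁻¹ * (√(1 + r ^ 2) / (√r * (1 + (r - s) ^ 2))) := fun r => by
    rw [Real.sqrt_mul' r hs.le]; simp only [div_eq_mul_inv, mul_inv]; ring
  simp only [hsplit, integral_const_mul]
  refine (mul_le_mul_of_nonneg_left (integral_Ioi_sqrt_one_add_sq_div_le hs.le)
    (by positivity)).trans_eq ?_
  rw [mul_inv, inv_sqrt_rpow (by positivity)]
  field_simp

/-- for `N > 2`,
`∫₀^∞ ∫₀^∞ ⟨r⟩ / (√(rs) ⟨r-s⟩² ⟨s-a⟩^N) dr ds ≤ C` uniformly in `a ≥ 0`. -/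
theorem stmt_12 (N : ℝ) (hN : 2 < N) :
    ∃ C : ℝ, 0 < C ∧ ∀ a : ℝ, 0 ≤ a →
      (∫ s in Set.Ioi (0:ℝ), ∫ r in Set.Ioi (0:ℝ),
          Real.sqrt (1 + r ^ 2) /
            (Real.sqrt (r * s) * (1 + (r - s) ^ 2) * Real.sqrt (1 + (s - a) ^ 2) ^ N))
        ≤ C := by
  set K := 2 + π + ∫ x, (1 + x ^ 2) ^ (-3 / 4 : ℝ)
  set I := ∫ x : ℝ, (1 + x ^ 2) ^ (-N / 2)
  have hI : Integrable fun x : ℝ => (1 + x ^ 2) ^ (-N / 2) :=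
    integrable_one_add_sq_rpow (by linarith)
  refine ⟨K * (2 + I) + π * I, by positivity, fun a _ => ?_⟩
  have hw := (hI.comp_sub_right a).integrableOn (s := Ioi 0)
  have hw0 : ∀ s : ℝ, 0 ≤ (1 + (s - a) ^ 2) ^ (-N / 2) := fun s => by positivity
  have hw1 : ∀ s : ℝ, (1 + (s - a) ^ 2) ^ (-N / 2) ≤ 1 := fun s =>
    Real.rpow_le_one_of_one_le_of_nonpos (by nlinarith) (by linarith)
  have hwI := setIntegral_comp_sub_right_le hI (fun x => by positivity) a (Ioi 0)
  have h1 := integrableOn_Ioi_inv_sqrt_mul hw hw0 hw1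
  calc _ ≤ ∫ s in Ioi 0, K * ((√s)⁻¹ * (1 + (s - a) ^ 2) ^ (-N / 2)) +
          π * (1 + (s - a) ^ 2) ^ (-N / 2) :=
        integral_mono_of_nonneg (.of_forall fun s => integral_nonneg fun r => by positivity)
          ((h1.const_mul K).fun_add (hw.const_mul π)) ((ae_restrict_iff' measurableSet_Ioi).mpr
            (.of_forall fun s hs => integral_Ioi_kernel_le N a hs))
    _ = K * (∫ s in Ioi 0, (√s)⁻¹ * (1 + (s - a) ^ 2) ^ (-N / 2)) +
          π * ∫ s in Ioi 0, (1 + (s - a) ^ 2) ^ (-N / 2) := by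
        rw [integral_add (h1.const_mul K) (hw.const_mul π), integral_const_mul, integral_const_mul]
    _ ≤ K * (2 * 1 + I) + π * I := by
        gcongr
        exact (setIntegral_Ioi_inv_sqrt_mul_le hw hw0 hw1).trans (by grw [hwI])
    _ = K * (2 + I) + π * I := by ring
end

section
/- There is a constant C such that for all s > 0: ∫₀^∞ ⟨r⟩ / ( √(rs) · ⟨r − s⟩² ) dr ≤ C (1 + s^{−1/2}). -/
open MeasureTheory Real

open Set

noncomputable def qfun (u : ℝ) : ℝ := Real.sqrt |u| / (1 + u ^ 2)

lemma qfun_nonneg (u : ℝ) : 0 ≤ qfun u := by unfold qfun; positivity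

lemma qfun_cont : Continuous qfun := by
  unfold qfun
  exact (continuous_abs.sqrt).div (by continuity) (fun x => by positivity)

lemma qfun_integrableOn_Ioi : IntegrableOn qfun (Ioi 1) := by
  apply Integrable.mono' (integrableOn_Ioi_rpow_of_lt (by norm_num : (-(3/2) : ℝ) < -1) one_pos)
  · exact qfun_cont.aestronglyMeasurable.restrict
  · filter_upwards [ae_restrict_mem measurableSet_Ioi] with u hu
    have hu1 : (1:ℝ) < u := hu
    have hu0 : (0:ℝ) < u := by linarith
    rw [Real.norm_eq_abs, abs_of_nonneg (qfun_nonneg u)]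
    have h1 : qfun u ≤ Real.sqrt u / u ^ 2 := by
      unfold qfun
      rw [abs_of_pos hu0]
      gcongr
      · nlinarith
    refine h1.trans_eq ?_
    rw [Real.sqrt_eq_rpow, ← Real.rpow_natCast u 2, ← Real.rpow_sub hu0]
    norm_num

lemma qfun_even (u : ℝ) : qfun (-u) = qfun u := by
  unfold qfun; rw [abs_neg, neg_pow]; ring_nf

lemma qfun_integrable : Integrable qfun := by
  have h2 : IntegrableOn qfun (Iio (-1)) := by
    rw [← integrable_indicator_iff measurableSet_Iio]
    have hG : Integrable ((Ioi (1:ℝ)).indicator qfun) :=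
      (integrable_indicator_iff measurableSet_Ioi).2 qfun_integrableOn_Ioi
    have h := (integrable_comp_mul_left_iff ((Ioi (1:ℝ)).indicator qfun)
      (by norm_num : (-1:ℝ) ≠ 0)).2 hG
    have heq : (fun x : ℝ => ((Ioi (1:ℝ)).indicator qfun) (-1 * x))
        = (Iio (-1:ℝ)).indicator qfun := by
      funext x
      simp only [indicator, mem_Ioi, mem_Iio, neg_one_mul]
      by_cases hx : x < -1
      · rw [if_pos (by linarith), if_pos hx, qfun_even]
      · rw [if_neg (by intro h'; apply hx; linarith), if_neg hx]
    rwa [heq] at h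
  have h3 : IntegrableOn qfun (Icc (-1 : ℝ) 1) := qfun_cont.integrableOn_Icc
  have h4 : IntegrableOn qfun (Iic (1:ℝ)) := by
    have := h2.union h3
    rwa [Iio_union_Icc_eq_Iic (by norm_num : (-1:ℝ) ≤ 1)] at this
  have h5 := h4.union qfun_integrableOn_Ioi
  rwa [Iic_union_Ioi, integrableOn_univ] at h5

noncomputable def Kq : ℝ := ∫ u : ℝ, qfun u

lemma Kq_nonneg : 0 ≤ Kq := integral_nonneg qfun_nonneg

/-- `∫₀^∞ ⟨r⟩ / (√(rs) ⟨r-s⟩²) dr ≤ C (1 + s^{-1/2})` uniformly in `s > 0`. -/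
theorem stmt_13 :
    ∃ C : ℝ, 0 < C ∧ ∀ s : ℝ, 0 < s →
      (∫ r in Set.Ioi (0:ℝ),
          Real.sqrt (1 + r ^ 2) / (Real.sqrt (r * s) * (1 + (r - s) ^ 2)))
        ≤ C * (1 + s ^ (-(1:ℝ)/2)) := by
  have hKq : 0 ≤ Kq := Kq_nonneg
  refine ⟨2 * Real.sqrt 2 + 2 * π + Kq + 1, by positivity, fun s hs => ?_⟩
  set C : ℝ := 2 * Real.sqrt 2 + 2 * π + Kq + 1 with hC
  set S : ℝ := Real.sqrt s with hSdef
  have hS : 0 < S := Real.sqrt_pos.2 hs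
  set f : ℝ → ℝ := fun r =>
    Real.sqrt (1 + r ^ 2) / (Real.sqrt (r * s) * (1 + (r - s) ^ 2)) with hfdef
  set g : ℝ → ℝ := fun r => if r ≤ 1 then Real.sqrt 2 / (Real.sqrt r * S)
    else (1 + Real.sqrt r) / (S * (1 + (r - s) ^ 2)) with hgdef
  set h : ℝ → ℝ := fun r =>
    (1 / S) * ((1 + S + Real.sqrt |r - s|) / (1 + (r - s) ^ 2)) with hhdef
  -- h is integrable with known integral
  have i1 : Integrable (fun r : ℝ => (1 + (r - s) ^ 2)⁻¹) :=
    integrable_inv_one_add_sq.comp_sub_right s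
  have i2 : Integrable (fun r : ℝ => qfun (r - s)) := qfun_integrable.comp_sub_right s
  have hh_eq : h = fun r => (1 / S) * ((1 + S) * (1 + (r - s) ^ 2)⁻¹ + qfun (r - s)) := by
    funext r; simp only [hhdef, qfun, add_div]; ring
  have hh_int : Integrable h := by
    rw [hh_eq]; exact ((i1.const_mul _).add i2).const_mul _
  have hh_nonneg : ∀ r, 0 ≤ h r := fun r => by
    simp only [hhdef]
    exact mul_nonneg (le_of_lt (by positivity)) (div_nonneg (by positivity) (by positivity))
  have hh_val : (∫ r, h r) = (1 / S) * ((1 + S) * π + Kq) := by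
    simp only [hh_eq]
    rw [integral_const_mul, integral_add (i1.const_mul _) i2, integral_const_mul,
      integral_sub_right_eq_self (fun x : ℝ => (1 + x ^ 2)⁻¹) s,
      integral_sub_right_eq_self qfun s, integral_univ_inv_one_add_sq]
    rfl
  -- pointwise bound f ≤ g on Ioi 0
  have hfg : ∀ r ∈ Set.Ioi (0:ℝ), f r ≤ g r := by
    intro r hr
    have hr0 : (0:ℝ) < r := hr
    have hsplitsqrt : Real.sqrt (r * s) = Real.sqrt r * S := Real.sqrt_mul hr0.le s
    have hsr : 0 < Real.sqrt r := Real.sqrt_pos.2 hr0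
    simp only [hfdef, hgdef, hsplitsqrt]
    by_cases h1 : r ≤ 1
    · rw [if_pos h1]
      have hnum : Real.sqrt (1 + r ^ 2) ≤ Real.sqrt 2 :=
        Real.sqrt_le_sqrt (by nlinarith)
      refine div_le_div₀ (Real.sqrt_nonneg 2) hnum (by positivity) ?_
      nlinarith [sq_nonneg (r - s), mul_pos hsr hS]
    · rw [if_neg h1]
      push_neg at h1
      have hsq1 : (1:ℝ) ≤ Real.sqrt r := by
        rw [show (1:ℝ) = Real.sqrt 1 from (Real.sqrt_one).symm]
        exact Real.sqrt_le_sqrt h1.le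
      have hb1 : Real.sqrt (1 + r ^ 2) ≤ 1 + r := by
        rw [show (1:ℝ) + r = Real.sqrt ((1 + r) ^ 2) from
          (Real.sqrt_sq (by linarith)).symm]
        exact Real.sqrt_le_sqrt (by nlinarith)
      have hb2 : 1 + r ≤ (1 + Real.sqrt r) * Real.sqrt r := by
        have := Real.mul_self_sqrt hr0.le
        nlinarith
      have hEq : ((1 + Real.sqrt r) * Real.sqrt r) / (Real.sqrt r * S * (1 + (r - s) ^ 2))
          = (1 + Real.sqrt r) / (S * (1 + (r - s) ^ 2)) := by
        rw [mul_comm (1 + Real.sqrt r) (Real.sqrt r), mul_assoc (Real.sqrt r) S _,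
          mul_div_mul_left _ _ hsr.ne']
      calc Real.sqrt (1 + r ^ 2) / (Real.sqrt r * S * (1 + (r - s) ^ 2))
          ≤ ((1 + Real.sqrt r) * Real.sqrt r) / (Real.sqrt r * S * (1 + (r - s) ^ 2)) :=
            div_le_div₀ (by positivity) (hb1.trans hb2) (by positivity) le_rfl
        _ = (1 + Real.sqrt r) / (S * (1 + (r - s) ^ 2)) := hEq
  -- pointwise bound g ≤ h on Ioi 1
  have hgh : ∀ r ∈ Set.Ioi (1:ℝ), g r ≤ h r := by
    intro r hr
    have hr1 : (1:ℝ) < r := hr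
    have hr0 : (0:ℝ) < r := by linarith
    have hkey : Real.sqrt r ≤ S + Real.sqrt |r - s| := by
      have h1 : r ≤ s + |r - s| := by
        have := le_abs_self (r - s); linarith
      have e1 : S ^ 2 = s := Real.sq_sqrt hs.le
      have e2 : (Real.sqrt |r - s|) ^ 2 = |r - s| := Real.sq_sqrt (abs_nonneg _)
      have h2 : s + |r - s| ≤ (S + Real.sqrt |r - s|) ^ 2 := by
        nlinarith [hS.le, Real.sqrt_nonneg |r - s|]
      calc Real.sqrt r ≤ Real.sqrt ((S + Real.sqrt |r - s|) ^ 2) :=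
            Real.sqrt_le_sqrt (h1.trans h2)
        _ = S + Real.sqrt |r - s| := Real.sqrt_sq (by positivity)
    have hEqh : h r = (1 + S + Real.sqrt |r - s|) / (S * (1 + (r - s) ^ 2)) := by
      simp only [hhdef]
      rw [div_mul_div_comm, one_mul]
    simp only [hgdef, if_neg (not_le.2 hr1)]
    rw [hEqh]
    refine div_le_div₀ (by positivity) (by linarith) (by positivity) le_rfl
  -- g is nonnegative
  have hg_nonneg : ∀ r, 0 ≤ g r := by
    intro r
    simp only [hgdef]
    split
    · positivity
    · exact div_nonneg (by positivity) (le_of_lt (by positivity))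
  -- integrability of g on the two pieces
  have base_rpow : IntegrableOn (fun r : ℝ => r ^ (-(1/2) : ℝ)) (Ioc 0 1) := by
    rw [← intervalIntegrable_iff_integrableOn_Ioc_of_le zero_le_one]
    exact intervalIntegral.intervalIntegrable_rpow' (by norm_num)
  have hEqOn1 : EqOn (fun r : ℝ => (Real.sqrt 2 / S) * r ^ (-(1/2) : ℝ)) g (Ioc 0 1) := by
    intro r hr
    have hr0 : (0:ℝ) < r := hr.1
    have hsr : 0 < Real.sqrt r := Real.sqrt_pos.2 hr0
    simp only [hgdef, if_pos hr.2]
    have hrp : r ^ (-(1/2) : ℝ) = (Real.sqrt r)⁻¹ := by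
      rw [Real.rpow_neg hr0.le, Real.sqrt_eq_rpow]
    rw [hrp]
    field_simp
  have hg1_int : IntegrableOn g (Ioc 0 1) :=
    IntegrableOn.congr_fun (base_rpow.const_mul (Real.sqrt 2 / S)) hEqOn1 measurableSet_Ioc
  have hg_meas : Measurable g := by
    refine Measurable.ite (measurableSet_le measurable_id measurable_const) ?_ ?_
    · exact measurable_const.div ((Real.continuous_sqrt.measurable).mul measurable_const)
    · exact (measurable_const.add Real.continuous_sqrt.measurable).div
        (measurable_const.mul ((measurable_const.add
          ((measurable_id.sub measurable_const).pow measurable_const))))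
  have hg2_int : IntegrableOn g (Ioi 1) := by
    apply Integrable.mono' hh_int.integrableOn hg_meas.aestronglyMeasurable.restrict
    filter_upwards [ae_restrict_mem measurableSet_Ioi] with r hr
    rw [Real.norm_eq_abs, abs_of_nonneg (hg_nonneg r)]
    exact hgh r hr
  have hg_int : IntegrableOn g (Ioi 0) := by
    rw [← Ioc_union_Ioi_eq_Ioi (zero_le_one : (0:ℝ) ≤ 1)]
    exact hg1_int.union hg2_int
  -- main chain
  have step1 : (∫ r in Set.Ioi (0:ℝ), f r) ≤ ∫ r in Set.Ioi (0:ℝ), g r := by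
    refine integral_mono_of_nonneg ?_ hg_int ?_
    · filter_upwards [ae_restrict_mem measurableSet_Ioi] with r hr
      have hr0 : (0:ℝ) < r := hr
      simp only [hfdef]
      positivity
    · filter_upwards [ae_restrict_mem measurableSet_Ioi] with r hr
      exact hfg r hr
  have hsplit : (∫ r in Set.Ioi (0:ℝ), g r)
      = (∫ r in Set.Ioc (0:ℝ) 1, g r) + ∫ r in Set.Ioi (1:ℝ), g r := by
    rw [← Ioc_union_Ioi_eq_Ioi (zero_le_one : (0:ℝ) ≤ 1)]
    exact setIntegral_union (Ioc_disjoint_Ioi le_rfl) measurableSet_Ioi hg1_int hg2_int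
  have hval1 : (∫ r in Set.Ioc (0:ℝ) 1, g r) = (Real.sqrt 2 / S) * 2 := by
    rw [← setIntegral_congr_fun measurableSet_Ioc hEqOn1, integral_const_mul]
    congr 1
    rw [← intervalIntegral.integral_of_le zero_le_one,
      integral_rpow (Or.inl (by norm_num))]
    rw [Real.one_rpow, Real.zero_rpow (by norm_num : (-(1/2:ℝ) + 1) ≠ 0)]
    norm_num
  have hval2 : (∫ r in Set.Ioi (1:ℝ), g r) ≤ (1 / S) * ((1 + S) * π + Kq) := by
    calc (∫ r in Set.Ioi (1:ℝ), g r) ≤ ∫ r in Set.Ioi (1:ℝ), h r := by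
          refine integral_mono_of_nonneg (ae_of_all _ hg_nonneg) hh_int.integrableOn ?_
          filter_upwards [ae_restrict_mem measurableSet_Ioi] with r hr
          exact hgh r hr
      _ ≤ ∫ r, h r := setIntegral_le_integral hh_int (ae_of_all _ hh_nonneg)
      _ = (1 / S) * ((1 + S) * π + Kq) := hh_val
  have hrw : s ^ (-(1:ℝ)/2) = 1 / S := by
    rw [show (-(1:ℝ))/2 = -(1/2) by norm_num, Real.rpow_neg hs.le, one_div, hSdef,
      Real.sqrt_eq_rpow]
    norm_num
  rw [hrw]
  calc (∫ r in Set.Ioi (0:ℝ), f r)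
      ≤ ∫ r in Set.Ioi (0:ℝ), g r := step1
    _ = (∫ r in Set.Ioc (0:ℝ) 1, g r) + ∫ r in Set.Ioi (1:ℝ), g r := hsplit
    _ ≤ (Real.sqrt 2 / S) * 2 + (1 / S) * ((1 + S) * π + Kq) := by
        rw [hval1]; exact add_le_add le_rfl hval2
    _ = (2 * Real.sqrt 2 + π + Kq) / S + π := by
        field_simp
        ring
    _ ≤ C / S + C := by
        refine add_le_add ((div_le_div_iff_of_pos_right hS).2 ?_) ?_
        · rw [hC]; nlinarith [Real.pi_pos]
        · rw [hC]; nlinarith [Real.sqrt_nonneg 2, Real.pi_pos]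
    _ = C * (1 + 1 / S) := by ring
end

section
/- Let λ₁ ∈ (0, 1/2] and let χ : ℝ → [0,1] be a smooth function supported in [0, 2λ₁] with bounded derivatives of all orders. Let ω₁, ω₂ : (0, ∞) → ℂ be smooth functions with ω_i(z) = 0 for z ≤ 1/2 and satisfying |ω_i^{(j)}(z)| ≤ z^{−1/2−j} for j = 0, 1, 2, 3 and all z > 0 (i = 1, 2). Then for every ε ∈ (0, 1) there exists a constant C (depending on χ and ε) such that for all r, s ≥ 1: |∫₀^∞ e^{iλ(r−s)} ω₁(λr) ω₂(λs) λ² χ(λ) dλ| ≤ C / ( √(rs) · ⟨r − s⟩^{2−ε} ). -/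
/-!
With `μ = r - s` the integral is `∫ e^{iλμ} F(λ) dλ`, where `F(λ) = ω₁(λr) ω₂(λs) λ² χ(λ)`
vanishes for `λ > 1` and obeys the symbol bounds `|F⁽ʲ⁾(λ)| ≲ λ^{1-j} / √(rs)`, `j ≤ 2`, on
`(0, 2]`: each `ωᵢ(λ ·)` contributes order `-1/2`, `λ²` order `2`, and Leibniz's rule adds orders.
If `⟨μ⟩ ≤ 2` the trivial bound suffices. Otherwise split at `λ₀ = 1/⟨μ⟩`: the part over
`(0, λ₀)` is `O(λ₀²)`, and on `(λ₀, 2)` two integrations by parts leave boundary terms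
`O(λ₀/|μ| + μ⁻²)` and the remainder `μ⁻² ∫_{λ₀}^2 dλ/λ = μ⁻² log (2⟨μ⟩)`. The logarithmic loss
`log ⟨μ⟩ ≤ ⟨μ⟩^ε / ε` is what costs the `ε`.
-/

open MeasureTheory Real Set Filter Topology Complex

structure IsSymbol {𝔸 : Type*} [NormedRing 𝔸] [NormedAlgebra ℝ 𝔸]
    (g : ℝ → 𝔸) (α K : ℝ) : Prop where
  contDiffOn : ContDiffOn ℝ 2 g (Ioi 0)
  norm_le : ∀ t ∈ Ioc (0 : ℝ) 2, ‖g t‖ ≤ K * t ^ α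
  norm_deriv_le : ∀ t ∈ Ioc (0 : ℝ) 2, ‖deriv g t‖ ≤ K * t ^ (α - 1)
  norm_deriv_deriv_le : ∀ t ∈ Ioc (0 : ℝ) 2, ‖deriv (deriv g) t‖ ≤ K * t ^ (α - 2)

namespace IsSymbol

variable {𝔸 : Type*} [NormedRing 𝔸] [NormedAlgebra ℝ 𝔸] {g u v : ℝ → 𝔸} {α β K L : ℝ}

theorem nonneg (hg : IsSymbol g α K) : 0 ≤ K := by
  simpa using (norm_nonneg _).trans (hg.norm_le 1 ⟨one_pos, one_le_two⟩)

theorem differentiableAt (hg : IsSymbol g α K) {t : ℝ} (ht : 0 < t) :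
    DifferentiableAt ℝ g t :=
  (hg.contDiffOn.differentiableOn two_ne_zero).differentiableAt (Ioi_mem_nhds ht)

theorem differentiableAt_deriv (hg : IsSymbol g α K) {t : ℝ} (ht : 0 < t) :
    DifferentiableAt ℝ (deriv g) t :=
  ((hg.contDiffOn.deriv_of_isOpen isOpen_Ioi (m := 1) le_rfl).differentiableOn
    one_ne_zero).differentiableAt (Ioi_mem_nhds ht)

theorem continuousOn_deriv_deriv (hg : IsSymbol g α K) :
    ContinuousOn (deriv (deriv g)) (Ioi 0) :=
  ((hg.contDiffOn.deriv_of_isOpen isOpen_Ioi (m := 1) le_rfl).deriv_of_isOpen isOpen_Ioi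
    (m := 0) le_rfl).continuousOn

theorem mul (hu : IsSymbol u α K) (hv : IsSymbol v β L) :
    IsSymbol (fun t => u t * v t) (α + β) (4 * K * L) := by
  have hd : ∀ t > 0, deriv (fun t => u t * v t) t = deriv u t * v t + u t * deriv v t :=
    fun t ht => deriv_fun_mul (hu.differentiableAt ht) (hv.differentiableAt ht)
  have hdd : ∀ t > 0, deriv (deriv fun t => u t * v t) t =
      deriv (deriv u) t * v t + deriv u t * deriv v t +
        (deriv u t * deriv v t + u t * deriv (deriv v) t) := fun t ht =>
    (((hu.differentiableAt_deriv ht).hasDerivAt.mul (hv.differentiableAt ht).hasDerivAt).add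
      ((hu.differentiableAt ht).hasDerivAt.mul (hv.differentiableAt_deriv ht).hasDerivAt)
      |>.congr_of_eventuallyEq (eventually_of_mem (Ioi_mem_nhds ht) hd)).deriv
  have hKL : 0 ≤ K * L := mul_nonneg hu.nonneg hv.nonneg
  refine ⟨hu.contDiffOn.mul hv.contDiffOn, fun t ht => ?_, fun t ht => ?_, fun t ht => ?_⟩
  all_goals
    have hpow : ∀ {a b c : ℝ}, a + b = c → K * t ^ a * (L * t ^ b) = K * L * t ^ c :=
      fun h => by rw [← h, rpow_add ht.1]; ring
    have bound : ∀ {x y : 𝔸} {a b c : ℝ}, ‖x‖ ≤ K * t ^ a → ‖y‖ ≤ L * t ^ b → a + b = c →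
        ‖x * y‖ ≤ K * L * t ^ c := fun hx hy h => hpow h ▸
      (norm_mul_le _ _).trans (mul_le_mul hx hy (norm_nonneg _) ((norm_nonneg _).trans hx))
    have htc : ∀ c : ℝ, 0 ≤ K * L * t ^ c := fun c => mul_nonneg hKL (rpow_nonneg ht.1.le c)
  · have := bound (hu.norm_le t ht) (hv.norm_le t ht) rfl
    linarith [htc (α + β)]
  · rw [hd t ht.1]
    have h₁ := bound (hu.norm_deriv_le t ht) (hv.norm_le t ht) (by ring : α - 1 + β = α + β - 1)
    have h₂ := bound (hu.norm_le t ht) (hv.norm_deriv_le t ht) (by ring : α + (β - 1) = α + β - 1)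
    linarith [norm_add_le (deriv u t * v t) (u t * deriv v t), htc (α + β - 1)]
  · rw [hdd t ht.1]
    have h₁ := bound (hu.norm_deriv_deriv_le t ht) (hv.norm_le t ht)
      (by ring : α - 2 + β = α + β - 2)
    have h₂ := bound (hu.norm_deriv_le t ht) (hv.norm_deriv_le t ht)
      (by ring : α - 1 + (β - 1) = α + β - 2)
    have h₃ := bound (hu.norm_le t ht) (hv.norm_deriv_deriv_le t ht)
      (by ring : α + (β - 2) = α + β - 2)
    linarith [norm_add_le (deriv (deriv u) t * v t + deriv u t * deriv v t)
      (deriv u t * deriv v t + u t * deriv (deriv v) t),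
      norm_add_le (deriv (deriv u) t * v t) (deriv u t * deriv v t),
      norm_add_le (deriv u t * deriv v t) (u t * deriv (deriv v) t)]

theorem ofReal {h : ℝ → ℝ} (hh : IsSymbol h α K) : IsSymbol (fun t => (h t : ℂ)) α K := by
  have hd : ∀ t > 0, deriv (fun t => (h t : ℂ)) t = deriv h t := fun t ht =>
    (hh.differentiableAt ht).hasDerivAt.ofReal_comp.deriv
  have hdd : ∀ t > 0, deriv (deriv fun t => (h t : ℂ)) t = deriv (deriv h) t := fun t ht =>
    ((hh.differentiableAt_deriv ht).hasDerivAt.ofReal_comp.congr_of_eventuallyEq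
      (eventually_of_mem (Ioi_mem_nhds ht) hd)).deriv
  refine ⟨Complex.ofRealCLM.contDiff.comp_contDiffOn hh.contDiffOn, fun t ht => ?_, fun t ht => ?_,
    fun t ht => ?_⟩
  · simpa using hh.norm_le t ht
  · simpa [hd t ht.1] using hh.norm_deriv_le t ht
  · simpa [hdd t ht.1] using hh.norm_deriv_deriv_le t ht

end IsSymbol

theorem isSymbol_comp_mul_right {𝔸 : Type*} [NormedRing 𝔸] [NormedAlgebra ℝ 𝔸]
    {ω : ℝ → 𝔸} {α r : ℝ} (hr : 0 < r) (hω : ContDiffOn ℝ 2 ω (Ioi 0))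
    (hω_le : ∀ z, 0 < z → ∀ j : ℕ, j ≤ 2 → ‖iteratedDeriv j ω z‖ ≤ z ^ (α - j)) :
    IsSymbol (fun t => ω (t * r)) α (r ^ α) := by
  have hfun : (fun t => ω (t * r)) = fun t => ω (r * t) := by simp_rw [mul_comm]
  have hiter : ∀ j : ℕ, iteratedDeriv j (fun t => ω (r * t)) =
      fun t => r ^ j • iteratedDeriv j ω (r * t) := by
    intro j
    induction j with
    | zero => simp
    | succ j ih =>
      ext t
      rw [iteratedDeriv_succ, ih, deriv_fun_const_smul_field, deriv_comp_mul_left,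
        iteratedDeriv_succ, smul_smul, pow_succ]
  have hbound : ∀ j : ℕ, j ≤ 2 → ∀ t ∈ Ioc (0 : ℝ) 2,
      ‖iteratedDeriv j (fun t => ω (t * r)) t‖ ≤ r ^ α * t ^ (α - j) := by
    intro j hj t ht
    rw [hfun, hiter, norm_smul, norm_pow, norm_of_nonneg hr.le]
    calc r ^ j * ‖iteratedDeriv j ω (r * t)‖ ≤ r ^ j * (r * t) ^ (α - j) :=
          mul_le_mul_of_nonneg_left (hω_le _ (mul_pos hr ht.1) j hj) (by positivity)
      _ = r ^ α * t ^ (α - j) := by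
          rw [mul_rpow hr.le ht.1.le, ← mul_assoc, ← rpow_natCast, ← rpow_add hr]
          ring_nf
  refine ⟨hω.comp (contDiffOn_id.mul contDiffOn_const) fun t ht => mul_pos ht hr,
    fun t ht => ?_, fun t ht => ?_, fun t ht => ?_⟩
  · simpa using hbound 0 (by norm_num) t ht
  · simpa using hbound 1 (by norm_num) t ht
  · simpa [iteratedDeriv_succ] using hbound 2 le_rfl t ht

theorem isSymbol_sq : IsSymbol (fun t : ℝ => t ^ 2) 2 2 := by
  have hd : deriv (fun t : ℝ => t ^ 2) = fun t => 2 * t := funext fun t => by simp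
  refine ⟨contDiffOn_id.pow 2, fun t ht => ?_, fun t ht => ?_, fun t ht => ?_⟩
  · rw [rpow_two, norm_of_nonneg (by positivity)]
    nlinarith [sq_nonneg t]
  · rw [hd, norm_of_nonneg (by linarith [ht.1])]
    norm_num
  · rw [hd]
    norm_num

theorem exists_isSymbol_zero_of_bounded {χ : ℝ → ℝ} (hχ : ContDiff ℝ 2 χ)
    (hχ_le : ∀ n : ℕ, ∃ B : ℝ, ∀ t, |iteratedDeriv n χ t| ≤ B) : ∃ K, 0 < K ∧ IsSymbol χ 0 K := by
  obtain ⟨B₀, hB₀⟩ := hχ_le 0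
  obtain ⟨B₁, hB₁⟩ := hχ_le 1
  obtain ⟨B₂, hB₂⟩ := hχ_le 2
  have hB₀0 : 0 ≤ B₀ := (abs_nonneg _).trans (hB₀ 0)
  have hB₁0 : 0 ≤ B₁ := (abs_nonneg _).trans (hB₁ 0)
  have hB₂0 : 0 ≤ B₂ := (abs_nonneg _).trans (hB₂ 0)
  refine ⟨B₀ + 2 * B₁ + 4 * B₂ + 1, by positivity,
    hχ.contDiffOn, fun t ht => ?_, fun t ht => ?_, fun t ht => ?_⟩
  · have := hB₀ t
    simp only [iteratedDeriv_zero] at this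
    rw [rpow_zero, mul_one, norm_eq_abs]
    linarith
  · have := hB₁ t
    simp only [iteratedDeriv_one] at this
    rw [zero_sub, rpow_neg_one, norm_eq_abs, ← div_eq_mul_inv, le_div_iff₀ ht.1]
    nlinarith [mul_le_mul this ht.2 ht.1.le hB₁0]
  · have := hB₂ t
    rw [iteratedDeriv_succ, iteratedDeriv_one] at this
    rw [zero_sub, rpow_neg ht.1.le, rpow_two, norm_eq_abs, ← div_eq_mul_inv,
      le_div_iff₀ (pow_pos ht.1 2)]
    have ht4 : t ^ 2 ≤ 4 := by nlinarith [ht.1, ht.2]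
    nlinarith [mul_le_mul this ht4 (by positivity) hB₂0]

theorem norm_integral_cexp_mul_le_of_norm_le {F : ℝ → ℂ} {K a μ : ℝ} (ha : 0 ≤ a)
    (hF : ∀ t ∈ Ioc 0 a, ‖F t‖ ≤ K * t) :
    ‖∫ t in (0 : ℝ)..a, cexp (I * ↑(t * μ)) * F t‖ ≤ K * a ^ 2 / 2 := by
  have hle : ∀ᵐ t, t ∈ Ioc 0 a → ‖cexp (I * ↑(t * μ)) * F t‖ ≤ K * t := ae_of_all _ fun t ht => by
    rw [norm_mul, norm_exp_I_mul_ofReal, one_mul]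
    exact hF t ht
  calc ‖∫ t in (0 : ℝ)..a, cexp (I * ↑(t * μ)) * F t‖ ≤ ∫ t in (0 : ℝ)..a, K * t :=
        intervalIntegral.norm_integral_le_of_norm_le ha hle
          ((continuous_const.mul continuous_id).intervalIntegrable _ _)
    _ = K * a ^ 2 / 2 := by
      rw [intervalIntegral.integral_const_mul, integral_id]
      ring

theorem norm_integral_cexp_mul_le_of_hasDerivAt {G G' : ℝ → ℂ} {a b μ : ℝ} (hab : a ≤ b)
    (hμ : μ ≠ 0) (hG : ∀ t ∈ Icc a b, HasDerivAt G (G' t) t)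
    (hG' : IntervalIntegrable G' volume a b) (hGb : G b = 0) :
    ‖∫ t in a..b, cexp (I * ↑(t * μ)) * G t‖ ≤
      (‖G a‖ + ‖∫ t in a..b, cexp (I * ↑(t * μ)) * G' t‖) / |μ| := by
  set e : ℝ → ℂ := fun t => cexp (I * ↑(t * μ))
  have hc : I * μ ≠ 0 := mul_ne_zero I_ne_zero (ofReal_ne_zero.mpr hμ)
  have he : ∀ t, HasDerivAt (fun t => e t / (I * μ)) (e t) t := fun t => by
    have h := ((((hasDerivAt_id t).mul_const μ).ofReal_comp).const_mul I).cexp.div_const (I * μ)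
    simpa [e, mul_div_assoc, div_self hc] using h
  have hibp := intervalIntegral.integral_mul_deriv_eq_deriv_mul
    (fun t ht => hG t (uIcc_of_le hab ▸ ht)) (fun t _ => he t) hG'
    ((by fun_prop : Continuous e).intervalIntegrable a b)
  have heq : ∫ t in a..b, e t * G t = -(G a * e a + ∫ t in a..b, e t * G' t) / (I * μ) := by
    simp_rw [mul_comm (e _) (G _), hibp, hGb, mul_div_assoc', intervalIntegral.integral_div,
      mul_comm (G' _) (e _)]
    ring
  rw [heq, norm_div, norm_neg, norm_mul I, norm_I, one_mul, norm_real, norm_eq_abs]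
  gcongr
  refine (norm_add_le _ _).trans ?_
  rw [norm_mul, norm_exp_I_mul_ofReal, mul_one]

namespace IsSymbol

variable {F : ℝ → ℂ} {K : ℝ}

theorem intervalIntegrable_cexp_mul (hF : IsSymbol F 1 K) (μ : ℝ) :
    IntervalIntegrable (fun t => cexp (I * ↑(t * μ)) * F t) volume 0 2 := by
  rw [intervalIntegrable_iff_integrableOn_Ioc_of_le zero_le_two]
  refine Integrable.mono' ((continuous_const.mul continuous_id).integrableOn_Ioc (a := 0) (b := 2)
    (f := fun t => K * t)) ?_ (ae_restrict_of_forall_mem measurableSet_Ioc fun t ht => ?_)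
  · exact (((by fun_prop : Continuous fun t : ℝ => cexp (I * ↑(t * μ))).continuousOn.mul
      hF.contDiffOn.continuousOn).mono Ioc_subset_Ioi_self).aestronglyMeasurable measurableSet_Ioc
  · rw [norm_mul, norm_exp_I_mul_ofReal, one_mul]
    simpa using hF.norm_le t ht

theorem norm_integral_cexp_mul_le_of_ne_zero (hF : IsSymbol F 1 K)
    (hF_zero : ∀ t, 1 < t → F t = 0) {a μ : ℝ} (ha : 0 < a) (ha2 : a ≤ 2) (hμ : μ ≠ 0) :
    ‖∫ t in a..2, cexp (I * ↑(t * μ)) * F t‖ ≤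
      (K * a + (K + K * Real.log (2 / a)) / |μ|) / |μ| := by
  have hsub : Icc a 2 ⊆ Ioi 0 := fun t ht => ha.trans_le ht.1
  have hF'2 : deriv F 2 = 0 := by
    have hev : F =ᶠ[𝓝 2] fun _ => 0 := eventually_of_mem (Ioi_mem_nhds one_lt_two) hF_zero
    rw [hev.deriv_eq, deriv_const]
  have hibp₁ := norm_integral_cexp_mul_le_of_hasDerivAt ha2 hμ
    (fun t ht => (hF.differentiableAt (hsub ht)).hasDerivAt)
    (ContinuousOn.intervalIntegrable_of_Icc ha2 fun t ht =>
      (hF.differentiableAt_deriv (hsub ht)).continuousAt.continuousWithinAt)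
    (hF_zero 2 one_lt_two)
  have hibp₂ := norm_integral_cexp_mul_le_of_hasDerivAt ha2 hμ
    (fun t ht => (hF.differentiableAt_deriv (hsub ht)).hasDerivAt)
    ((hF.continuousOn_deriv_deriv.mono hsub).intervalIntegrable_of_Icc ha2) hF'2
  have hremainder :
      ‖∫ t in a..2, cexp (I * ↑(t * μ)) * deriv (deriv F) t‖ ≤ K * Real.log (2 / a) := by
    calc _ ≤ ∫ t in a..2, K * t⁻¹ := by
          refine intervalIntegral.norm_integral_le_of_norm_le ha2 (ae_of_all _ fun t ht => ?_)
            ((continuousOn_const.mul (continuousOn_inv₀.mono fun t ht =>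
              (hsub ht).ne')).intervalIntegrable_of_Icc ha2)
          rw [norm_mul, norm_exp_I_mul_ofReal, one_mul, ← rpow_neg_one]
          convert hF.norm_deriv_deriv_le t ⟨ha.trans ht.1, ht.2⟩ using 3
          norm_num
      _ = K * Real.log (2 / a) := by
          rw [intervalIntegral.integral_const_mul, integral_inv_of_pos ha two_pos]
  have hFa : ‖F a‖ ≤ K * a := by simpa using hF.norm_le a ⟨ha, ha2⟩
  have hF'a : ‖deriv F a‖ ≤ K := by simpa using hF.norm_deriv_le a ⟨ha, ha2⟩
  refine hibp₁.trans ?_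
  gcongr
  exact hibp₂.trans (by gcongr)

theorem norm_integral_cexp_mul_le_of_two_lt (hF : IsSymbol F 1 K)
    (hF_zero : ∀ t, 1 < t → F t = 0) {ε μ m : ℝ} (hε : 0 < ε) (hm : m ^ 2 = 1 + μ ^ 2)
    (hm2 : 2 < m) :
    ‖∫ t in (0 : ℝ)..2, cexp (I * ↑(t * μ)) * F t‖ ≤ K * (11 + 4 / ε) * (m ^ ε / m ^ 2) := by
  have hm0 : 0 < m := two_pos.trans hm2
  have hK := hF.nonneg
  set t₀ := m⁻¹
  have ht₀ : 0 < t₀ := inv_pos.mpr hm0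
  have ht₀2 : t₀ ≤ 2 := (inv_le_one_of_one_le₀ (one_le_two.trans hm2.le)).trans one_le_two
  have hμ : m / 2 ≤ |μ| := (sq_le_sq₀ (by positivity) (abs_nonneg μ)).mp (by rw [sq_abs]; nlinarith)
  have hlog : Real.log (2 / t₀) ≤ 1 + m ^ ε / ε := by
    rw [div_inv_eq_mul, log_mul two_ne_zero hm0.ne']
    linarith [log_two_lt_d9, log_le_rpow_div hm0.le hε]
  have hfi := hF.intervalIntegrable_cexp_mul μ
  rw [← intervalIntegral.integral_add_adjacent_intervals (b := t₀)
    (hfi.mono_set (uIcc_subset_uIcc left_mem_uIcc (by simp [uIcc_of_le, ht₀.le, ht₀2])))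
    (hfi.mono_set (uIcc_subset_uIcc (by simp [uIcc_of_le, ht₀.le, ht₀2]) right_mem_uIcc))]
  calc _ ≤ K * t₀ ^ 2 / 2 + (K * t₀ + (K + K * Real.log (2 / t₀)) / |μ|) / |μ| :=
        (norm_add_le _ _).trans (add_le_add
          (norm_integral_cexp_mul_le_of_norm_le ht₀.le fun t ht => by
            simpa using hF.norm_le t ⟨ht.1, ht.2.trans ht₀2⟩)
          (hF.norm_integral_cexp_mul_le_of_ne_zero hF_zero ht₀ ht₀2
            (abs_pos.mp (by linarith))))
    _ ≤ K * t₀ ^ 2 / 2 + (K * t₀ + (K + K * (1 + m ^ ε / ε)) / (m / 2)) / (m / 2) := by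
        gcongr K * t₀ ^ 2 / 2 + (K * t₀ + (K + K * ?_) / ?_) / ?_
    _ = K * (21 / 2 + 4 * m ^ ε / ε) / m ^ 2 := by
        simp only [t₀]
        field_simp
        ring
    _ ≤ K * ((11 + 4 / ε) * m ^ ε) / m ^ 2 := by
        have hmε : 1 ≤ m ^ ε := one_le_rpow (one_le_two.trans hm2.le) hε.le
        gcongr
        rw [add_mul, mul_comm_div, mul_div_assoc]
        linarith
    _ = K * (11 + 4 / ε) * (m ^ ε / m ^ 2) := by ring

theorem norm_integral_cexp_mul_le (hF : IsSymbol F 1 K) (hF_zero : ∀ t, 1 < t → F t = 0)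
    {ε : ℝ} (hε : 0 < ε) (μ : ℝ) :
    ‖∫ t in Ioi 0, cexp (I * ↑(t * μ)) * F t‖ ≤ K * (11 + 4 / ε) / √(1 + μ ^ 2) ^ (2 - ε) := by
  set m := √(1 + μ ^ 2)
  have hm : m ^ 2 = 1 + μ ^ 2 := sq_sqrt (by positivity)
  have hm1 : 1 ≤ m := one_le_sqrt.mpr (by nlinarith)
  have hIoi : ∫ t in Ioi 0, cexp (I * ↑(t * μ)) * F t =
      ∫ t in (0 : ℝ)..2, cexp (I * ↑(t * μ)) * F t := by
    rw [intervalIntegral.integral_of_le zero_le_two,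
      setIntegral_eq_of_subset_of_forall_sdiff_eq_zero measurableSet_Ioi Ioc_subset_Ioi_self]
    rintro t ⟨ht0, ht2⟩
    simp only [mem_Ioi, mem_Ioc, not_and, not_le] at ht0 ht2
    simp [hF_zero t (by linarith [ht2 ht0])]
  rw [hIoi, rpow_sub (one_pos.trans_le hm1), rpow_two, div_div_eq_mul_div, mul_div_assoc]
  rcases le_or_gt m 2 with hm2 | hm2
  · have hquarter : 1 / 4 ≤ m ^ ε / m ^ 2 := by
      rw [div_le_div_iff₀ (by norm_num) (by positivity)]
      nlinarith [one_le_rpow hm1 hε.le]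
    have h2 : 2 ≤ (11 + 4 / ε) * (m ^ ε / m ^ 2) := by nlinarith [div_pos four_pos hε]
    calc _ ≤ K * 2 ^ 2 / 2 := norm_integral_cexp_mul_le_of_norm_le zero_le_two fun t ht => by
          simpa using hF.norm_le t ht
      _ ≤ K * (11 + 4 / ε) * (m ^ ε / m ^ 2) := by nlinarith [hF.nonneg]
  · exact hF.norm_integral_cexp_mul_le_of_two_lt hF_zero hε hm hm2

end IsSymbol

theorem stmt_14_general (lam₁ : ℝ) (hlam₁ : lam₁ ∈ Set.Ioc (0:ℝ) (1/2))
    (χ : ℝ → ℝ) (hχ : ContDiff ℝ (⊤ : ℕ∞) χ)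
    (hχsupp : ∀ t : ℝ, t ∉ Set.Icc (0:ℝ) (2 * lam₁) → χ t = 0)
    (hχbdd : ∀ n : ℕ, ∃ B : ℝ, ∀ t : ℝ, |iteratedDeriv n χ t| ≤ B)
    (ω₁ ω₂ : ℝ → ℂ)
    (hω₁ : ContDiffOn ℝ (⊤ : ℕ∞) ω₁ (Set.Ioi 0))
    (hω₂ : ContDiffOn ℝ (⊤ : ℕ∞) ω₂ (Set.Ioi 0))
    (hω₁b : ∀ z : ℝ, 0 < z → ∀ j : ℕ, j ≤ 3 →
      ‖iteratedDeriv j ω₁ z‖ ≤ z ^ (-(1:ℝ)/2 - j))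
    (hω₂b : ∀ z : ℝ, 0 < z → ∀ j : ℕ, j ≤ 3 →
      ‖iteratedDeriv j ω₂ z‖ ≤ z ^ (-(1:ℝ)/2 - j))
    (ε : ℝ) (hε : ε ∈ Set.Ioo (0:ℝ) 1) :
    ∃ C : ℝ, 0 < C ∧ ∀ r s : ℝ, 1 ≤ r → 1 ≤ s →
      ‖∫ l in Set.Ioi (0:ℝ),
          Complex.exp (Complex.I * (l * (r - s) : ℝ)) * ω₁ (l * r) * ω₂ (l * s) *
            (l : ℂ) ^ 2 * (χ l : ℂ)‖ ≤
        C / (Real.sqrt (r * s) * Real.sqrt (1 + (r - s) ^ 2) ^ (2 - ε)) := by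
  obtain ⟨Kχ, hKχ, hχK⟩ := exists_isSymbol_zero_of_bounded (hχ.of_le (by norm_cast)) hχbdd
  have hω : ∀ ω : ℝ → ℂ, ContDiffOn ℝ (⊤ : ℕ∞) ω (Ioi 0) →
      (∀ z : ℝ, 0 < z → ∀ j : ℕ, j ≤ 3 → ‖iteratedDeriv j ω z‖ ≤ z ^ (-(1:ℝ)/2 - j)) →
      ∀ r : ℝ, 1 ≤ r → IsSymbol (fun t => ω (t * r)) (-(1:ℝ)/2) (r ^ (-(1:ℝ)/2)) :=
    fun ω hω hb r hr => isSymbol_comp_mul_right (one_pos.trans_le hr)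
      (hω.of_le (by norm_cast)) fun z hz j hj => hb z hz j (by omega)
  refine ⟨128 * Kχ * (11 + 4 / ε), by have := hε.1; positivity, fun r s hr hs => ?_⟩
  set F := fun t : ℝ => ω₁ (t * r) * ω₂ (t * s) * ((t ^ 2 * χ t : ℝ) : ℂ)
  have hF : IsSymbol F 1 (128 * Kχ * (r ^ (-(1:ℝ)/2) * s ^ (-(1:ℝ)/2))) := by
    convert ((hω ω₁ hω₁ hω₁b r hr).mul (hω ω₂ hω₂ hω₂b s hs)).mul (isSymbol_sq.mul hχK).ofReal
      using 1 <;> ring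
  have hF_zero : ∀ t, 1 < t → F t = 0 := fun t ht => by
    have : χ t = 0 := hχsupp t fun h => by linarith [h.2, hlam₁.2]
    simp [F, this]
  have hrs : r ^ (-(1:ℝ)/2) * s ^ (-(1:ℝ)/2) = (√(r * s))⁻¹ := by
    rw [← mul_rpow (by linarith) (by linarith), sqrt_eq_rpow, ← rpow_neg (by nlinarith)]
    norm_num
  calc _ = ‖∫ t in Ioi 0, cexp (I * ↑(t * (r - s))) * F t‖ := by
        congr 1
        refine integral_congr_ae (ae_of_all _ fun t => ?_)
        simp only [F]
        push_cast
        ring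
    _ ≤ _ := hF.norm_integral_cexp_mul_le hF_zero hε.1 (r - s)
    _ = _ := by
        rw [hrs]
        field_simp

/-- the oscillatory integral bound
`|∫₀^∞ e^{iλ(r-s)} ω₁(λr) ω₂(λs) λ² χ(λ) dλ| ≤ C / (√(rs) ⟨r-s⟩^{2-ε})` for `r, s ≥ 1`,
where the `ωᵢ` are smooth on `(0,∞)`, vanish on `(0, 1/2]`, and satisfy
`|ωᵢ^{(j)}(z)| ≤ z^{-1/2-j}` for `j = 0,1,2,3`. -/
theorem stmt_14 (lam₁ : ℝ) (hlam₁ : lam₁ ∈ Set.Ioc (0:ℝ) (1/2))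
    (χ : ℝ → ℝ) (hχ : ContDiff ℝ (⊤ : ℕ∞) χ)
    (hχ01 : ∀ t, χ t ∈ Set.Icc (0:ℝ) 1)
    (hχsupp : ∀ t : ℝ, t ∉ Set.Icc (0:ℝ) (2 * lam₁) → χ t = 0)
    (hχbdd : ∀ n : ℕ, ∃ B : ℝ, ∀ t : ℝ, |iteratedDeriv n χ t| ≤ B)
    (ω₁ ω₂ : ℝ → ℂ)
    (hω₁ : ContDiffOn ℝ (⊤ : ℕ∞) ω₁ (Set.Ioi 0))
    (hω₂ : ContDiffOn ℝ (⊤ : ℕ∞) ω₂ (Set.Ioi 0))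
    (hω₁0 : ∀ z : ℝ, z ≤ 1/2 → ω₁ z = 0) (hω₂0 : ∀ z : ℝ, z ≤ 1/2 → ω₂ z = 0)
    (hω₁b : ∀ z : ℝ, 0 < z → ∀ j : ℕ, j ≤ 3 →
      ‖iteratedDeriv j ω₁ z‖ ≤ z ^ (-(1:ℝ)/2 - j))
    (hω₂b : ∀ z : ℝ, 0 < z → ∀ j : ℕ, j ≤ 3 →
      ‖iteratedDeriv j ω₂ z‖ ≤ z ^ (-(1:ℝ)/2 - j))
    (ε : ℝ) (hε : ε ∈ Set.Ioo (0:ℝ) 1) :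
    ∃ C : ℝ, 0 < C ∧ ∀ r s : ℝ, 1 ≤ r → 1 ≤ s →
      ‖∫ l in Set.Ioi (0:ℝ),
          Complex.exp (Complex.I * (l * (r - s) : ℝ)) * ω₁ (l * r) * ω₂ (l * s) *
            (l : ℂ) ^ 2 * (χ l : ℂ)‖ ≤
        C / (Real.sqrt (r * s) * Real.sqrt (1 + (r - s) ^ 2) ^ (2 - ε)) :=
  stmt_14_general lam₁ hlam₁ χ hχ hχsupp hχbdd ω₁ ω₂ hω₁ hω₂ hω₁b hω₂b ε hε
end

section
/- Let λ₁ ∈ (0, 1/2] and let χ : ℝ → [0,1] be a smooth function supported in [0, 2λ₁] with bounded derivatives of all orders. Let η : (0, ∞) → ℂ be smooth with η(z) = 0 for z ≥ 1 and |η^{(ℓ)}(z)| ≤ z^{−1−ℓ} for ℓ = 0, 1, 2 and all z ∈ (0, 1], and let ω : (0, ∞) → ℂ be smooth with ω(z) = 0 for z ≤ 1/2 and |ω^{(j)}(z)| ≤ z^{−1/2−j} for j = 0, 1, 2 and all z > 0. Then there exists a constant C (depending on χ) such that for all r, s > 0 and either choice of sign: |∫₀^∞ e^{± iλs} η(λr)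 ω(λs) λ² χ(λ) dλ| ≤ C / ( r · ⟨r + s⟩² ). -/
/-!
The integrand vanishes unless `s ≥ 1/2` and `r ≤ 2s`: `ω(λs)` needs `λs > 1/2`, `η(λr)` needs
`λr < 1` and `χ(λ)` needs `λ ≤ 1`. In the remaining case `⟨r + s⟩² ≤ 13 s²`, and the amplitude
`f(λ) = η(λr) ω(λs) λ² χ(λ)` vanishes near `λ = 1/(4s)` and near `λ = 2`, so two integrations by
parts against `e^{±iλs}` gain `s⁻²`. Each factor of `f` obeys symbol estimates
`|g⁽ᵏ⁾(λ)| ≲ λ^{p-k}` (`k ≤ 2`) with orders `-1`, `-1/2`, `2` and constants `r⁻¹`, `s^{-1/2}`,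
`O(1)`, so `|f''(λ)| ≲ r⁻¹ s^{-1/2} λ^{-3/2}`, and `∫_{1/(4s)}^∞ λ^{-3/2} dλ = 4 s^{1/2}`.
-/

open MeasureTheory Real Set Filter Topology

theorem hasDerivAt_cexp_mul_ofReal (c : ℂ) (x : ℝ) :
    HasDerivAt (fun y : ℝ => Complex.exp (c * y)) (c * Complex.exp (c * x)) x := by
  simpa [mul_comm] using ((hasDerivAt_id x).ofReal_comp.const_mul c).cexp

theorem integral_mul_cexp_eq_of_eq_zero {f f' : ℝ → ℂ} {a b : ℝ} {c : ℂ} (hc : c ≠ 0)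
    (hf : ∀ x ∈ uIcc a b, HasDerivAt f (f' x) x) (hf' : IntervalIntegrable f' volume a b)
    (ha : f a = 0) (hb : f b = 0) :
    ∫ x in a..b, f x * Complex.exp (c * x) = -(c⁻¹ * ∫ x in a..b, f' x * Complex.exp (c * x)) := by
  have hE (x : ℝ) :
      HasDerivAt (fun y : ℝ => c⁻¹ * Complex.exp (c * y)) (Complex.exp (c * x)) x := by
    simpa [← mul_assoc, inv_mul_cancel₀ hc] using (hasDerivAt_cexp_mul_ofReal c x).const_mul c⁻¹
  rw [intervalIntegral.integral_mul_deriv_eq_deriv_mul hf (fun x _ => hE x) hf'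
    ((by fun_prop : Continuous fun x : ℝ => Complex.exp (c * x)).intervalIntegrable a b), ha, hb,
    ← intervalIntegral.integral_const_mul]
  simp only [zero_mul, sub_zero, zero_sub, mul_left_comm c⁻¹]

theorem HasDerivAt.eq_zero_of_eventuallyEq_zero {f : ℝ → ℂ} {f' : ℂ} {x : ℝ}
    (hf : HasDerivAt f f' x) (h : f =ᶠ[𝓝 x] 0) : f' = 0 :=
  (hf.congr_of_eventuallyEq h.symm).unique (hasDerivAt_const x 0)

theorem norm_integral_mul_cexp_le {f f₁ f₂ : ℝ → ℂ} {g : ℝ → ℝ} {a b t : ℝ} (hab : a ≤ b)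
    (ht : t ≠ 0) (hf : ∀ x ∈ Icc a b, HasDerivAt f (f₁ x) x)
    (hf₁ : ∀ x ∈ Icc a b, HasDerivAt f₁ (f₂ x) x) (hf₂ : ∀ x ∈ Icc a b, ‖f₂ x‖ ≤ g x)
    (hg : IntervalIntegrable g volume a b) (ha : f =ᶠ[𝓝 a] 0) (hb : f =ᶠ[𝓝 b] 0) :
    ‖∫ x in a..b, f x * Complex.exp (Complex.I * t * x)‖ ≤ (∫ x in a..b, g x) / t ^ 2 := by
  rw [← uIcc_of_le hab] at hf hf₁ hf₂
  have hc : Complex.I * t ≠ 0 := mul_ne_zero Complex.I_ne_zero (by exact_mod_cast ht)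
  have hf₁_int : IntervalIntegrable f₁ volume a b :=
    ContinuousOn.intervalIntegrable fun x hx => (hf₁ x hx).continuousAt.continuousWithinAt
  have hf₂_int : IntervalIntegrable f₂ volume a b := by
    have hIoc : ∀ x ∈ uIoc a b, x ∈ uIcc a b := fun _ hx => uIoc_subset_uIcc hx
    refine hg.mono_fun' ((measurable_deriv f₁).aestronglyMeasurable.congr ?_) ?_
    · exact (ae_restrict_of_forall_mem measurableSet_uIoc fun x hx => (hf₁ x (hIoc x hx)).deriv)
    · exact ae_restrict_of_forall_mem measurableSet_uIoc fun x hx => hf₂ x (hIoc x hx)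
  rw [integral_mul_cexp_eq_of_eq_zero hc hf hf₁_int ha.eq_of_nhds hb.eq_of_nhds,
    integral_mul_cexp_eq_of_eq_zero hc hf₁ hf₂_int
      ((hf a left_mem_uIcc).eq_zero_of_eventuallyEq_zero ha)
      ((hf b right_mem_uIcc).eq_zero_of_eventuallyEq_zero hb)]
  have hnorm : ‖(Complex.I * t)⁻¹‖ = |t|⁻¹ := by simp
  have hint : ‖∫ x in a..b, f₂ x * Complex.exp (Complex.I * t * x)‖ ≤ ∫ x in a..b, g x := by
    refine intervalIntegral.norm_integral_le_of_norm_le hab (ae_of_all _ fun x hx => ?_) hg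
    rw [norm_mul, mul_assoc, ← Complex.ofReal_mul, mul_comm Complex.I,
      Complex.norm_exp_ofReal_mul_I, mul_one]
    exact hf₂ x (Ioc_subset_Icc_self.trans (uIcc_of_le hab).symm.subset hx)
  rw [norm_neg, norm_mul, norm_neg, norm_mul, hnorm, ← mul_assoc, ← mul_inv, ← sq, sq_abs,
    div_eq_inv_mul]
  exact mul_le_mul_of_nonneg_left hint (by positivity)

theorem integral_rpow_sub_two_le {a b p : ℝ} (ha : 0 < a) (hab : a ≤ b) (hp : p < 1) :
    ∫ x in a..b, x ^ (p - 2) ≤ a ^ (p - 1) / (1 - p) := by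
  have h0 : (0 : ℝ) ∉ uIcc a b := by
    rw [uIcc_of_le hab]; exact fun h => (lt_irrefl 0) (ha.trans_le h.1)
  rw [integral_rpow (Or.inr ⟨by linarith, h0⟩), show p - 2 + 1 = p - 1 by ring,
    ← neg_div_neg_eq, neg_sub, neg_sub]
  gcongr
  linarith [rpow_nonneg (ha.le.trans hab) (p - 1)]

def IsSymbolOn (S : Set ℝ) (A p : ℝ) (u u₁ u₂ : ℝ → ℂ) : Prop :=
  ∀ x ∈ S, HasDerivAt u (u₁ x) x ∧ HasDerivAt u₁ (u₂ x) x ∧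
    ‖u x‖ ≤ A * x ^ p ∧ ‖u₁ x‖ ≤ A * x ^ (p - 1) ∧ ‖u₂ x‖ ≤ A * x ^ (p - 2)

theorem norm_mul_le_mul_rpow {a b : ℂ} {x A B α β γ : ℝ} (hx : 0 < x) (hγ : α + β = γ)
    (ha : ‖a‖ ≤ A * x ^ α) (hb : ‖b‖ ≤ B * x ^ β) : ‖a * b‖ ≤ A * B * x ^ γ := by
  rw [norm_mul, ← hγ, rpow_add hx]
  calc ‖a‖ * ‖b‖ ≤ A * x ^ α * (B * x ^ β) :=
        mul_le_mul ha hb (norm_nonneg _) ((norm_nonneg _).trans ha)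
    _ = A * B * (x ^ α * x ^ β) := by ring

namespace IsSymbolOn

variable {S T : Set ℝ} {A B p q : ℝ} {u u₁ u₂ v v₁ v₂ : ℝ → ℂ}

theorem mono (hu : IsSymbolOn S A p u u₁ u₂) (hTS : T ⊆ S) : IsSymbolOn T A p u u₁ u₂ :=
  fun x hx => hu x (hTS hx)

theorem mul (hS : S ⊆ Ioi 0) (hu : IsSymbolOn S A p u u₁ u₂) (hv : IsSymbolOn S B q v v₁ v₂) :
    IsSymbolOn S (4 * (A * B)) (p + q) (fun x => u x * v x) (fun x => u₁ x * v x + u x * v₁ x)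
      (fun x => u₂ x * v x + 2 * (u₁ x * v₁ x) + u x * v₂ x) := by
  intro x hx
  obtain ⟨hu₁, hu₂, hu0, hu1, hu2⟩ := hu x hx
  obtain ⟨hv₁, hv₂, hv0, hv1, hv2⟩ := hv x hx
  have hx0 : 0 < x := hS hx
  have h00 := norm_mul_le_mul_rpow hx0 rfl hu0 hv0
  have h10 := norm_mul_le_mul_rpow hx0 (by ring : p - 1 + q = p + q - 1) hu1 hv0
  have h01 := norm_mul_le_mul_rpow hx0 (by ring : p + (q - 1) = p + q - 1) hu0 hv1
  have h20 := norm_mul_le_mul_rpow hx0 (by ring : p - 2 + q = p + q - 2) hu2 hv0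
  have h11 := norm_mul_le_mul_rpow hx0 (by ring : p - 1 + (q - 1) = p + q - 2) hu1 hv1
  have h02 := norm_mul_le_mul_rpow hx0 (by ring : p + (q - 2) = p + q - 2) hu0 hv2
  have hAB0 : 0 ≤ A * B * x ^ (p + q) := (norm_nonneg _).trans h00
  have hAB1 : 0 ≤ A * B * x ^ (p + q - 1) := (norm_nonneg _).trans h10
  refine ⟨hu₁.mul hv₁, ((hu₂.mul hv₁).add (hu₁.mul hv₂)).congr_deriv (by ring), by linarith,
    (norm_add_le _ _).trans (by linarith), (norm_add₃_le).trans ?_⟩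
  rw [norm_mul (2 : ℂ), Complex.norm_ofNat]
  linarith

theorem comp_mul_const {c : ℝ} (hc : 0 < c) (hu : IsSymbolOn (Ioi 0) A p u u₁ u₂) :
    IsSymbolOn (Ioi 0) (A * c ^ p) p (fun x => u (x * c)) (fun x => c * u₁ (x * c))
      (fun x => c ^ 2 * u₂ (x * c)) := by
  intro x hx
  have hx0 : 0 < x := hx
  obtain ⟨hu₁, hu₂, hu0, hu1, hu2⟩ := hu (x * c) (mul_pos hx0 hc)
  have hcomp {g : ℝ → ℂ} {g' : ℂ} (hg : HasDerivAt g g' (x * c)) :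
      HasDerivAt (fun y => g (y * c)) (c * g') x := by
    have := hg.scomp x (hasDerivAt_mul_const c)
    rwa [Complex.real_smul] at this
  refine ⟨hcomp hu₁, by simpa [pow_two, mul_assoc] using (hcomp hu₂).const_mul (c : ℂ), ?_, ?_, ?_⟩
  · rw [mul_rpow hx0.le hc.le] at hu0
    linarith
  · rw [norm_mul, Complex.norm_real, norm_of_nonneg hc.le]
    calc c * ‖u₁ (x * c)‖ ≤ c * (A * (x * c) ^ (p - 1)) := by gcongr
      _ = A * c ^ p * x ^ (p - 1) := by
        rw [mul_rpow hx0.le hc.le, rpow_sub_one hc.ne']; field_simp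
  · rw [norm_mul, norm_pow, Complex.norm_real, norm_of_nonneg hc.le]
    calc c ^ 2 * ‖u₂ (x * c)‖ ≤ c ^ 2 * (A * (x * c) ^ (p - 2)) := by gcongr
      _ = A * c ^ p * x ^ (p - 2) := by
        rw [mul_rpow hx0.le hc.le, rpow_sub hc, rpow_two]; field_simp

end IsSymbolOn

theorem isSymbolOn_sq :
    IsSymbolOn (Ioi 0) 2 2 (fun x => (x : ℂ) ^ 2) (fun x => 2 * x) (fun _ => 2) := by
  intro x hx
  have hx0 : 0 < x := hx
  refine ⟨?_, ?_, ?_, ?_, ?_⟩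
  · simpa using (hasDerivAt_pow 2 (x : ℂ)).comp_ofReal
  · simpa using (hasDerivAt_id (x : ℂ)).comp_ofReal.const_mul (2 : ℂ)
  · rw [norm_pow, Complex.norm_real, norm_of_nonneg hx0.le, rpow_two]
    nlinarith [sq_nonneg x]
  · norm_num [norm_of_nonneg hx0.le]
  · norm_num

theorem isSymbolOn_Ioc_of_norm_le {u u₁ u₂ : ℝ → ℂ} {b M : ℝ} (hb : 1 ≤ b)
    (h : ∀ x ∈ Ioc 0 b, HasDerivAt u (u₁ x) x ∧ HasDerivAt u₁ (u₂ x) x ∧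
      ‖u x‖ ≤ M ∧ ‖u₁ x‖ ≤ M ∧ ‖u₂ x‖ ≤ M) :
    IsSymbolOn (Ioc 0 b) (b ^ 2 * M) 0 u u₁ u₂ := by
  have hM : 0 ≤ M := (norm_nonneg _).trans (h b ⟨by linarith, le_rfl⟩).2.2.1
  intro x hx
  obtain ⟨hu₁, hu₂, hu0, hu1, hu2⟩ := h x hx
  obtain ⟨hx0, hxb⟩ := hx
  have hb2 : 1 ≤ b ^ 2 := one_le_pow₀ hb
  have hxb2 : x ^ 2 ≤ b ^ 2 := pow_le_pow_left₀ hx0.le hxb 2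
  refine ⟨hu₁, hu₂, ?_, ?_, ?_⟩
  · rw [rpow_zero, mul_one]
    nlinarith
  · rw [zero_sub, rpow_neg_one, ← div_eq_mul_inv, le_div_iff₀ hx0]
    nlinarith [mul_le_mul hu1 (hxb.trans (le_self_pow₀ hb two_ne_zero)) hx0.le hM]
  · rw [zero_sub, rpow_neg hx0.le, rpow_two, ← div_eq_mul_inv, le_div_iff₀ (by positivity)]
    nlinarith [mul_le_mul hu2 hxb2 (by positivity) hM]

theorem iteratedDeriv_eq_zero_of_forall_ge {F : Type*} [NormedAddCommGroup F] [NormedSpace ℝ F]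
    {g : ℝ → F} {c z : ℝ} (hg : ∀ y, c ≤ y → g y = 0) (hz : c < z) (k : ℕ) :
    iteratedDeriv k g z = 0 := by
  have hg0 : g =ᶠ[𝓝 z] fun _ => 0 :=
    eventually_of_mem (Ioi_mem_nhds hz) fun y hy => hg y (le_of_lt hy)
  rw [(hg0.iteratedDeriv k).eq_of_nhds, iteratedDeriv_const, ite_self]

theorem isSymbolOn_of_norm_iteratedDeriv_le {g : ℝ → ℂ} {p : ℝ} (hg : ContDiffOn ℝ 2 g (Ioi 0))
    (h : ∀ z : ℝ, 0 < z → ∀ k : ℕ, k ≤ 2 → ‖iteratedDeriv k g z‖ ≤ z ^ (p - k)) :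
    IsSymbolOn (Ioi 0) 1 p g (deriv g) (deriv (deriv g)) := by
  have hg' : ContDiffOn ℝ 1 (deriv g) (Ioi 0) := hg.deriv_of_isOpen isOpen_Ioi (by norm_num)
  intro z hz
  have h0 := h z hz 0 (by norm_num)
  have h1 := h z hz 1 (by norm_num)
  have h2 := h z hz 2 le_rfl
  rw [iteratedDeriv_zero] at h0
  rw [iteratedDeriv_one] at h1
  rw [iteratedDeriv_succ, iteratedDeriv_one] at h2
  push_cast at h0 h1 h2
  refine ⟨?_, ?_, by simpa using h0, by simpa using h1, by simpa using h2⟩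
  · exact ((hg.differentiableOn two_ne_zero).differentiableAt (Ioi_mem_nhds hz)).hasDerivAt
  · exact ((hg'.differentiableOn one_ne_zero).differentiableAt (Ioi_mem_nhds hz)).hasDerivAt

theorem exists_isSymbolOn_ofReal {χ : ℝ → ℝ} {b : ℝ} (hχ : ContDiff ℝ 2 χ) (hb : 1 ≤ b)
    (hbdd : ∀ n ≤ 2, ∃ B, ∀ t, |iteratedDeriv n χ t| ≤ B) :
    ∃ A > 0, IsSymbolOn (Ioc 0 b) A 0 (fun x => (χ x : ℂ)) (fun x => ((deriv χ x : ℝ) : ℂ))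
      (fun x => ((deriv (deriv χ) x : ℝ) : ℂ)) := by
  obtain ⟨B₀, hB₀⟩ := hbdd 0 (by norm_num)
  obtain ⟨B₁, hB₁⟩ := hbdd 1 (by norm_num)
  obtain ⟨B₂, hB₂⟩ := hbdd 2 le_rfl
  simp only [iteratedDeriv_zero, iteratedDeriv_succ] at hB₀ hB₁ hB₂
  set M := max 1 (max B₀ (max B₁ B₂))
  have hχ' : ContDiff ℝ 1 (deriv χ) := hχ.iterate_deriv' 1 1
  refine ⟨b ^ 2 * M, by positivity, isSymbolOn_Ioc_of_norm_le hb fun x _ => ⟨?_, ?_, ?_, ?_, ?_⟩⟩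
  · exact ((hχ.differentiable two_ne_zero).differentiableAt).hasDerivAt.ofReal_comp
  · exact ((hχ'.differentiable one_ne_zero).differentiableAt).hasDerivAt.ofReal_comp
  all_goals rw [Complex.norm_real, norm_eq_abs]
  · exact (hB₀ x).trans (by simp [M])
  · exact (hB₁ x).trans (by simp [M])
  · exact (hB₂ x).trans (by simp [M])

theorem norm_integral_mul_cexp_le_of_isSymbolOn {f f₁ f₂ : ℝ → ℂ} {a b t K p : ℝ} (ha : 0 < a)
    (hab : a ≤ b) (ht : t ≠ 0) (hp : p < 1) (hf : IsSymbolOn (Icc a b) K p f f₁ f₂)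
    (hfa : f =ᶠ[𝓝 a] 0) (hfb : f =ᶠ[𝓝 b] 0) :
    ‖∫ x in a..b, f x * Complex.exp (Complex.I * t * x)‖ ≤ K * a ^ (p - 1) / ((1 - p) * t ^ 2) := by
  have hK : 0 ≤ K := by
    have := (norm_nonneg _).trans (hf a (left_mem_Icc.2 hab)).2.2.1
    exact nonneg_of_mul_nonneg_left this (rpow_pos_of_pos ha p)
  have hg : IntervalIntegrable (fun x => K * x ^ (p - 2)) volume a b := by
    refine ContinuousOn.intervalIntegrable fun x hx => ?_
    rw [uIcc_of_le hab] at hx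
    exact (continuousAt_const.mul
      (continuousAt_rpow_const _ _ (Or.inl (ha.trans_le hx.1).ne'))).continuousWithinAt
  refine (norm_integral_mul_cexp_le hab ht (fun x hx => (hf x hx).1) (fun x hx => (hf x hx).2.1)
    (fun x hx => (hf x hx).2.2.2.2) hg hfa hfb).trans ?_
  rw [intervalIntegral.integral_const_mul]
  calc K * (∫ x in a..b, x ^ (p - 2)) / t ^ 2 ≤ K * (a ^ (p - 1) / (1 - p)) / t ^ 2 := by
        gcongr; exact integral_rpow_sub_two_le ha hab hp
    _ = K * a ^ (p - 1) / ((1 - p) * t ^ 2) := by rw [mul_div_assoc', div_div]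

noncomputable def oscIntegral (η ω : ℝ → ℂ) (χ : ℝ → ℝ) (σ r s : ℝ) : ℂ :=
  ∫ l in Set.Ioi (0:ℝ), Complex.exp (Complex.I * (σ * l * s : ℝ)) * η (l * r) * ω (l * s) *
    (l : ℂ) ^ 2 * (χ l : ℂ)

theorem oscIntegral_eq_zero {η ω : ℝ → ℂ} {χ : ℝ → ℝ} {σ r s : ℝ}
    (hη : ∀ z, 1 ≤ z → η z = 0) (hω : ∀ z, z ≤ 1 / 2 → ω z = 0) (hχ : ∀ t, 1 < t → χ t = 0)
    (hs : 0 < s) (hrs : s < 1 / 2 ∨ 2 * s < r) : oscIntegral η ω χ σ r s = 0 := by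
  refine setIntegral_eq_zero_of_forall_eq_zero fun l (hl : 0 < l) => ?_
  rcases le_or_gt (l * s) (1 / 2) with hls | hls
  · simp [hω _ hls]
  rcases hrs with hs2 | hrs
  · simp [hχ l (by nlinarith)]
  · simp [hη (l * r) (by nlinarith)]

theorem oscIntegral_eq_intervalIntegral {η ω : ℝ → ℂ} {χ : ℝ → ℝ} {σ r s a b : ℝ}
    (hω : ∀ z, z ≤ 1 / 2 → ω z = 0) (hχ : ∀ t, 1 < t → χ t = 0) (ha : 0 < a) (hab : a ≤ b)
    (hs : 0 < s) (has : a * s ≤ 1 / 2) (hb : 1 ≤ b) :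
    oscIntegral η ω χ σ r s = ∫ x in a..b, η (x * r) * ω (x * s) * ((x : ℂ) ^ 2 * (χ x : ℂ)) *
      Complex.exp (Complex.I * (σ * s : ℝ) * x) := by
  rw [oscIntegral, setIntegral_eq_of_subset_of_forall_sdiff_eq_zero measurableSet_Ioi
    (fun x (hx : x ∈ Ioc a b) => ha.trans hx.1), ← intervalIntegral.integral_of_le hab]
  · refine intervalIntegral.integral_congr fun x _ => ?_
    rw [show Complex.I * (σ * s : ℝ) * x = Complex.I * (σ * x * s : ℝ) by push_cast; ring]
    ring
  · rintro x ⟨-, hx⟩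
    rcases le_or_gt x a with hxa | hxa
    · simp [hω (x * s) (by nlinarith)]
    · simp [hχ x (by by_contra! h; exact hx ⟨hxa, by linarith⟩)]

theorem norm_oscIntegral_le {η η₁ η₂ ω ω₁ ω₂ χ₁ χ₂ : ℝ → ℂ} {χ : ℝ → ℝ} {A σ r s : ℝ}
    (hη : IsSymbolOn (Ioi 0) 1 (-1) η η₁ η₂) (hω : IsSymbolOn (Ioi 0) 1 (-1 / 2) ω ω₁ ω₂)
    (hω0 : ∀ z, z ≤ 1 / 2 → ω z = 0) (hχ : IsSymbolOn (Ioc 0 2) A 0 (fun x => (χ x : ℂ)) χ₁ χ₂)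
    (hχ0 : ∀ t, 1 < t → χ t = 0) (hr : 0 < r) (hs : 1 / 2 ≤ s) (hσ : σ = 1 ∨ σ = -1) :
    ‖oscIntegral η ω χ σ r s‖ ≤ 512 * A / (r * s ^ 2) := by
  have hs0 : 0 < s := by linarith
  set a := (4 * s)⁻¹ with ha_def
  have ha : 0 < a := by positivity
  have has : a * s = 1 / 4 := by rw [ha_def]; field_simp
  have ha2 : a ≤ 2 := by nlinarith
  have hS : Icc a 2 ⊆ Ioi 0 := fun x hx => ha.trans_le hx.1
  have hf := (((hη.comp_mul_const hr).mono hS).mul hS ((hω.comp_mul_const hs0).mono hS)).mul hS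
    ((isSymbolOn_sq.mono hS).mul hS (hχ.mono fun x hx => ⟨hS hx, hx.2⟩))
  have hfa : (fun x : ℝ => η (x * r) * ω (x * s) * ((x : ℂ) ^ 2 * (χ x : ℂ))) =ᶠ[𝓝 a] 0 := by
    filter_upwards [Iio_mem_nhds (show a < 2 * a by linarith)] with x (hx : x < 2 * a)
    simp [hω0 (x * s) (by nlinarith)]
  have hfb : (fun x : ℝ => η (x * r) * ω (x * s) * ((x : ℂ) ^ 2 * (χ x : ℂ))) =ᶠ[𝓝 2] 0 := by
    filter_upwards [Ioi_mem_nhds one_lt_two] with x hx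
    simp [hχ0 x hx]
  have hσs : (σ * s) ^ 2 = s ^ 2 := by rcases hσ with rfl | rfl <;> ring
  have hσs0 : σ * s ≠ 0 := by rw [← sq_pos_iff, hσs]; positivity
  rw [oscIntegral_eq_intervalIntegral hω0 hχ0 ha ha2 hs0 (by linarith) one_le_two]
  refine (norm_integral_mul_cexp_le_of_isSymbolOn ha ha2 hσs0 (by norm_num) hf hfa hfb).trans_eq ?_
  have key : s ^ (-1 / 2 : ℝ) * a ^ (-1 / 2 : ℝ) = 2 := by
    rw [neg_div, ha_def, inv_rpow (by positivity), rpow_neg hs0.le, rpow_neg (by positivity),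
      inv_inv, ← sqrt_eq_rpow, ← sqrt_eq_rpow, sqrt_mul (by norm_num),
      show (4 : ℝ) = 2 ^ 2 by norm_num, sqrt_sq (by norm_num)]
    field_simp
  rw [hσs, show (-1 + -1 / 2 + (2 + 0) - 1 : ℝ) = -1 / 2 by norm_num,
    show (1 - (-1 + -1 / 2 + (2 + 0)) : ℝ) = 1 / 2 by norm_num, rpow_neg_one]
  calc _ = 128 * A * r⁻¹ * (s ^ (-1 / 2 : ℝ) * a ^ (-1 / 2 : ℝ)) / (1 / 2 * s ^ 2) := by ring
    _ = 512 * A / (r * s ^ 2) := by rw [key]; field_simp; ring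

theorem stmt_15_general (lam₁ : ℝ) (hlam₁ : lam₁ ∈ Set.Ioc (0:ℝ) (1/2))
    (χ : ℝ → ℝ) (hχ : ContDiff ℝ (⊤ : ℕ∞) χ)
    (hχsupp : ∀ t : ℝ, t ∉ Set.Icc (0:ℝ) (2 * lam₁) → χ t = 0)
    (hχbdd : ∀ n : ℕ, ∃ B : ℝ, ∀ t : ℝ, |iteratedDeriv n χ t| ≤ B)
    (η : ℝ → ℂ) (hη : ContDiffOn ℝ (⊤ : ℕ∞) η (Set.Ioi 0))
    (hη0 : ∀ z : ℝ, 1 ≤ z → η z = 0)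
    (hηb : ∀ z : ℝ, z ∈ Set.Ioc (0:ℝ) 1 → ∀ ℓ : ℕ, ℓ ≤ 2 →
      ‖iteratedDeriv ℓ η z‖ ≤ z ^ (-1 - (ℓ:ℝ)))
    (ω : ℝ → ℂ) (hω : ContDiffOn ℝ (⊤ : ℕ∞) ω (Set.Ioi 0))
    (hω0 : ∀ z : ℝ, z ≤ 1/2 → ω z = 0)
    (hωb : ∀ z : ℝ, 0 < z → ∀ j : ℕ, j ≤ 2 →
      ‖iteratedDeriv j ω z‖ ≤ z ^ (-(1:ℝ)/2 - j)) :
    ∃ C : ℝ, 0 < C ∧ ∀ r s : ℝ, 0 < r → 0 < s → ∀ σ : ℝ, σ = 1 ∨ σ = -1 →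
      ‖∫ l in Set.Ioi (0:ℝ),
          Complex.exp (Complex.I * (σ * l * s : ℝ)) * η (l * r) * ω (l * s) *
            (l : ℂ) ^ 2 * (χ l : ℂ)‖ ≤
        C / (r * (1 + (r + s) ^ 2)) := by
  have htop : (2 : WithTop ℕ∞) ≤ (⊤ : ℕ∞) := WithTop.coe_le_coe.2 le_top
  have hχ0 (t : ℝ) (ht : 1 < t) : χ t = 0 := hχsupp t fun h => by linarith [h.2, hlam₁.2]
  obtain ⟨A, hA, hχS⟩ := exists_isSymbolOn_ofReal (hχ.of_le htop) one_le_two fun n _ => hχbdd n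
  have hηS : IsSymbolOn (Ioi 0) 1 (-1) η (deriv η) (deriv (deriv η)) := by
    refine isSymbolOn_of_norm_iteratedDeriv_le (hη.of_le htop) fun z hz k hk => ?_
    rcases le_or_gt z 1 with hz1 | hz1
    · exact hηb z ⟨hz, hz1⟩ k hk
    · rw [iteratedDeriv_eq_zero_of_forall_ge hη0 hz1, norm_zero]
      positivity
  have hωS := isSymbolOn_of_norm_iteratedDeriv_le (hω.of_le htop) hωb
  refine ⟨6656 * A, by positivity, fun r s hr hs σ hσ => ?_⟩
  change ‖oscIntegral η ω χ σ r s‖ ≤ _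
  by_cases hrs : 1 / 2 ≤ s ∧ r ≤ 2 * s
  · have hsr : 1 + (r + s) ^ 2 ≤ 13 * s ^ 2 := by nlinarith
    calc _ ≤ 512 * A / (r * s ^ 2) := norm_oscIntegral_le hηS hωS hω0 hχS hχ0 hr hrs.1 hσ
      _ = 6656 * A / (r * (13 * s ^ 2)) := by field_simp; ring
      _ ≤ 6656 * A / (r * (1 + (r + s) ^ 2)) := by gcongr
  · rw [oscIntegral_eq_zero hη0 hω0 hχ0 hs (by contrapose! hrs; exact hrs), norm_zero]
    positivity

/-- the oscillatory integral bound
`|∫₀^∞ e^{±iλs} η(λr) ω(λs) λ² χ(λ) dλ| ≤ C / (r ⟨r+s⟩²)` for `r, s > 0`,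
where `η` is smooth on `(0,∞)`, vanishes on `[1,∞)`, and satisfies
`|η^{(ℓ)}(z)| ≤ z^{-1-ℓ}` on `(0,1]` for `ℓ = 0,1,2`, while `ω` is smooth on `(0,∞)`,
vanishes on `(0,1/2]`, and satisfies `|ω^{(j)}(z)| ≤ z^{-1/2-j}` for `j = 0,1,2`. -/
theorem stmt_15 (lam₁ : ℝ) (hlam₁ : lam₁ ∈ Set.Ioc (0:ℝ) (1/2))
    (χ : ℝ → ℝ) (hχ : ContDiff ℝ (⊤ : ℕ∞) χ)
    (hχ01 : ∀ t, χ t ∈ Set.Icc (0:ℝ) 1)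
    (hχsupp : ∀ t : ℝ, t ∉ Set.Icc (0:ℝ) (2 * lam₁) → χ t = 0)
    (hχbdd : ∀ n : ℕ, ∃ B : ℝ, ∀ t : ℝ, |iteratedDeriv n χ t| ≤ B)
    (η : ℝ → ℂ) (hη : ContDiffOn ℝ (⊤ : ℕ∞) η (Set.Ioi 0))
    (hη0 : ∀ z : ℝ, 1 ≤ z → η z = 0)
    (hηb : ∀ z : ℝ, z ∈ Set.Ioc (0:ℝ) 1 → ∀ ℓ : ℕ, ℓ ≤ 2 →
      ‖iteratedDeriv ℓ η z‖ ≤ z ^ (-1 - (ℓ:ℝ)))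
    (ω : ℝ → ℂ) (hω : ContDiffOn ℝ (⊤ : ℕ∞) ω (Set.Ioi 0))
    (hω0 : ∀ z : ℝ, z ≤ 1/2 → ω z = 0)
    (hωb : ∀ z : ℝ, 0 < z → ∀ j : ℕ, j ≤ 2 →
      ‖iteratedDeriv j ω z‖ ≤ z ^ (-(1:ℝ)/2 - j)) :
    ∃ C : ℝ, 0 < C ∧ ∀ r s : ℝ, 0 < r → 0 < s → ∀ σ : ℝ, σ = 1 ∨ σ = -1 →
      ‖∫ l in Set.Ioi (0:ℝ),
          Complex.exp (Complex.I * (σ * l * s : ℝ)) * η (l * r) * ω (l * s) *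
            (l : ℂ) ^ 2 * (χ l : ℂ)‖ ≤
        C / (r * (1 + (r + s) ^ 2)) :=
  stmt_15_general lam₁ hlam₁ χ hχ hχsupp hχbdd η hη hη0 hηb ω hω hω0 hωb
end

section
/- Let λ₁ ∈ (0, 1/2] and let χ : ℝ → [0,1] be a smooth function supported in [0, 2λ₁] with bounded derivatives of all orders. Let ρ : ℝ → ℂ be a smooth function supported in [0, 1] with |ρ^{(ℓ)}(z)| ≤ 1 for ℓ = 0, 1, 2, 3, and let ω : (0, ∞) → ℂ be smooth with ω(z) = 0 for z ≤ 1/2 and |ω^{(j)}(z)| ≤ z^{−1/2−j} for j = 0, 1, 2, 3 and all z > 0. Then there exists a constant C (depending on χ) such that for all r, s > 0: |∫₀^∞ e^{iλr} ω(λr) ρ(λs) λ² χ(λ) dλ| ≤ C / ( r · ⟨r + s⟩² ). -/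
/-!
Write the integral as `∫ e^{iλr} F(λ) dλ` with the amplitude `F(λ) = ω(λr) ρ(λs) λ² χ(λ)`.
As `F` is smooth with compact support, `𝓕 (F''') = (2πiξ)³ 𝓕 F`, i.e. three integrations by
parts bound the integral by `r⁻³ ∫ |F'''|`. On the support `1/(2r) < λ ≤ 1` every factor of `F`
obeys a symbol estimate `|f^{(j)}(λ)| ≤ c λ^{e-j}`, and such estimates multiply (Leibniz), so
`|F'''(λ)| ≲ r^{-1/2} λ^{-3/2}`, whose integral over `λ > 1/(2r)` is `O(1)`.
Finally `F ≢ 0` forces `r > 1/2` and `s < 2r`, whence `r³ ≳ r ⟨r + s⟩²`.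
-/

open Complex Set Topology Real MeasureTheory FourierTransform

lemma exists_pos_bound_of_forall_exists_bound {f : ℕ → ℝ → ℝ}
    (h : ∀ n, ∃ B, ∀ t, |f n t| ≤ B) (N : ℕ) :
    ∃ B > 0, ∀ n ≤ N, ∀ t, |f n t| ≤ B := by
  choose B hB using h
  refine ⟨1 + ∑ k ∈ Finset.range (N + 1), |B k|, by positivity, fun n hn t ↦ ?_⟩
  calc |f n t| ≤ |B n| := (hB n t).trans (le_abs_self _)
    _ ≤ ∑ k ∈ Finset.range (N + 1), |B k| :=
        Finset.single_le_sum (fun k _ ↦ abs_nonneg (B k)) (Finset.mem_range_succ_iff.mpr hn)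
    _ ≤ _ := le_add_of_nonneg_left zero_le_one

lemma contDiff_of_contDiffOn_Ioi_of_eq_zero_of_le {E : Type*} [NormedAddCommGroup E]
    [NormedSpace ℝ E] {f : ℝ → E} {n : WithTop ℕ∞} {a b : ℝ} (hab : a < b)
    (hf : ContDiffOn ℝ n f (Ioi a)) (hzero : ∀ x ≤ b, f x = 0) : ContDiff ℝ n f := by
  refine contDiff_iff_contDiffAt.mpr fun x ↦ ?_
  rcases lt_or_ge x b with hx | hx
  · exact contDiffAt_const.congr_of_eventuallyEq
      (eventually_lt_nhds hx |>.mono fun y hy ↦ hzero y hy.le)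
  · exact hf.contDiffAt (Ioi_mem_nhds (hab.trans_le hx))

lemma iteratedDeriv_eq_zero_of_eventually_eq_zero {E : Type*} [NormedAddCommGroup E]
    [NormedSpace ℝ E] {f : ℝ → E} {x : ℝ} (h : ∀ᶠ y in 𝓝 x, f y = 0) (n : ℕ) :
    iteratedDeriv n f x = 0 :=
  (Filter.EventuallyEq.iteratedDeriv_eq n (g := 0) h).trans iteratedDeriv_const_zero

lemma HasCompactSupport.iteratedDeriv {F : Type*} [NormedAddCommGroup F] [NormedSpace ℝ F]
    {f : ℝ → F} (hf : HasCompactSupport f) (n : ℕ) : HasCompactSupport (iteratedDeriv n f) := by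
  induction n with
  | zero => simpa
  | succ n ih => simpa [iteratedDeriv_succ] using ih.deriv

def SymbolBoundAt {E : Type*} [NormedAddCommGroup E] [NormedSpace ℝ E]
    (n : ℕ) (c e : ℝ) (f : ℝ → E) (x : ℝ) : Prop :=
  ∀ j ≤ n, ‖iteratedDeriv j f x‖ ≤ c * x ^ (e - j)

namespace SymbolBoundAt

variable {E : Type*} [NormedAddCommGroup E] [NormedSpace ℝ E] {n : ℕ} {c e x : ℝ}

lemma const_nonneg {f : ℝ → E} (h : SymbolBoundAt n c e f x) (hx : 0 < x) : 0 ≤ c :=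
  nonneg_of_mul_nonneg_left ((norm_nonneg _).trans (by simpa using h 0 n.zero_le))
    (rpow_pos_of_pos hx _)

lemma mul {A : Type*} [NormedRing A] [NormedAlgebra ℝ A] {f g : ℝ → A} {c₁ c₂ e₁ e₂ : ℝ}
    (hf : ContDiff ℝ n f) (hg : ContDiff ℝ n g) (hx : 0 < x)
    (hfb : SymbolBoundAt n c₁ e₁ f x) (hgb : SymbolBoundAt n c₂ e₂ g x) :
    SymbolBoundAt n (2 ^ n * (c₁ * c₂)) (e₁ + e₂) (fun y ↦ f y * g y) x := by
  intro m hm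
  have hc : 0 ≤ c₁ * c₂ := mul_nonneg (hfb.const_nonneg hx) (hgb.const_nonneg hx)
  have hterm : ∀ i ∈ Finset.range (m + 1), (m.choose i : ℝ) * ‖iteratedFDeriv ℝ i f x‖ *
      ‖iteratedFDeriv ℝ (m - i) g x‖ ≤ m.choose i * (c₁ * c₂ * x ^ (e₁ + e₂ - m)) := by
    intro i hi
    have hi : i ≤ m := Nat.lt_succ_iff.mp (Finset.mem_range.mp hi)
    rw [norm_iteratedFDeriv_eq_norm_iteratedDeriv, norm_iteratedFDeriv_eq_norm_iteratedDeriv,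
      mul_assoc]
    refine mul_le_mul_of_nonneg_left ?_ (Nat.cast_nonneg _)
    calc ‖iteratedDeriv i f x‖ * ‖iteratedDeriv (m - i) g x‖
        ≤ c₁ * x ^ (e₁ - i) * (c₂ * x ^ (e₂ - ↑(m - i))) :=
          mul_le_mul (hfb i (hi.trans hm)) (hgb _ ((m.sub_le i).trans hm)) (norm_nonneg _)
            (mul_nonneg (hfb.const_nonneg hx) (rpow_nonneg hx.le _))
      _ = c₁ * c₂ * x ^ (e₁ + e₂ - m) := by
          rw [mul_mul_mul_comm, ← rpow_add hx, Nat.cast_sub hi]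
          ring_nf
  calc ‖iteratedDeriv m (fun y ↦ f y * g y) x‖
      = ‖iteratedFDeriv ℝ m (fun y ↦ f y * g y) x‖ :=
        norm_iteratedFDeriv_eq_norm_iteratedDeriv.symm
    _ ≤ ∑ i ∈ Finset.range (m + 1), (m.choose i : ℝ) * ‖iteratedFDeriv ℝ i f x‖ *
          ‖iteratedFDeriv ℝ (m - i) g x‖ :=
        norm_iteratedFDeriv_mul_le hf hg x (by exact_mod_cast hm)
    _ ≤ ∑ i ∈ Finset.range (m + 1), (m.choose i : ℝ) * (c₁ * c₂ * x ^ (e₁ + e₂ - m)) :=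
        Finset.sum_le_sum hterm
    _ = 2 ^ m * (c₁ * c₂ * x ^ (e₁ + e₂ - m)) := by
        rw [← Finset.sum_mul, ← Nat.cast_sum, Nat.sum_range_choose]; push_cast; ring
    _ ≤ 2 ^ n * (c₁ * c₂) * x ^ (e₁ + e₂ - m) := by
        rw [← mul_assoc]
        exact mul_le_mul_of_nonneg_right
          (mul_le_mul_of_nonneg_right (pow_le_pow_right₀ one_le_two hm) hc) (rpow_nonneg hx.le _)

lemma comp_const_mul {f : ℝ → E} {r : ℝ} (hf : ContDiff ℝ n f) (hr : 0 < r) (hx : 0 < x)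
    (h : SymbolBoundAt n c e f (r * x)) :
    SymbolBoundAt n (c * r ^ e) e (fun y ↦ f (r * y)) x := by
  intro j hj
  rw [iteratedDeriv_comp_const_smul (hf.of_le (by exact_mod_cast hj)), norm_smul,
    norm_pow, norm_of_nonneg hr.le]
  calc r ^ j * ‖iteratedDeriv j f (r * x)‖ ≤ r ^ j * (c * (r * x) ^ (e - j)) := by
        gcongr; exact h j hj
    _ = c * r ^ e * x ^ (e - j) := by
        rw [mul_rpow hr.le hx.le, ← rpow_natCast, mul_left_comm, ← mul_assoc (r ^ _),
          ← rpow_add hr]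
        ring_nf

lemma of_eventually_eq_zero {f : ℝ → E} (h : ∀ᶠ y in 𝓝 x, f y = 0) (hc : 0 ≤ c) (hx : 0 ≤ x) :
    SymbolBoundAt n c e f x := by
  intro j _
  rw [iteratedDeriv_eq_zero_of_eventually_eq_zero h, norm_zero]
  exact mul_nonneg hc (rpow_nonneg hx _)

lemma of_le_one {f : ℝ → E} (hx : x ∈ Ioc 0 1) (h : ∀ j ≤ n, ‖iteratedDeriv j f x‖ ≤ c) :
    SymbolBoundAt n c 0 f x := by
  intro j hj
  have hc : 0 ≤ c := (norm_nonneg _).trans (h j hj)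
  have hpow : 1 ≤ x ^ ((0 : ℝ) - j) :=
    one_le_rpow_of_pos_of_le_one_of_nonpos hx.1 hx.2 (by simp)
  exact (h j hj).trans (le_mul_of_one_le_right hc hpow)

lemma ofReal {f : ℝ → ℝ} (hf : ContDiff ℝ n f) (h : SymbolBoundAt n c e f x) :
    SymbolBoundAt n c e (fun y ↦ (f y : ℂ)) x := by
  intro j hj
  rw [← norm_iteratedFDeriv_eq_norm_iteratedDeriv, show (fun y ↦ (f y : ℂ)) = ofRealLI ∘ f from rfl,
    ofRealLI.norm_iteratedFDeriv_comp_left hf.contDiffAt (by exact_mod_cast hj),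
    norm_iteratedFDeriv_eq_norm_iteratedDeriv]
  exact h j hj

end SymbolBoundAt

lemma symbolBoundAt_sq {n : ℕ} {x : ℝ} (hx : 0 < x) :
    SymbolBoundAt n 2 2 (fun y : ℝ ↦ y ^ 2) x := by
  intro j _
  rw [iteratedDeriv_pow, norm_mul, Real.norm_natCast, norm_pow, norm_of_nonneg hx.le]
  rcases le_or_gt j 2 with hj | hj
  · rw [← rpow_natCast, Nat.cast_sub hj, Nat.cast_ofNat]
    have : (Nat.descFactorial 2 j : ℝ) ≤ 2 := by interval_cases j <;> norm_num
    gcongr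
  · rw [Nat.descFactorial_eq_zero_iff_lt.mpr hj, Nat.cast_zero, zero_mul]
    exact mul_nonneg zero_le_two (rpow_nonneg hx.le _)

lemma norm_integral_exp_mul_le {F : ℝ → ℂ} {n : ℕ} (hF : ContDiff ℝ n F)
    (hc : HasCompactSupport F) {r : ℝ} (hr : r ≠ 0) :
    ‖∫ x, cexp (I * (x * r : ℝ)) * F x‖ ≤ (∫ x, ‖iteratedDeriv n F x‖) / |r| ^ n := by
  have hfourier (G : ℝ → ℂ) : ∫ x, cexp (I * (x * r : ℝ)) * G x = 𝓕 G (-r / (2 * π)) := by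
    rw [Real.fourier_real_eq_integral_exp_smul]
    congr 1 with x
    rw [smul_eq_mul]
    congr 2
    push_cast
    field_simp
  have hderiv := congrFun (Real.fourier_iteratedDeriv hF (fun k hk ↦
    (hF.continuous_iteratedDeriv k (by exact_mod_cast hk)).integrable_of_hasCompactSupport
      (hc.iteratedDeriv k)) le_rfl) (-r / (2 * π))
  rw [← hfourier, ← hfourier, smul_eq_mul] at hderiv
  have hr' : 0 < |r| ^ n := pow_pos (abs_pos.mpr hr) n
  rw [le_div_iff₀ hr']
  calc ‖∫ x, cexp (I * (x * r : ℝ)) * F x‖ * |r| ^ n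
      = ‖∫ x, cexp (I * (x * r : ℝ)) * iteratedDeriv n F x‖ := by
        rw [hderiv, norm_mul, norm_pow, mul_comm]
        have hfreq : 2 * π * I * ((-r / (2 * π) : ℝ) : ℂ) = -(r * I) := by
          push_cast; field_simp
        rw [hfreq, norm_neg, norm_mul, norm_I, mul_one, norm_real, Real.norm_eq_abs]
    _ ≤ ∫ x, ‖cexp (I * (x * r : ℝ)) * iteratedDeriv n F x‖ := norm_integral_le_integral_norm _
    _ = ∫ x, ‖iteratedDeriv n F x‖ := by
        congr 1 with x
        rw [norm_mul, norm_exp_I_mul_ofReal, one_mul]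

lemma integral_norm_le_of_norm_le_rpow {E : Type*} [NormedAddCommGroup E] {G : ℝ → E}
    (hG : Integrable G) {a b K : ℝ} (ha : a < -1) (hb : 0 < b) (hzero : ∀ x < b, G x = 0)
    (hle : ∀ x > b, ‖G x‖ ≤ K * x ^ a) :
    ∫ x, ‖G x‖ ≤ K * (-b ^ (a + 1) / (a + 1)) := by
  calc ∫ x, ‖G x‖ = ∫ x in Ioi b, ‖G x‖ := by
        rw [← integral_Ici_eq_integral_Ioi, setIntegral_eq_integral_of_forall_compl_eq_zero]
        intro x hx
        rw [hzero x (not_le.mp hx), norm_zero]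
    _ ≤ ∫ x in Ioi b, K * x ^ a :=
        setIntegral_mono_on hG.norm.integrableOn
          ((integrableOn_Ioi_rpow_of_lt ha hb).const_mul K) measurableSet_Ioi hle
    _ = K * (-b ^ (a + 1) / (a + 1)) := by
        rw [integral_const_mul, integral_Ioi_rpow_of_lt ha hb]

section Amplitude

variable {ω ρ : ℝ → ℂ} {χ : ℝ → ℝ} {r s : ℝ}

def oscAmplitude (ω ρ : ℝ → ℂ) (χ : ℝ → ℝ) (r s x : ℝ) : ℂ :=
  ω (r * x) * ρ (s * x) * ((x ^ 2 * χ x : ℝ) : ℂ)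

lemma contDiff_oscAmplitude {n : WithTop ℕ∞} (hωC : ContDiff ℝ n ω) (hρC : ContDiff ℝ n ρ)
    (hχC : ContDiff ℝ n χ) : ContDiff ℝ n (oscAmplitude ω ρ χ r s) :=
  ((hωC.comp (contDiff_const.mul contDiff_id)).mul
    (hρC.comp (contDiff_const.mul contDiff_id))).mul
      (ofRealCLM.contDiff.comp ((contDiff_id.pow 2).mul hχC))

lemma oscAmplitude_eq_zero_of_le (hω0 : ∀ z ≤ 1 / 2, ω z = 0) (hr : 0 < r) {x : ℝ}
    (hx : x ≤ 1 / (2 * r)) : oscAmplitude ω ρ χ r s x = 0 := by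
  have : r * x ≤ 1 / 2 := by
    calc r * x ≤ r * (1 / (2 * r)) := by gcongr
      _ = 1 / 2 := by field_simp
  simp [oscAmplitude, hω0 _ this]

lemma oscAmplitude_eq_zero_of_one_lt (hχ1 : ∀ t > 1, χ t = 0) {x : ℝ} (hx : 1 < x) :
    oscAmplitude ω ρ χ r s x = 0 := by
  simp [oscAmplitude, hχ1 x hx]

lemma hasCompactSupport_oscAmplitude (hω0 : ∀ z ≤ 1 / 2, ω z = 0) (hχ1 : ∀ t > 1, χ t = 0)
    (hr : 0 < r) : HasCompactSupport (oscAmplitude ω ρ χ r s) := by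
  refine HasCompactSupport.intro (isCompact_Icc (a := 0) (b := 1)) fun x hx ↦ ?_
  rcases not_and_or.mp hx with hx | hx
  · exact oscAmplitude_eq_zero_of_le hω0 hr ((not_le.mp hx).le.trans (by positivity))
  · exact oscAmplitude_eq_zero_of_one_lt hχ1 (not_le.mp hx)

lemma one_half_lt_and_lt_two_mul_of_oscAmplitude_ne_zero (hω0 : ∀ z ≤ 1 / 2, ω z = 0)
    (hρ1 : ∀ z > 1, ρ z = 0) (hχ1 : ∀ t > 1, χ t = 0) (hr : 0 < r) {x : ℝ} (hx : oscAmplitude ω ρ χ r s x ≠ 0) :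
    1 / 2 < r ∧ s < 2 * r := by
  have hxr : 1 / (2 * r) < x := not_le.mp fun h ↦ hx (oscAmplitude_eq_zero_of_le hω0 hr h)
  have hx1 : x ≤ 1 := not_lt.mp fun h ↦ hx (oscAmplitude_eq_zero_of_one_lt hχ1 h)
  have hsx : s * x ≤ 1 := not_lt.mp fun h ↦ hx (by simp [oscAmplitude, hρ1 _ h])
  rw [div_lt_iff₀ (by positivity)] at hxr
  constructor <;> nlinarith

lemma symbolBoundAt_oscAmplitude {n : ℕ} {e B x : ℝ} (hωC : ContDiff ℝ n ω)
    (hρC : ContDiff ℝ n ρ) (hχC : ContDiff ℝ n χ) (hω : ∀ z > 0, SymbolBoundAt n 1 e ω z)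
    (hρ : ∀ z > 0, SymbolBoundAt n 1 0 ρ z) (hχ : SymbolBoundAt n B 0 χ x)
    (hr : 0 < r) (hs : 0 < s) (hx : 0 < x) :
    SymbolBoundAt n (8 ^ n * 2 * B * r ^ e) (e + 2) (oscAmplitude ω ρ χ r s) x := by
  have hωrC : ContDiff ℝ n (fun y ↦ ω (r * y)) := hωC.comp (contDiff_const.mul contDiff_id)
  have hρsC : ContDiff ℝ n (fun y ↦ ρ (s * y)) := hρC.comp (contDiff_const.mul contDiff_id)
  have hsqχC : ContDiff ℝ n (fun y : ℝ ↦ y ^ 2 * χ y) := (contDiff_id.pow 2).mul hχC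
  have hωr := (hω (r * x) (by positivity)).comp_const_mul hωC hr hx
  have hρs := (hρ (s * x) (by positivity)).comp_const_mul hρC hs hx
  have hsqχ := (symbolBoundAt_sq hx).mul (contDiff_id.pow 2) hχC hx hχ
  have hconst : (8 : ℝ) ^ n * 2 * B * r ^ e =
      2 ^ n * (2 ^ n * (1 * r ^ e * (1 * s ^ (0 : ℝ))) * (2 ^ n * (2 * B))) := by
    rw [show (8 : ℝ) = 2 * 2 * 2 by norm_num, mul_pow, mul_pow, rpow_zero]
    ring
  rw [hconst, show e + 2 = e + 0 + (2 + 0) by ring]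
  exact (hωr.mul hωrC hρsC hx hρs).mul (hωrC.mul hρsC) (ofRealCLM.contDiff.comp hsqχC) hx
    (hsqχ.ofReal hsqχC)

lemma integral_norm_iteratedDeriv_three_oscAmplitude_le {B : ℝ} (hωC : ContDiff ℝ 3 ω)
    (hρC : ContDiff ℝ 3 ρ) (hχC : ContDiff ℝ 3 χ) (hω0 : ∀ z ≤ 1 / 2, ω z = 0)
    (hχ1 : ∀ t > 1, χ t = 0) (hω : ∀ z > 0, SymbolBoundAt 3 1 (-1 / 2) ω z)
    (hρ : ∀ z > 0, SymbolBoundAt 3 1 0 ρ z) (hχ : ∀ z ∈ Ioc 0 1, SymbolBoundAt 3 B 0 χ z)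
    (hr : 0 < r) (hs : 0 < s) :
    ∫ x, ‖iteratedDeriv 3 (oscAmplitude ω ρ χ r s) x‖ ≤ 3072 * B := by
  set F := oscAmplitude ω ρ χ r s
  have hB : 0 ≤ B := (hχ 1 ⟨one_pos, le_rfl⟩).const_nonneg one_pos
  have hFC : ContDiff ℝ 3 F := contDiff_oscAmplitude hωC hρC hχC
  have hint : Integrable (iteratedDeriv 3 F) :=
    (hFC.continuous_iteratedDeriv 3 le_rfl).integrable_of_hasCompactSupport
      ((hasCompactSupport_oscAmplitude hω0 hχ1 hr).iteratedDeriv 3)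
  have hzero : ∀ x < 1 / (2 * r), iteratedDeriv 3 F x = 0 := fun x hx ↦
    iteratedDeriv_eq_zero_of_eventually_eq_zero ((eventually_lt_nhds hx).mono fun y hy ↦
      oscAmplitude_eq_zero_of_le hω0 hr hy.le) 3
  have hle : ∀ x > 1 / (2 * r),
      ‖iteratedDeriv 3 F x‖ ≤ 1024 * B * r ^ (-1 / 2 : ℝ) * x ^ (-3 / 2 : ℝ) := by
    intro x hx
    have hx0 : 0 < x := lt_trans (by positivity) hx
    rcases le_or_gt x 1 with hx1 | hx1
    · convert symbolBoundAt_oscAmplitude hωC hρC hχC hω hρ (hχ x ⟨hx0, hx1⟩) hr hs hx0 3 le_rfl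
        using 2 <;> norm_num
    · rw [iteratedDeriv_eq_zero_of_eventually_eq_zero ((eventually_gt_nhds hx1).mono fun y hy ↦
        oscAmplitude_eq_zero_of_one_lt hχ1 hy) 3, norm_zero]
      positivity
  refine (integral_norm_le_of_norm_le_rpow hint (by norm_num) (by positivity) hzero hle).trans ?_
  have hsqrt : r ^ (-1 / 2 : ℝ) * (1 / (2 * r)) ^ (-1 / 2 : ℝ) = √2 := by
    rw [← mul_rpow hr.le (by positivity), show r * (1 / (2 * r)) = 2⁻¹ by field_simp,
      show (-1 / 2 : ℝ) = -(1 / 2) by norm_num, rpow_neg (by norm_num), inv_rpow zero_le_two,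
      inv_inv, sqrt_eq_rpow]
  have hsqrt_le : √2 ≤ 3 / 2 := (sqrt_lt' (by norm_num)).mpr (by norm_num) |>.le
  calc 1024 * B * r ^ (-1 / 2 : ℝ) * (-(1 / (2 * r)) ^ (-3 / 2 + 1 : ℝ) / (-3 / 2 + 1))
      = 2048 * B * (r ^ (-1 / 2 : ℝ) * (1 / (2 * r)) ^ (-1 / 2 : ℝ)) := by norm_num; ring
    _ ≤ 3072 * B := by rw [hsqrt]; nlinarith

lemma norm_integral_exp_mul_oscAmplitude_le {B : ℝ} (hωC : ContDiff ℝ 3 ω)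
    (hρC : ContDiff ℝ 3 ρ) (hχC : ContDiff ℝ 3 χ) (hω0 : ∀ z ≤ 1 / 2, ω z = 0)
    (hρ1 : ∀ z > 1, ρ z = 0) (hχ1 : ∀ t > 1, χ t = 0)
    (hω : ∀ z > 0, SymbolBoundAt 3 1 (-1 / 2) ω z) (hρ : ∀ z > 0, SymbolBoundAt 3 1 0 ρ z)
    (hχ : ∀ z ∈ Ioc 0 1, SymbolBoundAt 3 B 0 χ z) (hr : 0 < r) (hs : 0 < s) :
    ‖∫ x, cexp (I * (x * r : ℝ)) * oscAmplitude ω ρ χ r s x‖ ≤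
      13 * 3072 * B / (r * (1 + (r + s) ^ 2)) := by
  set F := oscAmplitude ω ρ χ r s
  have hB : 0 ≤ B := (hχ 1 ⟨one_pos, le_rfl⟩).const_nonneg one_pos
  by_cases hF : ∀ x, F x = 0
  · simp only [hF, mul_zero, integral_zero, norm_zero]
    positivity
  obtain ⟨hr2, hsr⟩ := one_half_lt_and_lt_two_mul_of_oscAmplitude_ne_zero hω0 hρ1 hχ1 hr
    (not_forall.mp hF).choose_spec
  calc ‖∫ x, cexp (I * (x * r : ℝ)) * F x‖ ≤ (∫ x, ‖iteratedDeriv 3 F x‖) / r ^ 3 := by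
        simpa [abs_of_pos hr] using norm_integral_exp_mul_le
          (contDiff_oscAmplitude hωC hρC hχC) (hasCompactSupport_oscAmplitude hω0 hχ1 hr) hr.ne'
    _ ≤ 3072 * B / r ^ 3 := by
        gcongr
        exact integral_norm_iteratedDeriv_three_oscAmplitude_le hωC hρC hχC hω0 hχ1 hω hρ hχ hr hs
    _ ≤ 13 * 3072 * B / (r * (1 + (r + s) ^ 2)) := by
        have hsize : 1 + (r + s) ^ 2 ≤ 13 * r ^ 2 := by nlinarith
        rw [div_le_div_iff₀ (by positivity) (by positivity)]
        nlinarith [mul_le_mul_of_nonneg_left hsize (by positivity : (0 : ℝ) ≤ 3072 * B * r)]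

lemma setIntegral_Ioi_eq_integral_exp_mul_oscAmplitude (hω0 : ∀ z ≤ 1 / 2, ω z = 0)
    (hr : 0 < r) :
    ∫ l in Ioi (0 : ℝ), cexp (I * (l * r : ℝ)) * ω (l * r) * ρ (l * s) * (l : ℂ) ^ 2 * (χ l : ℂ) =
      ∫ x, cexp (I * (x * r : ℝ)) * oscAmplitude ω ρ χ r s x := by
  calc _ = ∫ x in Ioi 0, cexp (I * (x * r : ℝ)) * oscAmplitude ω ρ χ r s x := by
        refine setIntegral_congr_fun measurableSet_Ioi fun x _ ↦ ?_
        simp only [oscAmplitude, mul_comm r x, mul_comm s x]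
        push_cast
        ring
    _ = _ := setIntegral_eq_integral_of_forall_compl_eq_zero fun x hx ↦ by
        rw [oscAmplitude_eq_zero_of_le hω0 hr ((not_lt.mp hx).trans (by positivity)), mul_zero]

end Amplitude

theorem stmt_16_general (lam₁ : ℝ) (hlam₁ : lam₁ ∈ Set.Ioc (0:ℝ) (1/2))
    (χ : ℝ → ℝ) (hχ : ContDiff ℝ (⊤ : ℕ∞) χ)
    (hχsupp : ∀ t : ℝ, t ∉ Set.Icc (0:ℝ) (2 * lam₁) → χ t = 0)
    (hχbdd : ∀ n : ℕ, ∃ B : ℝ, ∀ t : ℝ, |iteratedDeriv n χ t| ≤ B)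
    (ρ : ℝ → ℂ) (hρ : ContDiff ℝ (⊤ : ℕ∞) ρ)
    (hρsupp : ∀ z : ℝ, z ∉ Set.Icc (0:ℝ) 1 → ρ z = 0)
    (hρb : ∀ z : ℝ, ∀ ℓ : ℕ, ℓ ≤ 3 → ‖iteratedDeriv ℓ ρ z‖ ≤ 1)
    (ω : ℝ → ℂ) (hω : ContDiffOn ℝ (⊤ : ℕ∞) ω (Set.Ioi 0))
    (hω0 : ∀ z : ℝ, z ≤ 1/2 → ω z = 0)
    (hωb : ∀ z : ℝ, 0 < z → ∀ j : ℕ, j ≤ 3 →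
      ‖iteratedDeriv j ω z‖ ≤ z ^ (-(1:ℝ)/2 - j)) :
    ∃ C : ℝ, 0 < C ∧ ∀ r s : ℝ, 0 < r → 0 < s →
      ‖∫ l in Set.Ioi (0:ℝ),
          Complex.exp (Complex.I * (l * r : ℝ)) * ω (l * r) * ρ (l * s) *
            (l : ℂ) ^ 2 * (χ l : ℂ)‖ ≤
        C / (r * (1 + (r + s) ^ 2)) := by
  obtain ⟨B, hB, hχB⟩ := exists_pos_bound_of_forall_exists_bound hχbdd 3
  have h3 : (3 : WithTop ℕ∞) ≤ (⊤ : ℕ∞) := WithTop.coe_le_coe.mpr le_top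
  have hωC : ContDiff ℝ 3 ω :=
    (contDiff_of_contDiffOn_Ioi_of_eq_zero_of_le one_half_pos hω hω0).of_le h3
  have hχ1 : ∀ t > 1, χ t = 0 := fun t ht ↦ hχsupp t fun h ↦ by linarith [h.2, hlam₁.2]
  have hρ1 : ∀ z > 1, ρ z = 0 := fun z hz ↦ hρsupp z fun h ↦ by linarith [h.2]
  have hωS : ∀ z > 0, SymbolBoundAt 3 1 (-1 / 2) ω z := fun z hz j hj ↦ by
    simpa [neg_div] using hωb z hz j hj
  have hρS : ∀ z > 0, SymbolBoundAt 3 1 0 ρ z := fun z hz ↦ by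
    rcases le_or_gt z 1 with hz1 | hz1
    · exact .of_le_one ⟨hz, hz1⟩ fun j hj ↦ hρb z j hj
    · exact .of_eventually_eq_zero ((eventually_gt_nhds hz1).mono hρ1) zero_le_one hz.le
  have hχS : ∀ z ∈ Ioc 0 1, SymbolBoundAt 3 B 0 χ z := fun z hz ↦
    .of_le_one hz fun j hj ↦ hχB j hj z
  refine ⟨13 * 3072 * B, by positivity, fun r s hr hs ↦ ?_⟩
  rw [setIntegral_Ioi_eq_integral_exp_mul_oscAmplitude hω0 hr]
  exact norm_integral_exp_mul_oscAmplitude_le hωC (hρ.of_le h3) (hχ.of_le h3) hω0 hρ1 hχ1 hωS hρS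
    hχS hr hs

/-- the oscillatory integral bound
`|∫₀^∞ e^{iλr} ω(λr) ρ(λs) λ² χ(λ) dλ| ≤ C / (r ⟨r+s⟩²)` for `r, s > 0`,
where `ρ` is smooth, supported in `[0,1]`, with `|ρ^{(ℓ)}| ≤ 1` for `ℓ = 0,1,2,3`,
and `ω` is smooth on `(0,∞)`, vanishes on `(0,1/2]`, and satisfies
`|ω^{(j)}(z)| ≤ z^{-1/2-j}` for `j = 0,1,2,3`. -/
theorem stmt_16 (lam₁ : ℝ) (hlam₁ : lam₁ ∈ Set.Ioc (0:ℝ) (1/2))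
    (χ : ℝ → ℝ) (hχ : ContDiff ℝ (⊤ : ℕ∞) χ)
    (hχ01 : ∀ t, χ t ∈ Set.Icc (0:ℝ) 1)
    (hχsupp : ∀ t : ℝ, t ∉ Set.Icc (0:ℝ) (2 * lam₁) → χ t = 0)
    (hχbdd : ∀ n : ℕ, ∃ B : ℝ, ∀ t : ℝ, |iteratedDeriv n χ t| ≤ B)
    (ρ : ℝ → ℂ) (hρ : ContDiff ℝ (⊤ : ℕ∞) ρ)
    (hρsupp : ∀ z : ℝ, z ∉ Set.Icc (0:ℝ) 1 → ρ z = 0)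
    (hρb : ∀ z : ℝ, ∀ ℓ : ℕ, ℓ ≤ 3 → ‖iteratedDeriv ℓ ρ z‖ ≤ 1)
    (ω : ℝ → ℂ) (hω : ContDiffOn ℝ (⊤ : ℕ∞) ω (Set.Ioi 0))
    (hω0 : ∀ z : ℝ, z ≤ 1/2 → ω z = 0)
    (hωb : ∀ z : ℝ, 0 < z → ∀ j : ℕ, j ≤ 3 →
      ‖iteratedDeriv j ω z‖ ≤ z ^ (-(1:ℝ)/2 - j)) :
    ∃ C : ℝ, 0 < C ∧ ∀ r s : ℝ, 0 < r → 0 < s →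
      ‖∫ l in Set.Ioi (0:ℝ),
          Complex.exp (Complex.I * (l * r : ℝ)) * ω (l * r) * ρ (l * s) *
            (l : ℂ) ^ 2 * (χ l : ℂ)‖ ≤
        C / (r * (1 + (r + s) ^ 2)) :=
  stmt_16_general lam₁ hlam₁ χ hχ hχsupp hχbdd ρ hρ hρsupp hρb ω hω hω0 hωb
end
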